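/- arXiv:1407.2629 — 7 statements merged into one kernel-verified Lean document; each statement's English description precedes it below -/
import Mathlib

section
/- Let M be a sharp toric monoid, p ⊂ M a prime ideal of height 1 and F = M ∖ p the corresponding facet. If p is principal, say p = e + M for some e ∈ M, then M = F ⊕ ℕe, i.e. every element of M can be written uniquely as f + k·e with f ∈ F and k ∈ ℕ; moreover the submonoid ℕe generated by e is the unique edge of M not contained in F. -/
open scoped TensorProduct Pointwise

/-- The rank of an abelian group `A`, i.e. `dim_ℚ (A ⊗_ℤ ℚ)`, for a subgroup of an ambient
abelian group. -/
noncomputable def grpRank {G : Type*} [AddCommGroup G] (A : AddSubgroup G) : ℕ :=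
  Module.finrank ℚ (ℚ ⊗[ℤ] A)

variable {Λ : Type*} [AddCommGroup Λ]

/-- The rank of the subgroup generated by a subset `S` of `Λ`. -/
noncomputable def setRank (S : Set Λ) : ℕ :=
  grpRank (AddSubgroup.closure S)

/-- The rank of a submonoid `M` of `Λ`; when `Λ = M^gp` this is `rk M = dim_ℚ(M^gp ⊗ ℚ)`. -/
noncomputable def monRank (M : AddSubmonoid Λ) : ℕ :=
  setRank (M : Set Λ)

/-- A toric monoid, presented as a submonoid `M` of an abelian group `Λ` which plays the role
of `M^gp`: `M` is finitely generated (hence fine, being cancellative as a submonoid of a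
group), `M` generates `Λ` as a group (so that `Λ = M^gp`), `Λ` is torsion free, and `M`
is saturated in `Λ`. -/
def IsToric (M : AddSubmonoid Λ) : Prop :=
  M.FG ∧ AddSubgroup.closure (M : Set Λ) = ⊤ ∧
    (∀ (x : Λ) (n : ℕ), 0 < n → n • x = 0 → x = 0) ∧
    (∀ (x : Λ) (n : ℕ), 0 < n → n • x ∈ M → x ∈ M)

/-- `M` is sharp: `0` is its only unit. -/
def IsSharp (M : AddSubmonoid Λ) : Prop :=
  ∀ x ∈ M, ∀ y ∈ M, x + y = 0 → x = 0

/-- An ideal of the monoid `M`: a subset `I ⊆ M` with `I + M ⊆ I`. -/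
def IsMonIdeal (M : AddSubmonoid Λ) (I : Set Λ) : Prop :=
  I ⊆ (M : Set Λ) ∧ ∀ i ∈ I, ∀ m ∈ M, i + m ∈ I

/-- A prime ideal of the monoid `M`: an ideal `p ≠ M` such that `x + y ∈ p` implies `x ∈ p` or
`y ∈ p`.  The empty set counts as a prime ideal. -/
def IsPrimeMonIdeal (M : AddSubmonoid Λ) (p : Set Λ) : Prop :=
  IsMonIdeal M p ∧ p ≠ (M : Set Λ) ∧ ∀ x ∈ M, ∀ y ∈ M, x + y ∈ p → x ∈ p ∨ y ∈ p

/-- The height of a prime ideal `p` of `M`: the supremum (in `ℕ∞`) of the lengths `n` of chains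
`p₀ ⊊ p₁ ⊊ ⋯ ⊊ pₙ = p` of prime ideals of `M`. -/
noncomputable def primeHeight (M : AddSubmonoid Λ) (p : Set Λ) : ℕ∞ :=
  sSup {n : ℕ∞ | ∃ m : ℕ, n = (m : ℕ∞) ∧ ∃ c : Fin (m + 1) → Set Λ,
    (∀ i, IsPrimeMonIdeal M (c i)) ∧ StrictMono c ∧ c (Fin.last m) = p}

/-- A face of the monoid `M`: a submonoid `F ⊆ M` such that `x + y ∈ F` implies `x ∈ F` and
`y ∈ F` for `x, y ∈ M`. -/
def IsFace (M : AddSubmonoid Λ) (F : Set Λ) : Prop :=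
  F ⊆ (M : Set Λ) ∧ 0 ∈ F ∧ (∀ x ∈ F, ∀ y ∈ F, x + y ∈ F) ∧
    ∀ x ∈ M, ∀ y ∈ M, x + y ∈ F → x ∈ F ∧ y ∈ F

/-- A facet of `M`: a face of rank `rk(M) - 1`. -/
def IsFacet (M : AddSubmonoid Λ) (F : Set Λ) : Prop :=
  IsFace M F ∧ (setRank F : ℤ) = (monRank M : ℤ) - 1

/-- An edge of `M`: a face of rank `1`. -/
def IsEdge (M : AddSubmonoid Λ) (E : Set Λ) : Prop :=
  IsFace M E ∧ setRank E = 1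

/-- The face `N` splits off from `M`: there is a face `K` such that the addition map
`N × K → M` is bijective. -/
def SplitsOff (M : AddSubmonoid Λ) (N : Set Λ) : Prop :=
  ∃ K : Set Λ, IsFace M K ∧
    (∀ m ∈ M, ∃ a ∈ N, ∃ b ∈ K, m = a + b) ∧
    (∀ a ∈ N, ∀ b ∈ K, ∀ a' ∈ N, ∀ b' ∈ K, a + b = a' + b' → a = a' ∧ b = b')

set_option maxHeartbeats 1600000


section Helpers

variable {Λ : Type*} [AddCommGroup Λ]

/-- Injectivity of `g ↦ 1 ⊗ g` for a free `ℤ`-module. -/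
lemma aux_tmul_eq_zero {G : Type*} [AddCommGroup G] [Module.Free ℤ G] {g : G}
    (h : (1 : ℚ) ⊗ₜ[ℤ] g = 0) : g = 0 := by
  classical
  let b := Module.Free.chooseBasis ℤ G
  have hb : ∀ i, b.repr g i = 0 := by
    intro i
    have := congrArg (fun z => (b.baseChange ℚ).repr z i) h
    simp only [Module.Basis.baseChange_repr_tmul, map_zero, Finsupp.coe_zero, Pi.zero_apply,
      smul_eq_mul] at this
    have : ((b.repr g i : ℤ) : ℚ) = 0 := by
      simpa [zsmul_eq_mul] using this
    exact_mod_cast this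
  have : b.repr g = 0 := by ext i; simpa using hb i
  simpa using congrArg b.repr.symm this

/-- Representation of a member of the closure of a finite set as an `ℕ`-combination. -/
lemma aux_rep {S : Finset Λ} {y : Λ} (hy : y ∈ AddSubmonoid.closure (S : Set Λ)) :
    ∃ c : Λ → ℕ, y = ∑ s ∈ S, c s • s := by
  classical
  obtain ⟨l, hl, hsum⟩ := AddSubmonoid.exists_multiset_of_mem_closure hy
  refine ⟨fun s => l.count s, ?_⟩
  have h1 : l.toFinset ⊆ S := fun x hx => hl x (Multiset.mem_toFinset.1 hx)
  rw [← hsum]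
  exact Finset.sum_multiset_count_of_subset l S h1

end Helpers

section Helpers2

variable {Λ : Type*} [AddCommGroup Λ]

lemma aux_nzsd [NoZeroSMulDivisors ℤ Λ] (A : AddSubgroup Λ) : NoZeroSMulDivisors ℤ ↥A := by
  refine ⟨fun {c x} h => ?_⟩
  rcases eq_or_ne c 0 with rfl | hc
  · exact Or.inl rfl
  · refine Or.inr (Subtype.ext ?_)
    have h' : c • (x : Λ) = 0 := by
      have := congrArg (Subtype.val) h
      simpa using this
    rcases smul_eq_zero.1 h' with h'' | h''
    · exact absurd h'' hc
    · exact h''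

lemma aux_finite_subgroup [Module.Finite ℤ Λ] (A : AddSubgroup Λ) : Module.Finite ℤ ↥A := by
  have h1 : IsNoetherian ℤ Λ := isNoetherian_of_isNoetherianRing_of_finite ℤ Λ
  have h2 : Module.Finite ℤ ↥(A.toIntSubmodule) :=
    Module.Finite.iff_fg.2 (IsNoetherian.noetherian _)
  exact h2

lemma aux_free_subgroup [Module.Finite ℤ Λ] [NoZeroSMulDivisors ℤ Λ] (A : AddSubgroup Λ) :
    Module.Free ℤ ↥A := by
  have := aux_finite_subgroup A
  have := aux_nzsd A
  exact Module.free_of_finite_type_torsion_free'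

end Helpers2

set_option maxHeartbeats 1000000
section Helpers3

variable {Λ : Type*} [AddCommGroup Λ]

lemma aux_rank_one [Module.Finite ℤ Λ] [NoZeroSMulDivisors ℤ Λ] (A : AddSubgroup Λ)
    {e : Λ} (he : e ∈ A) (hene : e ≠ 0) (hall : ∀ a ∈ A, ∃ n : ℤ, a = n • e) :
    Module.finrank ℚ (ℚ ⊗[ℤ] ↥A) = 1 := by
  have hfree : Module.Free ℤ ↥A := aux_free_subgroup A
  refine finrank_eq_one ((1 : ℚ) ⊗ₜ[ℤ] (⟨e, he⟩ : ↥A)) (fun h => hene ?_) ?_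
  · have h0 := aux_tmul_eq_zero h
    simpa using congrArg Subtype.val h0
  · intro w
    induction w using TensorProduct.induction_on with
    | zero => exact ⟨0, by simp⟩
    | tmul q a =>
      obtain ⟨n, hn⟩ := hall a a.2
      refine ⟨q * n, ?_⟩
      have ha : a = n • (⟨e, he⟩ : ↥A) := Subtype.ext (by simpa using hn)
      rw [ha]
      calc (q * (n : ℚ)) • ((1 : ℚ) ⊗ₜ[ℤ] (⟨e, he⟩ : ↥A))
          = q • (((n : ℤ) : ℚ) • ((1 : ℚ) ⊗ₜ[ℤ] (⟨e, he⟩ : ↥A))) := by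
            rw [mul_smul]
        _ = q • (n • ((1 : ℚ) ⊗ₜ[ℤ] (⟨e, he⟩ : ↥A))) := by
            rw [Int.cast_smul_eq_zsmul]
        _ = q • ((1 : ℚ) ⊗ₜ[ℤ] (n • (⟨e, he⟩ : ↥A))) := by
            rw [TensorProduct.tmul_smul]
        _ = (q • (1 : ℚ)) ⊗ₜ[ℤ] (n • (⟨e, he⟩ : ↥A)) := by
            rw [TensorProduct.smul_tmul']
        _ = q ⊗ₜ[ℤ] (n • (⟨e, he⟩ : ↥A)) := by rw [smul_eq_mul, mul_one]
    | add x y hx hy =>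
      obtain ⟨c1, h1⟩ := hx
      obtain ⟨c2, h2⟩ := hy
      exact ⟨c1 + c2, by rw [add_smul, h1, h2]⟩

lemma aux_dep [Module.Finite ℤ Λ] [NoZeroSMulDivisors ℤ Λ] (A : AddSubgroup Λ)
    (hrk : Module.finrank ℚ (ℚ ⊗[ℤ] ↥A) = 1) {e f : Λ} (he : e ∈ A) (hf : f ∈ A)
    (hene : e ≠ 0) : ∃ a b : ℤ, b ≠ 0 ∧ b • f = a • e := by
  have hfree : Module.Free ℤ ↥A := aux_free_subgroup A
  have hfin : Module.Finite ℤ ↥A := aux_finite_subgroup A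
  have hfd : FiniteDimensional ℚ (ℚ ⊗[ℤ] ↥A) := Module.Finite.base_change ℤ ℚ ↥A
  have hv : (1 : ℚ) ⊗ₜ[ℤ] (⟨e, he⟩ : ↥A) ≠ 0 := fun h =>
    hene (by simpa using congrArg Subtype.val (aux_tmul_eq_zero h))
  obtain ⟨q, hq⟩ := (finrank_eq_one_iff_of_nonzero'
    ((1 : ℚ) ⊗ₜ[ℤ] (⟨e, he⟩ : ↥A)) hv).1 hrk ((1 : ℚ) ⊗ₜ[ℤ] (⟨f, hf⟩ : ↥A))
  refine ⟨q.num, (q.den : ℤ), by exact_mod_cast q.den_ne_zero, ?_⟩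
  have h2 : (1 : ℚ) ⊗ₜ[ℤ] ((q.den : ℤ) • (⟨f, hf⟩ : ↥A) - q.num • (⟨e, he⟩ : ↥A)) = 0 := by
    rw [TensorProduct.tmul_sub, TensorProduct.tmul_smul, TensorProduct.tmul_smul,
      ← Int.cast_smul_eq_zsmul ℚ, ← Int.cast_smul_eq_zsmul ℚ, ← hq, smul_smul]
    norm_num [Rat.mul_den_eq_num]
  have h3 := aux_tmul_eq_zero h2
  have h4 : ((q.den : ℤ)) • (⟨f, hf⟩ : ↥A) = q.num • (⟨e, he⟩ : ↥A) := sub_eq_zero.mp h3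
  simpa using congrArg Subtype.val h4

end Helpers3


/-- end of Lemma `splitfacet`. Let `M` be a sharp toric monoid, `p ⊂ M` a
prime ideal of height `1` with facet `F = M ∖ p`.  If `p = e + M` is principal then
`M = F ⊕ ℕe`: every element of `M` is uniquely `f + k·e` with `f ∈ F`, `k ∈ ℕ`; moreover
`ℕe` is the unique edge of `M` not contained in `F`. -/
theorem statement2 (M : AddSubmonoid Λ) (hM : IsToric M) (hsharp : IsSharp M)
    (p : Set Λ) (hp : IsPrimeMonIdeal M p) (hht : primeHeight M p = 1)
    (e : Λ) (he : e ∈ M) (hpe : p = {x : Λ | ∃ m ∈ M, x = e + m}) :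
    (∀ m ∈ M, ∃! fk : Λ × ℕ, fk.1 ∈ (M : Set Λ) \ p ∧ m = fk.1 + fk.2 • e) ∧
    IsEdge M (AddSubmonoid.closure {e} : Set Λ) ∧
    ¬ (AddSubmonoid.closure {e} : Set Λ) ⊆ (M : Set Λ) \ p ∧
    ∀ E : Set Λ, IsEdge M E → ¬ E ⊆ (M : Set Λ) \ p →
      E = (AddSubmonoid.closure {e} : Set Λ) := by
  classical
  obtain ⟨hfg, hgen, htf, hsat⟩ := hM
  have hpsub : p ⊆ (M : Set Λ) := hp.1.1
  have hep : e ∈ p := by rw [hpe]; exact ⟨0, M.zero_mem, (add_zero e).symm⟩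
  have hene : e ≠ 0 := by
    rintro rfl
    apply hp.2.1
    apply Set.Subset.antisymm hpsub
    intro x hx
    rw [hpe]; exact ⟨x, hx, (zero_add x).symm⟩
  have h0p : (0 : Λ) ∉ p := by
    intro h0
    apply hp.2.1
    apply Set.Subset.antisymm hpsub
    intro m hm
    simpa using hp.1.2 0 h0 m hm
  have hnz : NoZeroSMulDivisors ℤ Λ := by
    refine ⟨fun {c x} h => ?_⟩
    rcases eq_or_ne c 0 with rfl | hc
    · exact Or.inl rfl
    · refine Or.inr ?_
      have hna : c.natAbs • x = 0 := by
        rcases Int.natAbs_eq c with h1 | h1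
        · rw [← natCast_zsmul, ← h1, h]
        · rw [← natCast_zsmul, ← neg_eq_iff_eq_neg.2 h1, neg_zsmul, h, neg_zero]
      exact htf x c.natAbs (Int.natAbs_pos.2 hc) hna
  have hfinM : Module.Finite ℤ Λ := by
    rw [Module.Finite.iff_addGroup_fg]
    obtain ⟨S, hS⟩ := hfg
    refine AddGroup.fg_def.mpr ⟨S, ?_⟩
    rw [eq_top_iff, ← hgen, AddSubgroup.closure_le]
    intro x hx
    rw [SetLike.mem_coe, ← hS] at hx
    have hmle : AddSubmonoid.closure (S : Set Λ) ≤
        (AddSubgroup.closure (S : Set Λ)).toAddSubmonoid :=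
      AddSubmonoid.closure_le.2 AddSubgroup.subset_closure
    exact hmle hx
  obtain ⟨S, hS⟩ := hfg
  -- no infinite divisibility by e
  have hdesc : ∀ m ∈ M, ¬ (∀ k : ℕ, ∃ y ∈ M, m = y + k • e) := by
    intro m hm hall
    choose y hyM hy using hall
    have hrep : ∀ k, ∃ c : Λ → ℕ, y k = ∑ s ∈ S, c s • s := fun k =>
      aux_rep (by rw [hS]; exact hyM k)
    choose c hc using hrep
    have hpwo : (Set.univ : Set (↥S → ℕ)).IsPWO :=
      Set.isPWO_of_wellQuasiOrderedLE Set.univ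
    obtain ⟨k, l, hkl, hle⟩ := hpwo.exists_lt (f := fun k (s : ↥S) => c k s) (fun _ => Set.mem_univ _)
    set z := ∑ s ∈ S, (c l s - c k s) • s with hz
    have hzM : z ∈ M := by
      rw [← hS]
      exact AddSubmonoid.sum_mem _ fun s hs =>
        nsmul_mem (AddSubmonoid.subset_closure hs) _
    have hyk : y k + z = y l := by
      rw [hc k, hc l, hz, ← Finset.sum_add_distrib]
      refine Finset.sum_congr rfl fun s hs => ?_
      have hles : c k s ≤ c l s := hle ⟨s, hs⟩
      rw [← add_nsmul]
      congr 1
      omega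
    have hkeq : y k = y l + (l - k) • e := by
      have h1 : y k + k • e = y l + l • e := by rw [← hy k, ← hy l]
      have h2 : l • e = (l - k) • e + k • e := by rw [← add_nsmul]; congr 1; omega
      rw [h2, ← add_assoc] at h1
      exact add_right_cancel h1
    have h3 : (l - k) • e + z = 0 := by
      have h4 : y l + ((l - k) • e + z) = y l + 0 := by
        rw [add_zero, ← add_assoc, ← hkeq, hyk]
      exact add_left_cancel h4
    have h5 : (l - k) • e = 0 := hsharp _ (nsmul_mem he _) z hzM h3
    exact hene (htf e (l - k) (by omega) h5)
  -- existence of the decomposition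
  have hexists : ∀ m ∈ M, ∃ (f : Λ) (k : ℕ), (f ∈ (M : Set Λ) \ p) ∧ m = f + k • e := by
    intro m hm
    have hne : ∃ k : ℕ, ¬ ∃ y ∈ M, m = y + k • e := by
      by_contra hcon
      push_neg at hcon
      refine hdesc m hm fun k => ?_
      obtain ⟨y, hy1, hy2⟩ := hcon k
      exact ⟨y, hy1, hy2⟩
    have hk1 : ¬ ∃ y ∈ M, m = y + (Nat.find hne) • e := Nat.find_spec hne
    have hk1ne : Nat.find hne ≠ 0 := by
      intro h0
      exact hk1 (h0 ▸ ⟨m, hm, by simp⟩)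
    have hN : ∃ y ∈ M, m = y + (Nat.find hne - 1) • e :=
      not_not.1 (Nat.find_min hne (by omega))
    obtain ⟨f, hfM, hf⟩ := hN
    refine ⟨f, Nat.find hne - 1, ⟨hfM, ?_⟩, hf⟩
    intro hfp
    rw [hpe] at hfp
    obtain ⟨m', hm', hfm'⟩ := hfp
    apply hk1
    refine ⟨m', hm', ?_⟩
    have h6 : (Nat.find hne) • e = e + (Nat.find hne - 1) • e := by
      conv_lhs => rw [show Nat.find hne = 1 + (Nat.find hne - 1) by omega]
      rw [add_nsmul, one_nsmul]
    calc m = f + (Nat.find hne - 1) • e := hf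
      _ = (e + m') + (Nat.find hne - 1) • e := by rw [hfm']
      _ = m' + (e + (Nat.find hne - 1) • e) := by abel
      _ = m' + Nat.find hne • e := by rw [← h6]
  -- uniqueness of the decomposition
  have key : ∀ f, f ∉ p → ∀ f' ∈ M, ∀ k k' : ℕ, k < k' → f + k • e = f' + k' • e → False := by
    intro f hfp f' hf'M k k' hlt heq
    apply hfp
    rw [hpe]
    refine ⟨f' + (k' - k - 1) • e, M.add_mem hf'M (nsmul_mem he _), ?_⟩
    have h1 : k' • e = ((k' - k - 1) • e + e) + k • e := by
      calc k' • e = (((k' - k - 1) + 1) + k) • e := by congr 1; omega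
        _ = ((k' - k - 1) + 1) • e + k • e := by rw [add_nsmul]
        _ = ((k' - k - 1) • e + 1 • e) + k • e := by rw [add_nsmul]
        _ = ((k' - k - 1) • e + e) + k • e := by rw [one_nsmul]
    rw [h1, ← add_assoc] at heq
    have h2 : f = f' + ((k' - k - 1) • e + e) := add_right_cancel heq
    rw [h2]
    abel
  have huniq : ∀ f ∈ (M : Set Λ) \ p, ∀ f' ∈ (M : Set Λ) \ p, ∀ k k' : ℕ,
      f + k • e = f' + k' • e → f = f' ∧ k = k' := by
    intro f hf f' hf' k k' heq
    rcases lt_trichotomy k k' with h | h | h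
    · exact absurd heq fun heq => key f hf.2 f' hf'.1 k k' h heq
    · subst h
      exact ⟨add_right_cancel heq, rfl⟩
    · exact absurd heq fun heq => key f' hf'.2 f hf.1 k' k h heq.symm
  have part1 : ∀ m ∈ M, ∃! fk : Λ × ℕ, fk.1 ∈ (M : Set Λ) \ p ∧ m = fk.1 + fk.2 • e := by
    intro m hm
    obtain ⟨f, k, hf, hmk⟩ := hexists m hm
    refine ⟨(f, k), ⟨hf, hmk⟩, ?_⟩
    rintro ⟨f', k'⟩ ⟨hf', hmk'⟩
    have h := huniq f' hf' f hf k' k (by rw [← hmk', ← hmk])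
    exact Prod.ext_iff.2 ⟨h.1, h.2⟩
  -- the submonoid generated by e
  have hmemE0 : ∀ x, x ∈ AddSubmonoid.closure ({e} : Set Λ) ↔ ∃ n : ℕ, n • e = x := fun x =>
    AddSubmonoid.mem_closure_singleton
  have heE0 : e ∈ AddSubmonoid.closure ({e} : Set Λ) := (hmemE0 e).2 ⟨1, one_nsmul e⟩
  have hE0sub : (AddSubmonoid.closure ({e} : Set Λ) : Set Λ) ⊆ (M : Set Λ) := by
    intro x hx
    exact AddSubmonoid.closure_le.2 (by simpa using he) hx
  have hface : IsFace M (AddSubmonoid.closure ({e} : Set Λ) : Set Λ) := by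
    refine ⟨hE0sub, AddSubmonoid.zero_mem _,
      fun x hx y hy => AddSubmonoid.add_mem _ hx hy, ?_⟩
    intro x hx y hy hxy
    obtain ⟨k, hk⟩ := (hmemE0 _).1 hxy
    obtain ⟨f, a, ⟨⟨hfM, hfp⟩, hfx⟩⟩ := hexists x hx
    obtain ⟨g, b, ⟨⟨hgM, hgp⟩, hgy⟩⟩ := hexists y hy
    have hfgp : f + g ∉ p := fun hmem => (hp.2.2 f hfM g hgM hmem).elim hfp hgp
    have heq : (f + g) + (a + b) • e = k • e := by
      rw [hk, hfx, hgy, add_nsmul]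
      abel
    rcases le_or_gt (a + b) k with hle | hlt
    · have h2 : f + g = (k - (a + b)) • e := by
        have h7 : k • e = (k - (a + b)) • e + (a + b) • e := by
          rw [← add_nsmul]; congr 1; omega
        rw [h7] at heq
        exact add_right_cancel heq
      rcases Nat.eq_zero_or_pos (k - (a + b)) with h8 | h8
      · rw [h8, zero_nsmul] at h2
        have hf0 : f = 0 := hsharp f hfM g hgM h2
        have hg0 : g = 0 := by rw [hf0, zero_add] at h2; exact h2
        constructor
        · exact (hmemE0 x).2 ⟨a, by rw [hfx, hf0, zero_add]⟩
        · exact (hmemE0 y).2 ⟨b, by rw [hgy, hg0, zero_add]⟩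
      · exfalso
        apply hfgp
        rw [hpe]
        refine ⟨(k - (a + b) - 1) • e, nsmul_mem he _, ?_⟩
        rw [h2]
        conv_lhs => rw [show k - (a + b) = 1 + (k - (a + b) - 1) by omega]
        rw [add_nsmul, one_nsmul]
    · exfalso
      have h9 : ((f + g) + ((a + b) - k) • e) + k • e = 0 + k • e := by
        have h10 : (a + b) • e = ((a + b) - k) • e + k • e := by
          rw [← add_nsmul]; congr 1; omega
        rw [h10, ← add_assoc] at heq
        rw [heq, zero_add]
      have h11 : (f + g) + ((a + b) - k) • e = 0 := add_right_cancel h9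
      have h12 : f + g = 0 :=
        hsharp _ (M.add_mem hfM hgM) _ (nsmul_mem he _) h11
      rw [h12, zero_add] at h11
      exact hene (htf e ((a + b) - k) (by omega) h11)
  have hrkE0 : setRank (AddSubmonoid.closure ({e} : Set Λ) : Set Λ) = 1 := by
    show Module.finrank ℚ (ℚ ⊗[ℤ]
      ↥(AddSubgroup.closure (AddSubmonoid.closure ({e} : Set Λ) : Set Λ))) = 1
    refine aux_rank_one _ (AddSubgroup.subset_closure heE0) hene ?_
    intro a ha
    refine AddSubgroup.closure_induction ?_ ?_ ?_ ?_ ha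
    · intro x hx
      obtain ⟨n, hn⟩ := (hmemE0 x).1 hx
      exact ⟨(n : ℤ), by rw [natCast_zsmul, hn]⟩
    · exact ⟨0, by simp⟩
    · rintro x y _ _ ⟨n, rfl⟩ ⟨m, rfl⟩
      exact ⟨n + m, by rw [add_smul]⟩
    · rintro x _ ⟨n, rfl⟩
      exact ⟨-n, by rw [neg_smul]⟩
  have hprime_pow : ∀ f ∈ M, ∀ n : ℕ, n • f ∈ p → f ∈ p := by
    intro f hfM n
    induction n with
    | zero => intro h; rw [zero_nsmul] at h; exact absurd h h0p
    | succ n ih =>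
      intro h
      rw [succ_nsmul] at h
      rcases hp.2.2 (n • f) (nsmul_mem hfM n) f hfM h with h' | h'
      · exact ih h'
      · exact h'
  refine ⟨part1, ⟨hface, hrkE0⟩, ?_, ?_⟩
  · intro hsub
    exact (hsub heE0).2 hep
  · intro E hE hnsub
    obtain ⟨x, hxE, hxns⟩ := Set.not_subset.1 hnsub
    have hxM : x ∈ M := hE.1.1 hxE
    have hxp : x ∈ p := by
      by_contra h
      exact hxns ⟨hxM, h⟩
    rw [hpe] at hxp
    obtain ⟨m', hm'M, hxm⟩ := hxp
    have heE : e ∈ E := (hE.1.2.2.2 e he m' hm'M (hxm ▸ hxE)).1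
    have hmulE : ∀ n : ℕ, n • e ∈ E := by
      intro n
      induction n with
      | zero => simpa using hE.1.2.1
      | succ n ih =>
        rw [succ_nsmul]
        exact hE.1.2.2.1 _ ih _ heE
    apply Set.Subset.antisymm
    · intro y hyE
      have hyM : y ∈ M := hE.1.1 hyE
      obtain ⟨f, k, ⟨⟨hfM, hfp⟩, hyfk⟩⟩ := hexists y hyM
      have hkM : k • e ∈ M := nsmul_mem he k
      have hfE : f ∈ E := (hE.1.2.2.2 f hfM (k • e) hkM (hyfk ▸ hyE)).1
      have hf0 : f = 0 := by
        by_contra hfne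
        have hrk : Module.finrank ℚ (ℚ ⊗[ℤ] ↥(AddSubgroup.closure E)) = 1 := hE.2
        obtain ⟨a, b, hb, hab⟩ := aux_dep (AddSubgroup.closure E) hrk
          (AddSubgroup.subset_closure heE) (AddSubgroup.subset_closure hfE) hene
        obtain ⟨a, b, hbpos, hab⟩ : ∃ a b : ℤ, 0 < b ∧ b • f = a • e := by
          rcases hb.lt_or_gt with hneg | hpos
          · exact ⟨-a, -b, by omega, by rw [neg_smul, neg_smul, hab]⟩
          · exact ⟨a, b, hpos, hab⟩
        have hbf : (b.toNat : ℕ) • f = b • f := by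
          rw [← natCast_zsmul, Int.toNat_of_nonneg hbpos.le]
        rcases lt_trichotomy a 0 with haneg | rfl | hapos
        · have h1 : b.toNat • f + (-a).toNat • e = 0 := by
            have h2 : ((-a).toNat : ℕ) • e = (-a) • e := by
              rw [← natCast_zsmul, Int.toNat_of_nonneg (by omega)]
            rw [hbf, h2, hab, neg_smul, add_neg_cancel]
          have h3 := hsharp _ (nsmul_mem hfM b.toNat) _
            (nsmul_mem he (-a).toNat) h1
          exact hfne (htf f b.toNat (by omega) h3)
        · rw [zero_smul] at hab
          exact hfne ((smul_eq_zero.1 hab).resolve_left (by omega))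
        · apply hfp
          refine hprime_pow f hfM b.toNat ?_
          rw [hpe]
          refine ⟨(a.toNat - 1) • e, nsmul_mem he _, ?_⟩
          rw [hbf, hab]
          have h4 : a • e = ((1 : ℕ) + (a.toNat - 1)) • e := by
            rw [show (1 : ℕ) + (a.toNat - 1) = a.toNat by omega, ← natCast_zsmul,
              Int.toNat_of_nonneg hapos.le]
          rw [h4, add_nsmul, one_nsmul]
      rw [hf0, zero_add] at hyfk
      exact (hmemE0 y).2 ⟨k, hyfk.symm⟩
    · intro z hz
      obtain ⟨n, hn⟩ := (hmemE0 z).1 hz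
      exact hn ▸ hmulE n
end

section
/- Let M be a toric monoid and p ⊆ M a prime ideal. Then F = M ∖ p is a face of M and height(p) = rk(M) − rk(F). -/
open scoped TensorProduct Pointwise

variable {Λ : Type*} [AddCommGroup Λ]

namespace S3

noncomputable def iov : Λ →ₗ[ℤ] ℚ ⊗[ℤ] Λ := TensorProduct.mk ℤ ℚ Λ 1

theorem iov_nsmul (n : ℕ) (x : Λ) : iov (n • x) = (n : ℚ) • iov x := by
  rw [map_nsmul, Nat.cast_smul_eq_nsmul]

theorem iov_inj (htf : ∀ (x : Λ) (n : ℕ), 0 < n → n • x = 0 → x = 0) :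
    Function.Injective (iov (Λ := Λ)) := by
  haveI hloc : IsLocalizedModule (nonZeroDivisors ℤ) (iov (Λ := Λ)) := by
    rw [isLocalizedModule_iff_isBaseChange (nonZeroDivisors ℤ) ℚ]
    exact TensorProduct.isBaseChange ℤ Λ ℚ
  intro a b hab
  have h : iov (a - b) = 0 := by rw [map_sub, hab, sub_self]
  rw [IsLocalizedModule.eq_zero_iff (nonZeroDivisors ℤ)] at h
  obtain ⟨s, hs⟩ := h
  have hs' : (s : ℤ) • (a - b) = 0 := hs
  have hsne : (s : ℤ) ≠ 0 := nonZeroDivisors.coe_ne_zero s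
  have hpos : 0 < (s : ℤ).natAbs := Int.natAbs_pos.mpr hsne
  have h2 : ((s : ℤ).natAbs : ℤ) • (a - b) = 0 := by
    rcases Int.natAbs_eq (s : ℤ) with h | h
    · rw [← h]; exact hs'
    · rw [← neg_eq_iff_eq_neg.mpr h, neg_smul, hs', neg_zero]
  have := htf (a - b) (s : ℤ).natAbs hpos (by rwa [natCast_zsmul] at h2)
  exact sub_eq_zero.mp this

theorem setRank_eq (S : Set Λ) :
    setRank S = Module.finrank ℚ (Submodule.span ℚ (iov '' S)) := by
  haveI : Module.Flat ℤ ℚ := IsLocalization.flat ℚ (nonZeroDivisors ℤ)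
  set A := AddSubgroup.closure S with hA
  let f : A →ₗ[ℤ] Λ := (A.subtype).toIntLinearMap
  have hfinj : Function.Injective f := Subtype.val_injective
  let bc : (ℚ ⊗[ℤ] A) →ₗ[ℚ] ℚ ⊗[ℤ] Λ := LinearMap.baseChange ℚ f
  have hbcinj : Function.Injective bc := by
    have := Module.Flat.lTensor_preserves_injective_linearMap (M := ℚ) f hfinj
    intro x y hxy
    apply this
    simpa [bc, LinearMap.baseChange_eq_ltensor] using hxy
  have h1 : setRank S = Module.finrank ℚ (LinearMap.range bc) :=
    (LinearEquiv.ofInjective bc hbcinj).finrank_eq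
  have h2 : LinearMap.range bc = Submodule.span ℚ (iov '' (A : Set Λ)) := by
    apply le_antisymm
    · rintro _ ⟨t, rfl⟩
      induction t using TensorProduct.induction_on with
      | zero => simp
      | tmul q a =>
          have : bc (q ⊗ₜ a) = q • iov (a : Λ) := by
            simp only [bc, LinearMap.baseChange_tmul]
            show (q ⊗ₜ[ℤ] (a : Λ) : ℚ ⊗[ℤ] Λ) = q • ((1 : ℚ) ⊗ₜ[ℤ] (a : Λ))
            rw [TensorProduct.smul_tmul', smul_eq_mul, mul_one]
          rw [this]
          exact Submodule.smul_mem _ _ (Submodule.subset_span ⟨a, a.2, rfl⟩)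
      | add x y hx hy => rw [map_add]; exact Submodule.add_mem _ hx hy
    · rw [Submodule.span_le]
      rintro _ ⟨a, ha, rfl⟩
      exact ⟨1 ⊗ₜ ⟨a, ha⟩, rfl⟩
  have h3 : Submodule.span ℚ (iov '' (A : Set Λ)) = Submodule.span ℚ (iov '' S) := by
    apply le_antisymm
    · rw [Submodule.span_le]
      rintro _ ⟨a, ha, rfl⟩
      induction ha using AddSubgroup.closure_induction with
      | mem x hx => exact Submodule.subset_span ⟨x, hx, rfl⟩
      | zero => simpa using (Submodule.span ℚ (iov '' S)).zero_mem
      | add x y _ _ hx hy => rw [map_add]; exact Submodule.add_mem _ hx hy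
      | neg x _ hx => rw [map_neg]; exact Submodule.neg_mem _ hx
    · exact Submodule.span_mono (Set.image_mono (AddSubgroup.subset_closure))
  rw [h1, h2, h3]

/-- Elements of the ℚ-span of a monoid-like set `F` can be written `(a - b)/n`. -/
theorem span_to_monoid {F : Set Λ} (hF0 : (0 : Λ) ∈ F)
    (hFadd : ∀ x ∈ F, ∀ y ∈ F, x + y ∈ F) {w : ℚ ⊗[ℤ] Λ}
    (hw : w ∈ Submodule.span ℚ (iov '' F)) :
    ∃ n : ℕ, 0 < n ∧ ∃ a ∈ F, ∃ b ∈ F, (n : ℚ) • w + iov b = iov a := by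
  have hnsmul : ∀ m : ℕ, ∀ x ∈ F, m • x ∈ F := by
    intro m
    induction m with
    | zero => intro x hx; simpa using hF0
    | succ k ih => intro x hx; rw [succ_nsmul]; exact hFadd _ (ih x hx) _ hx
  let D : Submodule ℚ (ℚ ⊗[ℤ] Λ) :=
    { carrier := {w | ∃ n : ℕ, 0 < n ∧ ∃ a ∈ F, ∃ b ∈ F, (n : ℚ) • w + iov b = iov a}
      zero_mem' := ⟨1, one_pos, 0, hF0, 0, hF0, by simp⟩
      add_mem' := by
        rintro u v ⟨n, hn, a, ha, b, hb, hu⟩ ⟨m, hm, a', ha', b', hb', hv⟩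
        refine ⟨n * m, Nat.mul_pos hn hm, m • a + n • a', hFadd _ (hnsmul m a ha) _ (hnsmul n a' ha'),
          m • b + n • b', hFadd _ (hnsmul m b hb) _ (hnsmul n b' hb'), ?_⟩
        have h1 : ((n * m : ℕ) : ℚ) • (u + v) = (m : ℚ) • ((n : ℚ) • u) + (n : ℚ) • ((m : ℚ) • v) := by
          push_cast
          rw [smul_add, smul_smul, smul_smul]
          ring_nf
        rw [h1, map_add, map_add, iov_nsmul, iov_nsmul, iov_nsmul, iov_nsmul]
        have hu' : (m : ℚ) • ((n : ℚ) • u) + (m : ℚ) • iov b = (m : ℚ) • iov a := by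
          rw [← smul_add, hu]
        have hv' : (n : ℚ) • ((m : ℚ) • v) + (n : ℚ) • iov b' = (n : ℚ) • iov a' := by
          rw [← smul_add, hv]
        calc (m : ℚ) • ((n : ℚ) • u) + (n : ℚ) • ((m : ℚ) • v) + ((m : ℚ) • iov b + (n : ℚ) • iov b')
            = ((m : ℚ) • ((n : ℚ) • u) + (m : ℚ) • iov b) + ((n : ℚ) • ((m : ℚ) • v) + (n : ℚ) • iov b') := by abel
          _ = (m : ℚ) • iov a + (n : ℚ) • iov a' := by rw [hu', hv']
      smul_mem' := by
        rintro q v ⟨n, hn, a, ha, b, hb, hv⟩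
        have hd : (0 : ℚ) < (q.den : ℚ) := by exact_mod_cast q.pos
        have hv' : (n : ℚ) • v = iov a - iov b := by rw [← hv]; abel
        have key : ((n * q.den : ℕ) : ℚ) • (q • v) = q.num • ((n : ℚ) • v) := by
          push_cast
          rw [smul_smul, ← Int.cast_smul_eq_zsmul ℚ q.num, smul_smul]
          congr 1
          rw [mul_assoc, mul_comm (q.den : ℚ) q, Rat.mul_den_eq_num]
          ring
        rcases le_or_gt 0 q.num with hq | hq
        · have hcast : ((q.num.toNat : ℕ) : ℚ) = (q.num : ℚ) := by
            exact_mod_cast congrArg (Int.cast : ℤ → ℚ) (Int.toNat_of_nonneg hq)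
          refine ⟨n * q.den, Nat.mul_pos hn q.pos, q.num.toNat • a, hnsmul _ a ha,
            q.num.toNat • b, hnsmul _ b hb, ?_⟩
          rw [key, hv', iov_nsmul, iov_nsmul, hcast, ← Int.cast_smul_eq_zsmul ℚ q.num]
          module
        · have hq' : (0:ℤ) ≤ -q.num := by omega
          have hcast : (((-q.num).toNat : ℕ) : ℚ) = -(q.num : ℚ) := by
            have := congrArg (Int.cast : ℤ → ℚ) (Int.toNat_of_nonneg hq')
            push_cast at this ⊢
            linarith
          refine ⟨n * q.den, Nat.mul_pos hn q.pos, (-q.num).toNat • b, hnsmul _ b hb,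
            (-q.num).toNat • a, hnsmul _ a ha, ?_⟩
          rw [key, hv', iov_nsmul, iov_nsmul, hcast, ← Int.cast_smul_eq_zsmul ℚ q.num]
          module }
  have hsub : Submodule.span ℚ (iov '' F) ≤ D := by
    rw [Submodule.span_le]
    rintro _ ⟨x, hx, rfl⟩
    exact ⟨1, one_pos, x, hx, 0, hF0, by simp⟩
  exact hsub hw

section Generic
variable {V : Type*} [AddCommGroup V] [Module ℚ V]
theorem exists_dual_vanish (p : Submodule ℚ V) {w : V} (hw : w ∉ p) :
    ∃ ℓ : V →ₗ[ℚ] ℚ, (∀ x ∈ p, ℓ x = 0) ∧ ℓ w = 1 := by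
  have hw' : p.mkQ w ≠ 0 := by
    rw [Submodule.mkQ_apply, ne_eq, Submodule.Quotient.mk_eq_zero]
    exact hw
  obtain ⟨φ, hφ⟩ : ∃ φ : Module.Dual ℚ (V ⧸ p), φ (p.mkQ w) ≠ 0 := by
    by_contra hcon
    push_neg at hcon
    exact hw' ((Module.forall_dual_apply_eq_zero_iff ℚ _).mp hcon)
  refine ⟨(φ (p.mkQ w))⁻¹ • (φ.comp p.mkQ), fun x hx => ?_, ?_⟩
  · simp [Submodule.mkQ_apply, (Submodule.Quotient.mk_eq_zero p).mpr hx]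
  · simp only [LinearMap.smul_apply, LinearMap.coe_comp, Function.comp_apply, smul_eq_mul]
    exact inv_mul_cancel₀ hφ

theorem farkas : ∀ (n : ℕ) (g : Fin n → V) (v : V),
    (¬ ∃ c : Fin n → ℚ, (∀ i, 0 ≤ c i) ∧ v = ∑ i, c i • g i) →
    ∃ ℓ : V →ₗ[ℚ] ℚ, (∀ i, 0 ≤ ℓ (g i)) ∧ ℓ v < 0 := by
  intro n
  induction n with
  | zero =>
      intro g v hv
      have hvne : v ≠ 0 := by
        intro h
        exact hv ⟨fun _ => 0, fun i => le_refl _, by simp [h]⟩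
      obtain ⟨ℓ, -, hℓw⟩ := exists_dual_vanish (⊥ : Submodule ℚ V) (by simpa using hvne)
      exact ⟨-ℓ, fun i => i.elim0, by simp [hℓw]⟩
  | succ m ih =>
      intro g v hv
      set a := g (Fin.last m) with ha
      set g' : Fin m → V := fun i => g i.castSucc with hg'
      by_cases hrest : ∃ c : Fin m → ℚ, (∀ i, 0 ≤ c i) ∧ v = ∑ i, c i • g' i
      · exfalso
        obtain ⟨c, hc, hrep⟩ := hrest
        refine hv ⟨Fin.snoc c 0, fun i => ?_, ?_⟩
        · induction i using Fin.lastCases with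
          | last => simp
          | cast i => simp [hc i]
        · rw [Fin.sum_univ_castSucc]
          simp only [Fin.snoc_castSucc, Fin.snoc_last, zero_smul, add_zero]
          exact hrep
      · obtain ⟨ℓ, hℓg, hℓv⟩ := ih g' v hrest
        by_cases hla : 0 ≤ ℓ a
        · refine ⟨ℓ, fun i => ?_, hℓv⟩
          induction i using Fin.lastCases with
          | last => exact hla
          | cast i => exact hℓg i
        · push_neg at hla
          have hlane : ℓ a ≠ 0 := ne_of_lt hla
          set prj : V → V := fun x => x - (ℓ x / ℓ a) • a with hprj
          have hnot : ¬ ∃ c : Fin m → ℚ, (∀ i, 0 ≤ c i) ∧ prj v = ∑ i, c i • prj (g' i) := by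
            rintro ⟨c, hc, hrep⟩
            set μ := (ℓ v - ∑ i, c i * ℓ (g' i)) / ℓ a with hμ
            have hsum0 : 0 ≤ ∑ i, c i * ℓ (g' i) :=
              Finset.sum_nonneg fun i _ => mul_nonneg (hc i) (hℓg i)
            have hμpos : 0 ≤ μ := by
              rw [hμ, div_nonneg_iff]
              right
              exact ⟨by linarith, hla.le⟩
            apply hv
            refine ⟨Fin.snoc c μ, fun i => ?_, ?_⟩
            · induction i using Fin.lastCases with
              | last => simpa using hμpos
              | cast i => simpa using hc i
            · rw [Fin.sum_univ_castSucc]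
              simp only [Fin.snoc_castSucc, Fin.snoc_last]
              have hrep' : v - (ℓ v / ℓ a) • a
                  = (∑ i, c i • g' i) - (∑ i, c i * ℓ (g' i) / ℓ a) • a := by
                rw [hprj] at hrep
                simp only at hrep
                rw [hrep]
                simp only [smul_sub]
                rw [Finset.sum_sub_distrib, Finset.sum_smul]
                congr 1
                apply Finset.sum_congr rfl
                intro i _
                rw [smul_smul, mul_div_assoc]
              have hμa : μ • a = (ℓ v / ℓ a) • a - (∑ i, c i * ℓ (g' i) / ℓ a) • a := by
                rw [hμ, ← sub_smul]
                congr 1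
                rw [sub_div, Finset.sum_div]
              rw [sub_eq_iff_eq_add] at hrep'
              have hfin : v = (∑ i, c i • g' i) + μ • a :=
                calc v = ∑ i, c i • g' i - (∑ i, c i * ℓ (g' i) / ℓ a) • a + (ℓ v / ℓ a) • a := hrep'
                  _ = (∑ i, c i • g' i) + μ • a := by rw [hμa]; abel
              exact hfin
          obtain ⟨ℓ₁, hℓ₁g, hℓ₁v⟩ := ih (fun i => prj (g' i)) (prj v) hnot
          set ℓ₂ := ℓ₁ - (ℓ₁ a / ℓ a) • ℓ with hℓ₂
          have hkey : ∀ x, ℓ₂ x = ℓ₁ (prj x) := by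
            intro x
            simp only [hℓ₂, hprj, LinearMap.sub_apply, LinearMap.smul_apply, smul_eq_mul,
              map_sub, map_smul]
            ring
          refine ⟨ℓ₂, fun i => ?_, ?_⟩
          · induction i using Fin.lastCases with
            | last =>
                rw [← ha, hkey]
                have : prj a = 0 := by
                  simp [hprj, div_self hlane]
                rw [this, map_zero]
            | cast i =>
                rw [hkey]
                exact hℓ₁g i
          · rw [hkey]
            exact hℓ₁v

end Generic

section Faces
variable {M : AddSubmonoid Λ} {F G H : Set Λ} {p : Set Λ} {T : Set Λ}

theorem face_nsmul_mem (hF : IsFace M F) {x : Λ} (hx : x ∈ F) (n : ℕ) : n • x ∈ F := by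
  induction n with
  | zero => simpa using hF.2.1
  | succ k ih => rw [succ_nsmul]; exact hF.2.2.1 _ ih _ hx

theorem face_nsmul_reflect (hF : IsFace M F) {x : Λ} (hxM : x ∈ M) {n : ℕ} (hn : 0 < n)
    (h : n • x ∈ F) : x ∈ F := by
  obtain ⟨k, rfl⟩ := Nat.exists_eq_succ_of_ne_zero hn.ne'
  rw [succ_nsmul] at h
  exact (hF.2.2.2 _ (AddSubmonoid.nsmul_mem M hxM k) _ hxM h).2

theorem multiset_mem_face (hF : IsFace M F) (l : Multiset Λ) (hl : ∀ y ∈ l, y ∈ M)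
    (hsum : l.sum ∈ F) : ∀ y ∈ l, y ∈ F := by
  induction l using Multiset.induction with
  | empty => intro y hy; simp at hy
  | cons a s ih =>
      rw [Multiset.sum_cons] at hsum
      have haM : a ∈ M := hl a (Multiset.mem_cons_self a s)
      have hsM : s.sum ∈ M := AddSubmonoid.multiset_sum_mem M s (fun y hy => hl y (Multiset.mem_cons_of_mem hy))
      have := hF.2.2.2 a haM s.sum hsM hsum
      intro y hy
      rcases Multiset.mem_cons.mp hy with rfl | hy
      · exact this.1
      · exact ih (fun z hz => hl z (Multiset.mem_cons_of_mem hz)) this.2 y hy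

theorem mem_rep {T : Set Λ} (hT : AddSubmonoid.closure T = M) {x : Λ} (hx : x ∈ M) :
    ∃ l : Multiset Λ, (∀ y ∈ l, y ∈ T) ∧ l.sum = x := by
  rw [← hT] at hx
  induction hx using AddSubmonoid.closure_induction with
  | mem y hy => exact ⟨{y}, by simpa using hy, by simp⟩
  | zero => exact ⟨0, by simp, by simp⟩
  | add a b _ _ iha ihb =>
      obtain ⟨la, hla, rfl⟩ := iha
      obtain ⟨lb, hlb, rfl⟩ := ihb
      refine ⟨la + lb, fun y hy => ?_, by simp⟩
      rcases Multiset.mem_add.mp hy with h | h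
      exacts [hla y h, hlb y h]

theorem face_rep {T : Set Λ} (hT : AddSubmonoid.closure T = M) (hF : IsFace M F) {x : Λ}
    (hx : x ∈ F) : ∃ l : Multiset Λ, (∀ y ∈ l, y ∈ T ∧ y ∈ F) ∧ l.sum = x := by
  obtain ⟨l, hl, rfl⟩ := mem_rep hT (hF.1 hx)
  have hlM : ∀ y ∈ l, y ∈ M := fun y hy => by
    rw [← hT]; exact AddSubmonoid.subset_closure (hl y hy)
  exact ⟨l, fun y hy => ⟨hl y hy, multiset_mem_face hF l hlM hx y hy⟩, rfl⟩

theorem zero_notin_prime (hp : IsPrimeMonIdeal M p) : (0 : Λ) ∉ p := by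
  intro h0
  exact hp.2.1 (le_antisymm hp.1.1 (fun m hm => by simpa using hp.1.2 0 h0 m hm))

theorem isFace_compl_prime (hp : IsPrimeMonIdeal M p) : IsFace M ((M : Set Λ) \ p) := by
  refine ⟨fun x hx => hx.1, ⟨M.zero_mem, zero_notin_prime hp⟩, ?_, ?_⟩
  · rintro x ⟨hxM, hxp⟩ y ⟨hyM, hyp⟩
    refine ⟨M.add_mem hxM hyM, fun h => ?_⟩
    rcases hp.2.2 x hxM y hyM h with h | h
    exacts [hxp h, hyp h]
  · rintro x hxM y hyM ⟨_, hxyp⟩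
    refine ⟨⟨hxM, fun h => hxyp ?_⟩, ⟨hyM, fun h => hxyp ?_⟩⟩
    exacts [hp.1.2 x h y hyM, by rw [add_comm]; exact hp.1.2 y h x hxM]

theorem compl_face_prime (hG : IsFace M G) : IsPrimeMonIdeal M ((M : Set Λ) \ G) := by
  refine ⟨⟨fun x hx => hx.1, ?_⟩, ?_, ?_⟩
  · rintro i ⟨hiM, hiG⟩ m hm
    exact ⟨M.add_mem hiM hm, fun h => hiG (hG.2.2.2 i hiM m hm h).1⟩
  · intro h
    have : (0 : Λ) ∈ (M : Set Λ) \ G := by rw [h]; exact M.zero_mem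
    exact this.2 hG.2.1
  · rintro x hx y hy ⟨_, hxyG⟩
    by_contra hcon
    push_neg at hcon
    obtain ⟨h1, h2⟩ := hcon
    have hxG : x ∈ G := by
      by_contra hxG; exact h1 ⟨hx, hxG⟩
    have hyG : y ∈ G := by
      by_contra hyG; exact h2 ⟨hy, hyG⟩
    exact hxyG (hG.2.2.1 x hxG y hyG)

theorem compl_compl_of_subset (hp : p ⊆ (M : Set Λ)) : (M : Set Λ) \ ((M : Set Λ) \ p) = p := by
  ext x; constructor
  · rintro ⟨hxM, hx⟩
    by_contra hxp
    exact hx ⟨hxM, hxp⟩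
  · intro hxp
    exact ⟨hp hxp, fun h => h.2 hxp⟩

theorem compl_ssubset (hA : (A : Set Λ) ⊆ M) (hB : B ⊆ (M : Set Λ)) (h : A ⊂ B) :
    (M : Set Λ) \ B ⊂ (M : Set Λ) \ A := by
  constructor
  · rintro x ⟨hxM, hxB⟩
    exact ⟨hxM, fun hx => hxB (h.1 hx)⟩
  · intro hcon
    obtain ⟨x, hxB, hxA⟩ := Set.exists_of_ssubset h
    have : x ∈ (M : Set Λ) \ A := ⟨hB hxB, hxA⟩
    have := hcon this
    exact this.2 hxB

/-- common denominators -/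
theorem denom {n : ℕ} (c : Fin n → ℚ) (hc : ∀ i, 0 ≤ c i) :
    ∃ N : ℕ, 0 < N ∧ ∃ k : Fin n → ℕ, ∀ i, (k i : ℚ) = N * c i := by
  refine ⟨∏ i, (c i).den, Finset.prod_pos (fun i _ => (c i).pos), 
    fun i => (∏ j ∈ Finset.univ.erase i, (c j).den) * (c i).num.toNat, fun i => ?_⟩
  have h1 : ((c i).num.toNat : ℚ) = ((c i).num : ℚ) := by
    exact_mod_cast congrArg (Int.cast : ℤ → ℚ) (Int.toNat_of_nonneg (Rat.num_nonneg.mpr (hc i)))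
  push_cast
  rw [h1]
  have h2 : ((c i).num : ℚ) = c i * (c i).den := (Rat.mul_den_eq_num (c i)).symm
  rw [h2]
  have h3 : (((c i).den : ℚ)) * ∏ j ∈ Finset.univ.erase i, ((c j).den : ℚ)
      = ∏ j, ((c j).den : ℚ) := Finset.mul_prod_erase Finset.univ (fun j => ((c j).den : ℚ)) (Finset.mem_univ i)
  push_cast at h3
  rw [← h3]
  ring

theorem face_eval_nonneg (hT : AddSubmonoid.closure T = M) (hG : IsFace M G)
    (ℓ : (ℚ ⊗[ℤ] Λ) →ₗ[ℚ] ℚ) (hgen : ∀ t ∈ T, t ∈ G → 0 ≤ ℓ (iov t)) {x : Λ} (hx : x ∈ G) :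
    0 ≤ ℓ (iov x) := by
  obtain ⟨l, hl, rfl⟩ := face_rep hT hG hx
  rw [map_multiset_sum, map_multiset_sum]
  apply Multiset.sum_nonneg
  intro q hq
  rw [Multiset.mem_map] at hq
  obtain ⟨v, hv, rfl⟩ := hq
  rw [Multiset.mem_map] at hv
  obtain ⟨y, hy, rfl⟩ := hv
  exact hgen y (hl y hy).1 (hl y hy).2

theorem face_eval_zero (hT : AddSubmonoid.closure T = M) (hG : IsFace M G)
    (ℓ : (ℚ ⊗[ℤ] Λ) →ₗ[ℚ] ℚ) (hgen : ∀ t ∈ T, t ∈ G → ℓ (iov t) = 0) {x : Λ} (hx : x ∈ G) :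
    ℓ (iov x) = 0 := by
  obtain ⟨l, hl, rfl⟩ := face_rep hT hG hx
  rw [map_multiset_sum, map_multiset_sum]
  apply Multiset.sum_eq_zero
  intro q hq
  rw [Multiset.mem_map] at hq
  obtain ⟨v, hv, rfl⟩ := hq
  rw [Multiset.mem_map] at hv
  obtain ⟨y, hy, rfl⟩ := hv
  exact hgen y (hl y hy).1 (hl y hy).2

theorem face_span_gens (hT : AddSubmonoid.closure T = M) (hG : IsFace M G) :
    Submodule.span ℚ (iov '' G) = Submodule.span ℚ (iov '' (T ∩ G)) := by
  apply le_antisymm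
  · rw [Submodule.span_le]
    rintro _ ⟨x, hx, rfl⟩
    obtain ⟨l, hl, rfl⟩ := face_rep hT hG hx
    rw [map_multiset_sum]
    apply multiset_sum_mem
    intro v hv
    rw [Multiset.mem_map] at hv
    obtain ⟨y, hy, rfl⟩ := hv
    exact Submodule.subset_span ⟨y, ⟨(hl y hy).1, (hl y hy).2⟩, rfl⟩
  · exact Submodule.span_mono (Set.image_mono Set.inter_subset_right)

theorem kernel_face (hG : IsFace M G) (ℓ : (ℚ ⊗[ℤ] Λ) →ₗ[ℚ] ℚ)
    (hnn : ∀ x ∈ G, 0 ≤ ℓ (iov x)) : IsFace M {x ∈ G | ℓ (iov x) = 0} := by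
  refine ⟨fun x hx => hG.1 hx.1, ⟨hG.2.1, by simp⟩, ?_, ?_⟩
  · rintro x ⟨hxG, hx0⟩ y ⟨hyG, hy0⟩
    exact ⟨hG.2.2.1 x hxG y hyG, by rw [map_add, map_add, hx0, hy0, add_zero]⟩
  · rintro x hxM y hyM ⟨hxyG, hxy0⟩
    obtain ⟨hxG, hyG⟩ := hG.2.2.2 x hxM y hyM hxyG
    rw [map_add, map_add] at hxy0
    have h1 := hnn x hxG
    have h2 := hnn y hyG
    exact ⟨⟨hxG, by linarith⟩, ⟨hyG, by linarith⟩⟩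

theorem span_strict (hι : Function.Injective (iov (Λ := Λ)))
    [FiniteDimensional ℚ (ℚ ⊗[ℤ] Λ)]
    (hH : IsFace M H) (hG : IsFace M G) (hHG : H ⊆ G) (hne : H ≠ G) :
    Module.finrank ℚ (Submodule.span ℚ (iov '' H)) <
      Module.finrank ℚ (Submodule.span ℚ (iov '' G)) := by
  have hle : Submodule.span ℚ (iov '' H) ≤ Submodule.span ℚ (iov '' G) :=
    Submodule.span_mono (Set.image_mono hHG)
  rcases lt_or_ge (Module.finrank ℚ (Submodule.span ℚ (iov '' H)))
    (Module.finrank ℚ (Submodule.span ℚ (iov '' G))) with h | h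
  · exact h
  exfalso
  have heq : Submodule.span ℚ (iov '' H) = Submodule.span ℚ (iov '' G) :=
    Submodule.eq_of_le_of_finrank_le hle h
  obtain ⟨g, hgG, hgH⟩ : ∃ g, g ∈ G ∧ g ∉ H := by
    by_contra hcon
    push_neg at hcon
    exact hne (le_antisymm hHG hcon)
  have hg : iov g ∈ Submodule.span ℚ (iov '' H) := by
    rw [heq]; exact Submodule.subset_span ⟨g, hgG, rfl⟩
  obtain ⟨n, hn, a, ha, b, hb, hab⟩ := span_to_monoid hH.2.1 hH.2.2.1 hg
  rw [← iov_nsmul, ← map_add] at hab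
  have h2 : n • g + b = a := hι hab
  have h3 : n • g ∈ H := by
    have hngM : n • g ∈ M := AddSubmonoid.nsmul_mem M (hG.1 hgG) n
    have := hH.2.2.2 _ hngM _ (hH.1 hb) (h2 ▸ ha)
    exact this.1
  exact hgH (face_nsmul_reflect hH (hG.1 hgG) hn h3)


end Faces
section Fin
variable {M : AddSubmonoid Λ} {T : Finset Λ} {F G : Set Λ}

theorem claim1 (hι : Function.Injective (iov (Λ := Λ)))
    (hT : AddSubmonoid.closure (T : Set Λ) = M)
    (hF : IsFace M F) (hG : IsFace M G) (hFG : F ⊆ G) {g₀ : Λ}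
    (hg₀G : g₀ ∈ G) (hg₀F : g₀ ∉ F) :
    ∃ ℓ : (ℚ ⊗[ℤ] Λ) →ₗ[ℚ] ℚ, (∀ x ∈ G, 0 ≤ ℓ (iov x)) ∧ (∀ x ∈ F, ℓ (iov x) = 0) ∧
      0 < ℓ (iov g₀) := by
  classical
  set lG : List Λ := (T.filter (fun t => t ∈ G)).toList with hlG
  set lF : List Λ := (T.filter (fun t => t ∈ F)).toList with hlF
  have hlGmem : ∀ y, y ∈ lG ↔ y ∈ T ∧ y ∈ G := by
    intro y; rw [hlG, Finset.mem_toList, Finset.mem_filter]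
  have hlFmem : ∀ y, y ∈ lF ↔ y ∈ T ∧ y ∈ F := by
    intro y; rw [hlF, Finset.mem_toList, Finset.mem_filter]
  set m := lG.length
  set n := lF.length
  set gfun : Fin (m + n) → ℚ ⊗[ℤ] Λ :=
    Fin.append (fun i => iov (lG.get i)) (fun j => - iov (lF.get j)) with hgfun
  have hnotcone : ¬ ∃ c : Fin (m + n) → ℚ, (∀ i, 0 ≤ c i) ∧
      - iov g₀ = ∑ i, c i • gfun i := by
    rintro ⟨c, hc, hrep⟩
    obtain ⟨N, hN, k, hk⟩ := denom c hc
    set uΛ : Λ := ∑ i : Fin m, k (Fin.castAdd n i) • lG.get i with huΛ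
    set wΛ : Λ := ∑ j : Fin n, k (Fin.natAdd m j) • lF.get j with hwΛ
    have hiovu : iov uΛ = ∑ i : Fin m, (k (Fin.castAdd n i) : ℚ) • iov (lG.get i) := by
      rw [huΛ, map_sum]
      exact Finset.sum_congr rfl fun i _ => iov_nsmul _ _
    have hiovw : iov wΛ = ∑ j : Fin n, (k (Fin.natAdd m j) : ℚ) • iov (lF.get j) := by
      rw [hwΛ, map_sum]
      exact Finset.sum_congr rfl fun j _ => iov_nsmul _ _
    have hNrep : (N : ℚ) • (- iov g₀) = iov uΛ - iov wΛ := by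
      rw [hrep, Finset.smul_sum, hiovu, hiovw]
      rw [Fin.sum_univ_add]
      congr 1
      · apply Finset.sum_congr rfl
        intro i _
        rw [smul_smul, ← hk, hgfun, Fin.append_left]
      · rw [← Finset.sum_neg_distrib]
        apply Finset.sum_congr rfl
        intro j _
        rw [smul_smul, ← hk, hgfun, Fin.append_right, smul_neg]
    have hEq : wΛ = uΛ + N • g₀ := by
      apply hι
      rw [map_add, iov_nsmul]
      have : iov wΛ = iov uΛ + (N : ℚ) • iov g₀ := by
        rw [smul_neg] at hNrep
        rw [eq_add_of_sub_eq hNrep.symm]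
        abel
      rw [this]
    have huM : uΛ ∈ M := by
      apply AddSubmonoid.sum_mem
      intro i _
      have : lG.get i ∈ G := ((hlGmem _).mp (by exact List.get_mem lG i)).2
      exact AddSubmonoid.nsmul_mem M (hG.1 this) _
    have hwF : wΛ ∈ F := by
      rw [hwΛ]
      apply Finset.sum_induction _ (fun z => z ∈ F) (fun a b ha hb => hF.2.2.1 a ha b hb) hF.2.1
      intro j _
      exact face_nsmul_mem hF ((hlFmem _).mp (by exact List.get_mem lF j)).2 _
    have hNg₀ : N • g₀ ∈ F := by
      rw [hEq] at hwF
      exact (hF.2.2.2 _ huM _ (AddSubmonoid.nsmul_mem M (hG.1 hg₀G) N) hwF).2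
    exact hg₀F (face_nsmul_reflect hF (hG.1 hg₀G) hN hNg₀)
  obtain ⟨ℓ, hℓnn, hℓv⟩ := farkas (m + n) gfun (- iov g₀) hnotcone
  have hgenG : ∀ t ∈ (T : Set Λ), t ∈ G → 0 ≤ ℓ (iov t) := by
    intro t htT htG
    obtain ⟨i, hi⟩ := List.mem_iff_get.mp ((hlGmem t).mpr ⟨htT, htG⟩)
    have := hℓnn (Fin.castAdd n i)
    rw [hgfun, Fin.append_left, hi] at this
    exact this
  have hgenF : ∀ t ∈ (T : Set Λ), t ∈ F → ℓ (iov t) = 0 := by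
    intro t htT htF
    obtain ⟨j, hj⟩ := List.mem_iff_get.mp ((hlFmem t).mpr ⟨htT, htF⟩)
    have h1 := hℓnn (Fin.natAdd m j)
    rw [hgfun, Fin.append_right, hj, map_neg] at h1
    have h2 := hgenG t htT (hFG htF)
    linarith
  refine ⟨ℓ, fun x hx => face_eval_nonneg hT hG ℓ hgenG hx,
    fun x hx => face_eval_zero hT hF ℓ hgenF hx, ?_⟩
  rw [map_neg] at hℓv
  linarith

theorem perturb (hι : Function.Injective (iov (Λ := Λ)))
    [FiniteDimensional ℚ (ℚ ⊗[ℤ] Λ)]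
    (hT : AddSubmonoid.closure (T : Set Λ) = M) (hG : IsFace M G)
    (ℓ : (ℚ ⊗[ℤ] Λ) →ₗ[ℚ] ℚ)
    (h1 : ∀ x ∈ G, 0 ≤ ℓ (iov x)) (h3 : ∃ g ∈ G, 0 < ℓ (iov g))
    (hlow : Module.finrank ℚ (Submodule.span ℚ (iov '' {x ∈ G | ℓ (iov x) = 0})) + 2 ≤
      Module.finrank ℚ (Submodule.span ℚ (iov '' G))) :
    ∃ ℓ' : (ℚ ⊗[ℤ] Λ) →ₗ[ℚ] ℚ, (∀ x ∈ G, 0 ≤ ℓ' (iov x)) ∧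
      ({x ∈ G | ℓ (iov x) = 0} ⊆ {x ∈ G | ℓ' (iov x) = 0}) ∧
      (∃ g ∈ G, 0 < ℓ' (iov g)) ∧
      Module.finrank ℚ (Submodule.span ℚ (iov '' {x ∈ G | ℓ (iov x) = 0})) <
        Module.finrank ℚ (Submodule.span ℚ (iov '' {x ∈ G | ℓ' (iov x) = 0})) := by
  classical
  set H : Set Λ := {x ∈ G | ℓ (iov x) = 0} with hH
  set SG := Submodule.span ℚ (iov '' G) with hSG
  set SH := Submodule.span ℚ (iov '' H) with hSH
  have hSHle : SH ≤ SG := Submodule.span_mono (Set.image_mono (fun x hx => hx.1))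
  have hSHker : ∀ v ∈ SH, ℓ v = 0 := by
    intro v hv
    have : SH ≤ LinearMap.ker ℓ := by
      rw [hSH, Submodule.span_le]
      rintro _ ⟨x, hx, rfl⟩
      exact hx.2
    exact this hv
  obtain ⟨g₁, hg₁G, hg₁pos⟩ := h3
  have hg₁SG : iov g₁ ∈ SG := Submodule.subset_span ⟨g₁, hg₁G, rfl⟩
  set r : SG →ₗ[ℚ] ℚ := ℓ.comp SG.subtype with hr
  have hrtop : LinearMap.range r = ⊤ := by
    rw [Submodule.eq_top_iff']
    intro q
    refine ⟨(q / ℓ (iov g₁)) • ⟨iov g₁, hg₁SG⟩, ?_⟩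
    show ℓ ((q / ℓ (iov g₁)) • iov g₁) = q
    rw [map_smul, smul_eq_mul, div_mul_cancel₀ _ (ne_of_gt hg₁pos)]
  have hkerrank : Module.finrank ℚ (LinearMap.ker r) + 1 = Module.finrank ℚ SG := by
    have := LinearMap.finrank_range_add_finrank_ker r
    rw [hrtop, finrank_top] at this
    simp only [Module.finrank_self] at this
    omega
  obtain ⟨w₀, hw₀ker, hw₀SH⟩ : ∃ w₀ : SG, w₀ ∈ LinearMap.ker r ∧ (w₀ : ℚ ⊗[ℤ] Λ) ∉ SH := by
    by_contra hcon
    push_neg at hcon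
    have hsub : LinearMap.ker r ≤ Submodule.comap SG.subtype SH := by
      intro u hu
      exact hcon u hu
    have hle := Submodule.finrank_mono hsub
    have heq : Module.finrank ℚ (Submodule.comap SG.subtype SH) = Module.finrank ℚ SH :=
      (Submodule.comapSubtypeEquivOfLe hSHle).finrank_eq
    omega
  set w : ℚ ⊗[ℤ] Λ := (w₀ : ℚ ⊗[ℤ] Λ) with hw
  have hwSG : w ∈ SG := w₀.2
  have hℓw : ℓ w = 0 := hw₀ker
  obtain ⟨ℓ₁, hℓ₁SH, hℓ₁w⟩ := exists_dual_vanish SH hw₀SH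
  set P : Finset Λ := T.filter (fun t => t ∈ G ∧ 0 < ℓ (iov t)) with hP
  have hiovH : ∀ t ∈ (T : Set Λ), t ∈ G → ℓ (iov t) = 0 → iov t ∈ SH := by
    intro t _ htG ht0
    exact Submodule.subset_span ⟨t, ⟨htG, ht0⟩, rfl⟩
  obtain ⟨t₀, ht₀P, ht₀ne⟩ : ∃ t₀ ∈ P, ℓ₁ (iov t₀) ≠ 0 := by
    by_contra hcon
    push_neg at hcon
    have hvanish : ∀ v ∈ Submodule.span ℚ (iov '' ((T : Set Λ) ∩ G)), ℓ₁ v = 0 := by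
      intro v hv
      have : Submodule.span ℚ (iov '' ((T : Set Λ) ∩ G)) ≤ LinearMap.ker ℓ₁ := by
        rw [Submodule.span_le]
        rintro _ ⟨t, ⟨htT, htG⟩, rfl⟩
        rcases (h1 t htG).eq_or_lt with h0 | hpos
        · exact hℓ₁SH _ (hiovH t htT htG (by linarith))
        · have htP : t ∈ P := by
            rw [hP, Finset.mem_filter]
            exact ⟨htT, htG, hpos⟩
          exact hcon t htP
      exact this hv
    have hwspan : w ∈ Submodule.span ℚ (iov '' ((T : Set Λ) ∩ G)) := by
      rw [← face_span_gens hT hG]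
      exact hwSG
    rw [hvanish w hwspan] at hℓ₁w
    exact one_ne_zero hℓ₁w.symm
  have ht₀G : t₀ ∈ G := (Finset.mem_filter.mp ht₀P).2.1
  have ht₀pos : 0 < ℓ (iov t₀) := (Finset.mem_filter.mp ht₀P).2.2
  -- pick sign
  obtain ⟨ℓ₂, hℓ₂SH, hℓ₂t₀, hℓ₂w⟩ :
      ∃ ℓ₂ : (ℚ ⊗[ℤ] Λ) →ₗ[ℚ] ℚ, (∀ v ∈ SH, ℓ₂ v = 0) ∧ ℓ₂ (iov t₀) < 0 ∧ ℓ₂ w ≠ 0 := by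
    rcases lt_or_gt_of_ne ht₀ne with hneg | hpos
    · exact ⟨ℓ₁, hℓ₁SH, hneg, by rw [hℓ₁w]; exact one_ne_zero⟩
    · refine ⟨-ℓ₁, fun v hv => by simp [hℓ₁SH v hv], by simpa using hpos, ?_⟩
      simp [hℓ₁w]
  set Pneg : Finset Λ := P.filter (fun t => ℓ₂ (iov t) < 0) with hPneg
  have hPnegne : Pneg.Nonempty := ⟨t₀, by rw [hPneg, Finset.mem_filter]; exact ⟨ht₀P, hℓ₂t₀⟩⟩
  obtain ⟨ts, htsPneg, htsmin⟩ :=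
    Finset.exists_min_image Pneg (fun t => ℓ (iov t) / (- ℓ₂ (iov t))) hPnegne
  have htsP : ts ∈ P := (Finset.mem_filter.mp htsPneg).1
  have htsG : ts ∈ G := (Finset.mem_filter.mp htsP).2.1
  have htspos : 0 < ℓ (iov ts) := (Finset.mem_filter.mp htsP).2.2
  have htsneg : ℓ₂ (iov ts) < 0 := (Finset.mem_filter.mp htsPneg).2
  set ρ : ℚ := ℓ (iov ts) / (- ℓ₂ (iov ts)) with hρ
  have hρpos : 0 < ρ := div_pos htspos (by linarith)
  set ℓ' := ℓ + ρ • ℓ₂ with hℓ'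
  have hℓ'apply : ∀ v, ℓ' v = ℓ v + ρ * ℓ₂ v := fun v => rfl
  have hgen' : ∀ t ∈ (T : Set Λ), t ∈ G → 0 ≤ ℓ' (iov t) := by
    intro t htT htG
    rw [hℓ'apply]
    rcases (h1 t htG).eq_or_lt with h0 | hpos
    · have hz : ℓ (iov t) = 0 := by linarith
      rw [hz, hℓ₂SH _ (hiovH t htT htG hz)]
      simp
    · have htP : t ∈ P := by rw [hP, Finset.mem_filter]; exact ⟨htT, htG, hpos⟩
      rcases le_or_gt 0 (ℓ₂ (iov t)) with hnn | hneg
      · have : 0 ≤ ρ * ℓ₂ (iov t) := mul_nonneg hρpos.le hnn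
        linarith
      · have htPneg : t ∈ Pneg := by rw [hPneg, Finset.mem_filter]; exact ⟨htP, hneg⟩
        have hmin := htsmin t htPneg
        have h2 : ρ * (- ℓ₂ (iov t)) ≤ ℓ (iov t) := by
          rw [← le_div_iff₀ (by linarith : (0:ℚ) < - ℓ₂ (iov t))]
          exact hmin
        linarith
  have h1' : ∀ x ∈ G, 0 ≤ ℓ' (iov x) := fun x hx => face_eval_nonneg hT hG ℓ' hgen' hx
  have hHsub : H ⊆ {x ∈ G | ℓ' (iov x) = 0} := by
    rintro x ⟨hxG, hx0⟩
    have hxSH : iov x ∈ SH := Submodule.subset_span ⟨x, ⟨hxG, hx0⟩, rfl⟩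
    refine ⟨hxG, ?_⟩
    rw [hℓ'apply, hx0, hℓ₂SH _ hxSH]
    ring
  have htsH' : ts ∈ {x ∈ G | ℓ' (iov x) = 0} := by
    refine ⟨htsG, ?_⟩
    have hne2 : ℓ₂ (iov ts) ≠ 0 := ne_of_lt htsneg
    have hmul : ρ * ℓ₂ (iov ts) = - ℓ (iov ts) := by
      rw [hρ, div_neg, neg_mul, div_mul_cancel₀ _ hne2]
    rw [hℓ'apply, hmul]
    ring
  have htsnotSH : iov ts ∉ SH := by
    intro hmem
    rw [hSHker _ hmem] at htspos
    exact lt_irrefl 0 htspos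
  have hranklt : Module.finrank ℚ SH <
      Module.finrank ℚ (Submodule.span ℚ (iov '' {x ∈ G | ℓ' (iov x) = 0})) := by
    apply Submodule.finrank_lt_finrank_of_lt
    rw [lt_iff_le_and_ne]
    constructor
    · exact Submodule.span_mono (Set.image_mono hHsub)
    · intro heq
      apply htsnotSH
      rw [heq]
      exact Submodule.subset_span ⟨ts, htsH', rfl⟩
  have hg' : ∃ g ∈ G, 0 < ℓ' (iov g) := by
    by_contra hcon
    push_neg at hcon
    have hzero : ∀ t ∈ (T : Set Λ), t ∈ G → ℓ' (iov t) = 0 := by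
      intro t htT htG
      exact le_antisymm (hcon t htG) (hgen' t htT htG)
    have hvanish : ∀ v ∈ SG, ℓ' v = 0 := by
      intro v hv
      rw [hSG, face_span_gens hT hG] at hv
      have : Submodule.span ℚ (iov '' ((T : Set Λ) ∩ G)) ≤ LinearMap.ker ℓ' := by
        rw [Submodule.span_le]
        rintro _ ⟨t, ⟨htT, htG⟩, rfl⟩
        exact hzero t htT htG
      exact this hv
    have := hvanish w hwSG
    rw [hℓ'apply, hℓw, zero_add] at this
    exact hℓ₂w (by
      have := mul_eq_zero.mp this
      rcases this with h | h
      · exact absurd h (ne_of_gt hρpos)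
      · exact h)
  exact ⟨ℓ', h1', hHsub, hg', hranklt⟩

theorem facet (hι : Function.Injective (iov (Λ := Λ)))
    [FiniteDimensional ℚ (ℚ ⊗[ℤ] Λ)]
    (hT : AddSubmonoid.closure (T : Set Λ) = M)
    (hF : IsFace M F) (hG : IsFace M G) (hFG : F ⊆ G) (hne : F ≠ G) :
    ∃ H : Set Λ, IsFace M H ∧ F ⊆ H ∧ H ⊆ G ∧ H ≠ G ∧
      Module.finrank ℚ (Submodule.span ℚ (iov '' H)) + 1 =
        Module.finrank ℚ (Submodule.span ℚ (iov '' G)) := by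
  obtain ⟨g₀, hg₀G, hg₀F⟩ : ∃ g₀, g₀ ∈ G ∧ g₀ ∉ F := by
    by_contra hcon
    push_neg at hcon
    exact hne (le_antisymm hFG hcon)
  obtain ⟨ℓ₀, hℓ₀nn, hℓ₀F, hℓ₀g₀⟩ := claim1 hι hT hF hG hFG hg₀G hg₀F
  have aux : ∀ d : ℕ, ∀ ℓ : (ℚ ⊗[ℤ] Λ) →ₗ[ℚ] ℚ,
      (∀ x ∈ G, 0 ≤ ℓ (iov x)) → (∀ x ∈ F, ℓ (iov x) = 0) → (∃ g ∈ G, 0 < ℓ (iov g)) →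
      Module.finrank ℚ (Submodule.span ℚ (iov '' G)) ≤
        Module.finrank ℚ (Submodule.span ℚ (iov '' {x ∈ G | ℓ (iov x) = 0})) + 1 + d →
      ∃ H : Set Λ, IsFace M H ∧ F ⊆ H ∧ H ⊆ G ∧ H ≠ G ∧
        Module.finrank ℚ (Submodule.span ℚ (iov '' H)) + 1 =
          Module.finrank ℚ (Submodule.span ℚ (iov '' G)) := by
    intro d
    induction d with
    | zero =>
        intro ℓ hnn hzF ⟨g, hgG, hgpos⟩ hbound
        set H := {x ∈ G | ℓ (iov x) = 0} with hHdef
        have hHface : IsFace M H := kernel_face hG ℓ hnn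
        have hHG : H ⊆ G := fun x hx => hx.1
        have hHne : H ≠ G := by
          intro heq
          have : g ∈ H := heq ▸ hgG
          rw [hHdef] at this
          exact hgpos.ne' this.2
        have hstrict := span_strict hι hHface hG hHG hHne
        refine ⟨H, hHface, ?_, hHG, hHne, by omega⟩
        intro x hx
        exact ⟨hFG hx, hzF x hx⟩
    | succ d ih =>
        intro ℓ hnn hzF hpos hbound
        set H := {x ∈ G | ℓ (iov x) = 0} with hHdef
        have hHface : IsFace M H := kernel_face hG ℓ hnn
        have hHG : H ⊆ G := fun x hx => hx.1
        obtain ⟨g, hgG, hgpos⟩ := hpos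
        have hHne : H ≠ G := by
          intro heq
          have : g ∈ H := heq ▸ hgG
          rw [hHdef] at this
          exact hgpos.ne' this.2
        have hstrict := span_strict hι hHface hG hHG hHne
        by_cases hcase : Module.finrank ℚ (Submodule.span ℚ (iov '' H)) + 1 =
            Module.finrank ℚ (Submodule.span ℚ (iov '' G))
        · refine ⟨H, hHface, ?_, hHG, hHne, hcase⟩
          intro x hx
          exact ⟨hFG hx, hzF x hx⟩
        · have hlow : Module.finrank ℚ (Submodule.span ℚ (iov '' H)) + 2 ≤
              Module.finrank ℚ (Submodule.span ℚ (iov '' G)) := by omega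
          obtain ⟨ℓ', h1', hsub', hg', hlt'⟩ :=
            perturb hι hT hG ℓ hnn ⟨g, hgG, hgpos⟩ hlow
          apply ih ℓ' h1'
          · intro x hx
            exact (hsub' ⟨hFG hx, hzF x hx⟩).2
          · exact hg'
          · -- new bound
            set H' := {x ∈ G | ℓ' (iov x) = 0} with hH'def
            have hH'face : IsFace M H' := kernel_face hG ℓ' h1'
            have hH'G : H' ⊆ G := fun x hx => hx.1
            obtain ⟨g', hg'G, hg'pos⟩ := hg'
            have hH'ne : H' ≠ G := by
              intro heq
              have : g' ∈ H' := heq ▸ hg'G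
              rw [hH'def] at this
              exact hg'pos.ne' this.2
            have h5 := span_strict hι hH'face hG hH'G hH'ne
            have hlt2 : Module.finrank ℚ (Submodule.span ℚ (iov '' H)) <
                Module.finrank ℚ (Submodule.span ℚ (iov '' H')) := hlt'
            omega
  exact aux (Module.finrank ℚ (Submodule.span ℚ (iov '' G))) ℓ₀ hℓ₀nn hℓ₀F
    ⟨g₀, hg₀G, hℓ₀g₀⟩ (by omega)

theorem fin_chain_bound : ∀ (k : ℕ) (f : Fin (k + 1) → ℕ), StrictMono f →
    f 0 + k ≤ f (Fin.last k) := by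
  intro k
  induction k with
  | zero => intro f _; simp
  | succ k ih =>
      intro f hf
      have h1 := ih (fun i => f i.castSucc) (fun i j hij => hf (by simpa using hij))
      have h2 : f ((Fin.last k).castSucc) < f (Fin.last (k + 1)) := by
        apply hf
        rw [Fin.lt_def]
        simp
      have h0 : f (0 : Fin (k + 2)) = f ((0 : Fin (k+1)).castSucc) := by
        rw [Fin.castSucc_zero]
      omega

theorem chain_exists (hι : Function.Injective (iov (Λ := Λ)))
    [FiniteDimensional ℚ (ℚ ⊗[ℤ] Λ)]
    (hT : AddSubmonoid.closure (T : Set Λ) = M) :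
    ∀ (e : ℕ) (F G : Set Λ), IsFace M F → IsFace M G → F ⊆ G →
    Module.finrank ℚ (Submodule.span ℚ (iov '' G)) =
      Module.finrank ℚ (Submodule.span ℚ (iov '' F)) + e →
    ∃ c : Fin (e + 1) → Set Λ, (∀ i, IsFace M (c i)) ∧ StrictMono c ∧
      c 0 = F ∧ c (Fin.last e) = G := by
  intro e
  induction e with
  | zero =>
      intro F G hF hG hFG hrk
      have hFG' : F = G := by
        by_contra hne
        have := span_strict hι hF hG hFG hne
        omega
      refine ⟨fun _ => F, fun _ => hF, ?_, rfl, hFG'⟩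
      intro a b hab
      have ha := a.2
      have hb := b.2
      exact absurd (Fin.ext (by omega : a.1 = b.1)) (ne_of_lt hab)
  | succ e ih =>
      intro F G hF hG hFG hrk
      have hne : F ≠ G := by
        intro heq
        rw [heq] at hrk
        omega
      obtain ⟨H, hHface, hFH, hHG, hHne, hHrk⟩ := facet hι hT hF hG hFG hne
      have hrkH : Module.finrank ℚ (Submodule.span ℚ (iov '' H)) =
          Module.finrank ℚ (Submodule.span ℚ (iov '' F)) + e := by
        have hle : Module.finrank ℚ (Submodule.span ℚ (iov '' F)) ≤
            Module.finrank ℚ (Submodule.span ℚ (iov '' H)) :=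
          Submodule.finrank_mono (Submodule.span_mono (Set.image_mono hFH))
        omega
      obtain ⟨c', hc'face, hc'mono, hc'0, hc'last⟩ := ih F H hF hHface hFH hrkH
      refine ⟨Fin.snoc c' G, ?_, ?_, ?_, ?_⟩
      · intro i
        induction i using Fin.lastCases with
        | last => rw [Fin.snoc_last]; exact hG
        | cast i => rw [Fin.snoc_castSucc]; exact hc'face i
      · rw [Fin.strictMono_iff_lt_succ]
        intro i
        induction i using Fin.lastCases with
        | last =>
            rw [Fin.succ_last, Fin.snoc_last, Fin.snoc_castSucc, hc'last]
            exact lt_of_le_of_ne hHG hHne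
        | cast j =>
            rw [Fin.succ_castSucc, Fin.snoc_castSucc, Fin.snoc_castSucc]
            exact hc'mono Fin.castSucc_lt_succ
      · have : (0 : Fin (e + 2)) = (0 : Fin (e+1)).castSucc := by simp [Fin.ext_iff]
        rw [this, Fin.snoc_castSucc, hc'0]
      · rw [Fin.snoc_last]

end Fin
end S3

open S3 in
/-- Let `M` be a toric monoid and `p ⊆ M` a prime ideal.  Then
`F = M ∖ p` is a face of `M` and `height(p) = rk(M) − rk(F)`. -/
theorem statement3 (M : AddSubmonoid Λ) (hM : IsToric M)
    (p : Set Λ) (hp : IsPrimeMonIdeal M p) :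
    IsFace M ((M : Set Λ) \ p) ∧
    primeHeight M p = ((monRank M - setRank ((M : Set Λ) \ p) : ℕ) : ℕ∞) := by
  classical
  obtain ⟨hfg, hclos, htf, hsat⟩ := hM
  obtain ⟨T, hT⟩ := hfg
  have hι : Function.Injective (iov (Λ := Λ)) := iov_inj htf
  have hspanT : Submodule.span ℚ (iov '' (T : Set Λ)) = ⊤ := by
    rw [Submodule.eq_top_iff']
    intro v
    induction v using TensorProduct.induction_on with
    | zero => exact Submodule.zero_mem _
    | add x y hx hy => exact Submodule.add_mem _ hx hy
    | tmul q x =>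
        have hmon : ∀ y ∈ M, iov y ∈ Submodule.span ℚ (iov '' (T : Set Λ)) := by
          intro y hy
          rw [← hT] at hy
          induction hy using AddSubmonoid.closure_induction with
          | mem z hz => exact Submodule.subset_span ⟨z, hz, rfl⟩
          | zero => simp
          | add a b _ _ ha hb => rw [map_add]; exact Submodule.add_mem _ ha hb
        have hx : iov x ∈ Submodule.span ℚ (iov '' (T : Set Λ)) := by
          have hxtop : x ∈ AddSubgroup.closure (M : Set Λ) := by rw [hclos]; trivial
          induction hxtop using AddSubgroup.closure_induction with
          | mem y hy => exact hmon y hy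
          | zero => simp
          | add a b _ _ ha hb => rw [map_add]; exact Submodule.add_mem _ ha hb
          | neg a _ ha => rw [map_neg]; exact Submodule.neg_mem _ ha
        have hq : (q ⊗ₜ[ℤ] x : ℚ ⊗[ℤ] Λ) = q • iov x := by
          show (q ⊗ₜ[ℤ] x : ℚ ⊗[ℤ] Λ) = q • ((1 : ℚ) ⊗ₜ[ℤ] x)
          rw [TensorProduct.smul_tmul', smul_eq_mul, mul_one]
        rw [hq]
        exact Submodule.smul_mem _ _ hx
  haveI hfd : FiniteDimensional ℚ (ℚ ⊗[ℤ] Λ) := by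
    refine ⟨?_⟩
    rw [← hspanT]
    exact Submodule.fg_span (Set.Finite.image _ T.finite_toSet)
  have hFace : IsFace M ((M : Set Λ) \ p) := isFace_compl_prime hp
  refine ⟨hFace, ?_⟩
  set Fs : Set Λ := (M : Set Λ) \ p with hFs
  have hMface : IsFace M (M : Set Λ) :=
    ⟨subset_rfl, M.zero_mem, fun x hx y hy => M.add_mem hx hy, fun x hx y hy _ => ⟨hx, hy⟩⟩
  set rkM := Module.finrank ℚ (Submodule.span ℚ (iov '' (M : Set Λ))) with hrkM
  set rkF := Module.finrank ℚ (Submodule.span ℚ (iov '' Fs)) with hrkF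
  have hle : rkF ≤ rkM :=
    Submodule.finrank_mono (Submodule.span_mono (Set.image_mono (fun x hx => hx.1)))
  have h1 : monRank M = rkM := by rw [monRank]; rw [setRank_eq]
  have h2 : setRank Fs = rkF := by rw [setRank_eq]
  set d := rkM - rkF with hd
  have hdd : rkM = rkF + d := by omega
  obtain ⟨c, hcface, hcmono, hc0, hclast⟩ :=
    chain_exists hι hT d Fs (M : Set Λ) hFace hMface (fun x hx => hx.1) (by omega)
  set pc : Fin (d + 1) → Set Λ := fun i => (M : Set Λ) \ c i.rev with hpc
  have hpcprime : ∀ i, IsPrimeMonIdeal M (pc i) := fun i => compl_face_prime (hcface _)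
  have hpcmono : StrictMono pc := by
    intro i j hij
    have h1' : j.rev < i.rev := Fin.rev_lt_rev.mpr hij
    have h2' : c j.rev ⊂ c i.rev := hcmono h1'
    exact compl_ssubset (hcface j.rev).1 (hcface i.rev).1 h2'
  have hpclast : pc (Fin.last d) = p := by
    rw [hpc]
    simp only [Fin.rev_last]
    rw [hc0, hFs, compl_compl_of_subset hp.1.1]
  rw [h1, h2]
  rw [primeHeight]
  apply le_antisymm
  · apply sSup_le
    rintro n ⟨m, rfl, c', hc'p, hc'mono, hc'last⟩
    rw [Nat.cast_le]
    set Gf : Fin (m + 1) → Set Λ := fun i => (M : Set Λ) \ c' i.rev with hGf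
    have hGface : ∀ i, IsFace M (Gf i) := fun i => isFace_compl_prime (hc'p _)
    have hmono : StrictMono
        (fun i : Fin (m + 1) => Module.finrank ℚ (Submodule.span ℚ (iov '' Gf i))) := by
      intro i j hij
      have h1' : j.rev < i.rev := Fin.rev_lt_rev.mpr hij
      have h2' : c' j.rev ⊂ c' i.rev := hc'mono h1'
      have h3' : Gf i ⊂ Gf j := compl_ssubset (hc'p j.rev).1.1 (hc'p i.rev).1.1 h2'
      exact span_strict hι (hGface i) (hGface j) h3'.subset h3'.ne
    have hbound := fin_chain_bound m _ hmono
    have hG0 : Gf 0 = Fs := by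
      rw [hGf]
      simp only [Fin.rev_zero]
      rw [hc'last, hFs]
    have hGlast : Module.finrank ℚ (Submodule.span ℚ (iov '' Gf (Fin.last m))) ≤ rkM :=
      Submodule.finrank_mono (Submodule.span_mono (Set.image_mono (fun x hx => hx.1)))
    rw [hG0] at hbound
    omega
  · apply le_sSup
    exact ⟨d, rfl, pc, hpcprime, hpcmono, hpclast⟩
end

section
/- Let M be a toric monoid, p ⊂ M a prime ideal of height 1, and F = M ∖ p the corresponding facet. Then there is a group isomorphism M^gp/F^gp ≅ ℤ under which the image of M in M^gp/F^gp is mapped onto ℕ. (Here F^gp denotes the subgroup of M^gp generated by F.) -/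
open scoped TensorProduct Pointwise

variable {Λ : Type*} [AddCommGroup Λ]

section helpers
variable {G : Type*} [AddCommGroup G]

lemma st4_mem_closure_diff {S : Set G} (h0 : (0:G) ∈ S)
    (hadd : ∀ a ∈ S, ∀ b ∈ S, a + b ∈ S) {x : G} (hx : x ∈ AddSubgroup.closure S) :
    ∃ a ∈ S, ∃ b ∈ S, x = a - b := by
  refine AddSubgroup.closure_induction ?_ ?_ ?_ ?_ hx
  · exact fun y hy => ⟨y, hy, 0, h0, by simp⟩
  · exact ⟨0, h0, 0, h0, by simp⟩
  · rintro x y _ _ ⟨a, ha, b, hb, rfl⟩ ⟨c, hc, e, he, rfl⟩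
    exact ⟨a + c, hadd a ha c hc, b + e, hadd b hb e he, by abel⟩
  · rintro x _ ⟨a, ha, b, hb, rfl⟩
    exact ⟨b, hb, a, ha, by abel⟩

lemma st4_nat_mul_mem {P : Set ℤ} (h0 : (0:ℤ) ∈ P)
    (hadd : ∀ a ∈ P, ∀ b ∈ P, a + b ∈ P) :
    ∀ (k : ℕ), ∀ a ∈ P, (k:ℤ) * a ∈ P := by
  intro k
  induction k with
  | zero => intro a _; simpa using h0
  | succ n ih =>
    intro a ha
    have := hadd _ (ih a ha) a ha
    have heq : (n:ℤ) * a + a = ((n+1 : ℕ) : ℤ) * a := by push_cast; ring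
    rwa [heq] at this

lemma st4_int_nonneg (P : Set ℤ) (h0 : (0:ℤ) ∈ P)
    (hadd : ∀ a ∈ P, ∀ b ∈ P, a + b ∈ P)
    (hgen : AddSubgroup.closure P = ⊤)
    (hsat : ∀ (z : ℤ) (n : ℕ), 0 < n → (n:ℤ) * z ∈ P → z ∈ P)
    (hnonneg : ∀ x ∈ P, 0 ≤ x) :
    P = {n : ℤ | 0 ≤ n} := by
  have h1 : (1:ℤ) ∈ P := by
    have h1c : (1:ℤ) ∈ AddSubgroup.closure P := by rw [hgen]; trivial
    obtain ⟨a, ha, b, hb, hab⟩ := st4_mem_closure_diff h0 hadd h1c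
    have hbnn := hnonneg b hb
    have haval : a = 1 + b := by omega
    rcases eq_or_lt_of_le hbnn with hb0 | hbpos
    · have : a = 1 := by omega
      rwa [this] at ha
    · have hbb : (0:ℤ) < b*(b+1) := mul_pos hbpos (by linarith)
      refine hsat 1 (b*(b+1)).toNat (by omega) ?_
      have hcast : ((b*(b+1)).toNat : ℤ) * 1 = b * a := by
        rw [Int.toNat_of_nonneg hbb.le, haval, mul_one]; ring
      rw [hcast]
      have := st4_nat_mul_mem h0 hadd b.toNat a ha
      rwa [Int.toNat_of_nonneg (le_of_lt hbpos)] at this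
  ext z
  simp only [Set.mem_setOf_eq]
  constructor
  · exact hnonneg z
  · intro hz
    have := st4_nat_mul_mem h0 hadd z.toNat 1 h1
    rwa [mul_one, Int.toNat_of_nonneg hz] at this

end helpers



lemma st4_rat_clear (q : ℚ) (hq : 0 < q) (n : ℕ) (hn : 0 < n) (hdvd : q.den ∣ n) :
    ∃ m : ℕ, 0 < m ∧ (m : ℚ) = q * n := by
  obtain ⟨t, ht⟩ := hdvd
  have hqn : (q * n : ℚ) = ((q.num * t : ℤ) : ℚ) := by
    have hden : ((q.den : ℚ)) ≠ 0 := by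
      exact_mod_cast q.pos.ne'
    have key : q * (q.den : ℚ) = (q.num : ℚ) := by
      nth_rewrite 1 [← Rat.num_div_den q]
      exact div_mul_cancel₀ _ hden
    rw [ht]
    push_cast
    rw [← mul_assoc, key]
  have hpos : (0:ℚ) < ((q.num * t : ℤ) : ℚ) := by
    rw [← hqn]; positivity
  have hipos : 0 < q.num * t := by exact_mod_cast hpos
  refine ⟨(q.num * t).toNat, by omega, ?_⟩
  rw [hqn]
  exact_mod_cast Int.toNat_of_nonneg hipos.le

lemma st4_rat_span {d : ℕ} {ι : Type*} [Fintype ι] (u : ι → (Fin d → ℚ)) (b : Fin d → ℚ)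
    (h : (fun j => (b j : ℝ)) ∈ Submodule.span ℝ (Set.range fun i => (fun j => ((u i j : ℚ) : ℝ)))) :
    ∃ c : ι → ℚ, ∑ i, c i • u i = b := by
  by_contra hc
  push_neg at hc
  have hb : b ∉ Submodule.span ℚ (Set.range u) := by
    rw [Submodule.mem_span_range_iff_exists_fun]
    rintro ⟨c, hc'⟩
    exact hc c hc'
  obtain ⟨φ, hφb, hφ0⟩ := Submodule.exists_dual_map_eq_bot_of_notMem hb inferInstance
  have hφu : ∀ i, φ (u i) = 0 := by
    intro i
    have hmem : φ (u i) ∈ Submodule.map φ (Submodule.span ℚ (Set.range u)) :=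
      Submodule.mem_map_of_mem (Submodule.subset_span (Set.mem_range_self i))
    rw [hφ0] at hmem
    simpa using hmem
  set ψ : (Fin d → ℝ) →ₗ[ℝ] ℝ :=
    ∑ j, ((φ (Pi.single j 1) : ℚ) : ℝ) • LinearMap.proj j with hψdef
  have hψ : ∀ y : Fin d → ℚ, ψ (fun j => ((y j : ℚ) : ℝ)) = ((φ y : ℚ) : ℝ) := by
    intro y
    have hy : φ y = ∑ j, y j * φ (Pi.single j 1) := by
      have : y = ∑ j, y j • (Pi.single j (1:ℚ) : Fin d → ℚ) := by
        funext j'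
        simp [Finset.sum_apply, Pi.single_apply]
      conv_lhs => rw [this]
      rw [map_sum]
      simp [map_smul, smul_eq_mul]
    rw [hy]
    simp only [hψdef, LinearMap.sum_apply, LinearMap.smul_apply, LinearMap.proj_apply,
      smul_eq_mul]
    push_cast
    ring_nf
    rw [Finset.sum_congr rfl]
    intro j _
    ring
  have hker : Submodule.span ℝ (Set.range fun i => (fun j => ((u i j : ℚ) : ℝ))) ≤
      LinearMap.ker ψ := by
    rw [Submodule.span_le]
    rintro _ ⟨i, rfl⟩
    simp only [SetLike.mem_coe, LinearMap.mem_ker]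
    rw [hψ (u i), hφu i]
    norm_num
  have h0 : ψ (fun j => ((b j : ℚ) : ℝ)) = 0 := hker h
  rw [hψ b] at h0
  exact hφb (by exact_mod_cast h0)

lemma st4_sum_eq_zero {Q : Type*} [AddCommGroup Q] (N : AddSubmonoid Q)
    (hsharp : ∀ x ∈ N, ∀ y ∈ N, x + y = 0 → x = 0)
    {ι : Type*} (s : Finset ι) (f : ι → Q) (hf : ∀ i ∈ s, f i ∈ N)
    (h0 : ∑ i ∈ s, f i = 0) : ∀ i ∈ s, f i = 0 := by
  classical
  induction s using Finset.cons_induction with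
  | empty => intro i hi; exact absurd hi (Finset.notMem_empty i)
  | cons a s ha ih =>
    rw [Finset.sum_cons] at h0
    have hsN : ∑ i ∈ s, f i ∈ N := AddSubmonoid.sum_mem N fun i hi => hf i (Finset.mem_cons_of_mem hi)
    have hfa : f a = 0 := hsharp _ (hf a (Finset.mem_cons_self a s)) _ hsN h0
    have hrest : ∑ i ∈ s, f i = 0 := by rwa [hfa, zero_add] at h0
    intro i hi
    rcases Finset.mem_cons.mp hi with rfl | hi'
    · exact hfa
    · exact ih (fun j hj => hf j (Finset.mem_cons_of_mem hj)) hrest i hi'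

lemma st4_pointed {Q : Type*} [AddCommGroup Q] (N : AddSubmonoid Q)
    (htf : ∀ (x : Q) (n : ℕ), 0 < n → n • x = 0 → x = 0)
    (hsharp : ∀ x ∈ N, ∀ y ∈ N, x + y = 0 → x = 0)
    {r : ℕ} (B : Module.Basis (Fin r) ℤ Q) {ι : Type*} [Fintype ι] (gen : ι → Q)
    (hgenN : ∀ i, gen i ∈ N) (hgen0 : ∀ i, gen i ≠ 0) :
    (0 : Fin r → ℝ) ∉ convexHull ℝ (Set.range fun i => (fun j => ((B.repr (gen i)) j : ℝ))) := by
  classical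
  intro h0
  set v : ι → (Fin r → ℝ) := fun i => (fun j => ((B.repr (gen i)) j : ℝ)) with hv
  obtain ⟨ι', hfin, z, wt, hzr, hai, hwtpos, hwt1, hwts⟩ :=
    eq_pos_convex_span_of_mem_convexHull h0
  letI : Fintype ι' := hfin
  haveI : Nonempty ι' := by
    by_contra hne
    rw [not_nonempty_iff] at hne
    rw [Finset.univ_eq_empty, Finset.sum_empty] at hwt1
    exact one_ne_zero hwt1.symm
  have hk : ∀ i : ι', ∃ k : ι, v k = z i := fun i => hzr (Set.mem_range_self i)
  choose k hkv using hk
  set u : ι' → Q := fun i => gen (k i) with hu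
  set uQ : ι' → (Fin r → ℚ) := fun i => (fun j => ((B.repr (u i)) j : ℚ)) with huQ
  have hcast : ∀ i : ι', (fun j => ((uQ i j : ℚ) : ℝ)) = z i := by
    intro i
    funext j
    rw [← hkv i, hv]
    push_cast
    rfl
  set i₀ : ι' := Classical.arbitrary ι'
  -- the real affine relation
  have hmem : (fun j => (((-uQ i₀) j : ℚ) : ℝ)) ∈
      Submodule.span ℝ (Set.range fun i => (fun j => (((uQ i - uQ i₀) j : ℚ) : ℝ))) := by
    have hfun : (fun i : ι' => (fun j => (((uQ i - uQ i₀) j : ℚ) : ℝ))) =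
        fun i => z i - z i₀ := by
      funext i
      funext j
      simp only [Pi.sub_apply]
      push_cast
      rw [congrFun (hcast i) j, congrFun (hcast i₀) j]
    have hb : (fun j => (((-uQ i₀) j : ℚ) : ℝ)) = -z i₀ := by
      funext j
      simp only [Pi.neg_apply]
      push_cast
      rw [congrFun (hcast i₀) j]
    rw [hfun, hb]
    rw [Submodule.mem_span_range_iff_exists_fun]
    refine ⟨wt, ?_⟩
    have hsplit : ∀ i, wt i • (z i - z i₀) = wt i • z i - wt i • z i₀ :=
      fun i => smul_sub _ _ _
    rw [Finset.sum_congr rfl fun i _ => hsplit i, Finset.sum_sub_distrib, ← Finset.sum_smul,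
      hwts, hwt1, one_smul, zero_sub]
  obtain ⟨c, hc⟩ := st4_rat_span (fun i => uQ i - uQ i₀) (-uQ i₀) hmem
  set S : ℚ := ∑ l, c l with hS
  set μ : ι' → ℚ := Function.update c i₀ (c i₀ + (1 - S)) with hμ
  have herase : ∑ x ∈ Finset.univ \ {i₀}, c x = S - c i₀ := by
    rw [Finset.sum_sdiff_eq_sub (Finset.singleton_subset_iff.mpr (Finset.mem_univ i₀)),
      Finset.sum_singleton]
  have hμres : ∀ x, x ≠ i₀ → μ x = c x := by
    intro x hx
    rw [hμ, Function.update_of_ne hx]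
  have hμi₀ : μ i₀ = c i₀ + (1 - S) := by rw [hμ, Function.update_self]
  have hμsum : ∑ i, μ i = 1 := by
    rw [Finset.sum_eq_add_sum_sdiff_singleton_of_mem (Finset.mem_univ i₀) μ]
    have hres : ∑ x ∈ Finset.univ \ {i₀}, μ x = ∑ x ∈ Finset.univ \ {i₀}, c x :=
      Finset.sum_congr rfl fun x hx => hμres x (by simpa using (Finset.mem_sdiff.mp hx).2)
    rw [hres, herase, hμi₀]
    ring
  have hcsum : ∑ i, c i • uQ i = S • uQ i₀ - uQ i₀ := by
    have hexp : ∀ i, c i • (uQ i - uQ i₀) = c i • uQ i - c i • uQ i₀ :=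
      fun i => smul_sub _ _ _
    rw [Finset.sum_congr rfl fun i _ => hexp i, Finset.sum_sub_distrib, ← Finset.sum_smul,
      sub_eq_iff_eq_add] at hc
    rw [hc]
    abel
  have herase2 : ∑ x ∈ Finset.univ \ {i₀}, c x • uQ x =
      (∑ i, c i • uQ i) - c i₀ • uQ i₀ := by
    rw [Finset.sum_sdiff_eq_sub (Finset.singleton_subset_iff.mpr (Finset.mem_univ i₀)),
      Finset.sum_singleton]
  have hμcomb : ∑ i, μ i • uQ i = 0 := by
    rw [Finset.sum_eq_add_sum_sdiff_singleton_of_mem (Finset.mem_univ i₀) (fun i => μ i • uQ i)]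
    have hres : ∑ x ∈ Finset.univ \ {i₀}, μ x • uQ x = ∑ x ∈ Finset.univ \ {i₀}, c x • uQ x :=
      Finset.sum_congr rfl fun x hx => by
        rw [hμres x (by simpa using (Finset.mem_sdiff.mp hx).2)]
    rw [hres, herase2, hcsum, hμi₀]
    module
  -- cast to ℝ and compare with wt
  set μR : ι' → ℝ := fun i => ((μ i : ℚ) : ℝ) with hμR
  have hμRsum : ∑ i, μR i = 1 := by
    have h1 : ∑ i, μR i = ((∑ i, μ i : ℚ) : ℝ) := (Rat.cast_sum _ _).symm
    rw [h1, hμsum]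
    norm_num
  have hμRcomb : ∑ i, μR i • z i = 0 := by
    funext j
    rw [Finset.sum_apply, Pi.zero_apply]
    have hterm : ∀ i, (μR i • z i) j = ((μ i * uQ i j : ℚ) : ℝ) := by
      intro i
      rw [Pi.smul_apply, smul_eq_mul, ← congrFun (hcast i) j]
      push_cast
      ring
    rw [Finset.sum_congr rfl fun i _ => hterm i, ← Rat.cast_sum]
    have happ : ∑ i, μ i * uQ i j = 0 := by
      have h := congrFun hμcomb j
      rw [Finset.sum_apply, Pi.zero_apply] at h
      simpa [smul_eq_mul] using h
    rw [happ]
    norm_num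
  have huniq : μR = wt := by
    refine (affineIndependent_iff_eq_of_fintype_affineCombination_eq ℝ z).mp hai μR wt
      hμRsum hwt1 ?_
    rw [Finset.affineCombination_eq_linear_combination _ _ _ hμRsum,
      Finset.affineCombination_eq_linear_combination _ _ _ hwt1, hμRcomb, hwts]
  have hμpos : ∀ i, 0 < μ i := by
    intro i
    have : (0:ℝ) < μR i := by rw [huniq]; exact hwtpos i
    rwa [hμR, Rat.cast_pos] at this
  -- clear denominators
  set D : ℕ := ∏ i, (μ i).den with hD
  have hDpos : 0 < D := Finset.prod_pos fun i _ => (μ i).pos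
  have hmex : ∀ i : ι', ∃ m : ℕ, 0 < m ∧ (m : ℚ) = μ i * D := fun i =>
    st4_rat_clear (μ i) (hμpos i) D hDpos (Finset.dvd_prod_of_mem _ (Finset.mem_univ i))
  choose m hmpos hmval using hmex
  have hmsum : ∑ i, (m i : ℚ) • uQ i = 0 := by
    have hterm : ∀ i, (m i : ℚ) • uQ i = (D : ℚ) • (μ i • uQ i) := by
      intro i
      rw [hmval i, smul_smul, mul_comm]
    rw [Finset.sum_congr rfl fun i _ => hterm i, ← Finset.smul_sum, hμcomb, smul_zero]
  -- lift to Q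
  set x : Q := ∑ i, m i • u i with hx
  have hrepr : B.repr x = 0 := by
    have hco : ∀ j, ((B.repr x j : ℤ) : ℚ) = 0 := by
      intro j
      have h1 : B.repr x = ∑ i, m i • B.repr (u i) := by
        rw [hx, map_sum]
        exact Finset.sum_congr rfl fun i _ => by rw [map_nsmul]
      have h2 : B.repr x j = ∑ i, m i • (B.repr (u i) j) := by
        rw [h1, Finsupp.finset_sum_apply]
        exact Finset.sum_congr rfl fun i _ => by rw [Finsupp.smul_apply]
      have h3 : ∑ i, (m i : ℚ) * uQ i j = 0 := by
        have h := congrFun hmsum j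
        rw [Finset.sum_apply, Pi.zero_apply] at h
        simpa [smul_eq_mul] using h
      rw [h2, Int.cast_sum, ← h3]
      refine Finset.sum_congr rfl fun i _ => ?_
      have hns : m i • (B.repr (u i) j) = (m i : ℤ) * (B.repr (u i) j) := nsmul_eq_mul _ _
      rw [hns]
      push_cast
      rfl
    ext j
    exact_mod_cast hco j
  have hx0 : x = 0 := B.repr.map_eq_zero_iff.mp hrepr
  have hterm : ∀ i ∈ Finset.univ, m i • u i = 0 :=
    st4_sum_eq_zero N hsharp Finset.univ (fun i => m i • u i)
      (fun i _ => AddSubmonoid.nsmul_mem N (hgenN (k i)) (m i)) (hx ▸ hx0)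
  have : u i₀ = 0 := htf (u i₀) (m i₀) (hmpos i₀) (hterm i₀ (Finset.mem_univ i₀))
  exact hgen0 (k i₀) this



lemma st4_geom {d : ℕ} {ι : Type*} [Fintype ι] [Nonempty ι] (v : ι → (Fin d → ℝ))
    (hpt : (0 : Fin d → ℝ) ∉ convexHull ℝ (Set.range v))
    (hord : ∀ i j : ι, ∃ (c : ι → ℝ) (n : ℕ), (∀ l, 0 ≤ c l) ∧ 0 < n ∧
      (n : ℝ) • v i = v j + ∑ l, c l • v l) :
    ∃ w : Fin d → ℝ, ∀ i, ∃ t : ℝ, 0 < t ∧ v i = t • w := by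
  classical
  obtain ⟨f, u, hfK, hu0⟩ := geometric_hahn_banach_closed_point
    (convex_convexHull ℝ (Set.range v))
    (((Set.finite_range v).isCompact_convexHull ℝ).isClosed) hpt
  have hu : u < 0 := by simpa using hu0
  set g : (Fin d → ℝ) →L[ℝ] ℝ := -f with hg
  have hgpos : ∀ i, 0 < g (v i) := by
    intro i
    have := hfK (v i) (subset_convexHull ℝ _ (Set.mem_range_self i))
    simp only [hg, ContinuousLinearMap.neg_apply]
    linarith
  set a : ι → ℝ := fun i => g (v i) with ha
  set w : ι → (Fin d → ℝ) := fun i => (a i)⁻¹ • v i with hw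
  set K := convexHull ℝ (Set.range w) with hK
  have hKcomp : IsCompact K := (Set.finite_range w).isCompact_convexHull ℝ
  have hKne : K.Nonempty :=
    ⟨w (Classical.arbitrary ι), subset_convexHull _ _ (Set.mem_range_self _)⟩
  obtain ⟨e, he⟩ := hKcomp.extremePoints_nonempty hKne
  obtain ⟨i₀, hi₀⟩ : e ∈ Set.range w := extremePoints_convexHull_subset he
  have hva : ∀ i, v i = a i • w i := by
    intro i
    rw [hw]
    simp only []
    rw [smul_inv_smul₀ (ne_of_gt (hgpos i))]
  -- key claim
  have key : ∀ j, w j = e := by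
    intro j
    obtain ⟨c, n, hc, hn, hrel⟩ := hord i₀ j
    set q := ∑ l, c l • v l with hq
    have hgq : g q = ∑ l, c l * a l := by
      rw [hq, map_sum]
      refine Finset.sum_congr rfl fun l _ => ?_
      rw [map_smul]; rfl
    have hgqnn : 0 ≤ g q := by
      rw [hgq]
      exact Finset.sum_nonneg fun l _ => mul_nonneg (hc l) (hgpos l).le
    have hA : (n:ℝ) * a i₀ = a j + g q := by
      have h2 := congrArg g hrel
      rw [map_smul, map_add] at h2
      simpa [ha, smul_eq_mul] using h2
    have hnpos : (0:ℝ) < n := by exact_mod_cast hn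
    have hApos : 0 < (n:ℝ) * a i₀ := mul_pos hnpos (hgpos i₀)
    rcases eq_or_lt_of_le hgqnn with hq0 | hqpos
    · -- q = 0
      have hcz : ∀ l, c l = 0 := by
        intro l
        have hall := (Finset.sum_eq_zero_iff_of_nonneg
          (fun l _ => mul_nonneg (hc l) (hgpos l).le)).mp (by rw [← hgq, ← hq0])
        have := hall l (Finset.mem_univ l)
        rcases mul_eq_zero.mp this with h | h
        · exact h
        · exact absurd h (ne_of_gt (hgpos l))
      have hqz : q = 0 := by
        rw [hq]
        exact Finset.sum_eq_zero fun l _ => by rw [hcz l, zero_smul]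
      rw [hqz, add_zero] at hrel
      have haj : a j = (n:ℝ) * a i₀ := by rw [hA, ← hq0, add_zero]
      rw [← hi₀, hw]
      simp only []
      rw [← hrel, haj]
      rw [smul_smul]
      congr 1
      have h1 : a i₀ ≠ 0 := ne_of_gt (hgpos i₀)
      have h2 : (n:ℝ) ≠ 0 := ne_of_gt hnpos
      field_simp
    · -- q ≠ 0 case : use extreme point
      set z := (g q)⁻¹ • q with hz
      have hzK : z ∈ K := by
        have : z = Finset.univ.centerMass (fun l => c l * a l) w := by
          rw [Finset.centerMass, ← hgq]
          rw [hz, hq]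
          congr 1
          refine Finset.sum_congr rfl fun l _ => ?_
          rw [hw]
          simp only []
          rw [smul_smul]
          congr 1
          rw [mul_assoc, mul_inv_cancel₀ (ne_of_gt (hgpos l)), mul_one]
        rw [this]
        exact Finset.centerMass_mem_convexHull _
          (fun l _ => mul_nonneg (hc l) (hgpos l).le) (by rw [← hgq]; exact hqpos)
          (fun l _ => Set.mem_range_self l)
      have hwjK : w j ∈ K := subset_convexHull _ _ (Set.mem_range_self j)
      have hseg : e ∈ openSegment ℝ (w j) z := by
        refine ⟨a j / ((n:ℝ) * a i₀), g q / ((n:ℝ) * a i₀),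
          div_pos (hgpos j) hApos, div_pos hqpos hApos, ?_, ?_⟩
        · rw [← add_div, ← hA, div_self hApos.ne']
        · rw [← hi₀, hw]
          simp only []
          rw [div_eq_mul_inv, div_eq_mul_inv, mul_comm (a j), mul_comm (g q),
            mul_smul, mul_smul, hz]
          rw [← hva j, smul_inv_smul₀ (ne_of_gt hqpos)]
          rw [← smul_add, ← hrel]
          rw [smul_smul]
          congr 1
          have h1 : a i₀ ≠ 0 := ne_of_gt (hgpos i₀)
          have h2 : (n:ℝ) ≠ 0 := ne_of_gt hnpos
          field_simp
      exact he.2 hwjK hzK hseg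
  refine ⟨e, fun i => ⟨a i, hgpos i, ?_⟩⟩
  rw [hva i, key i]

theorem st4_core {Q : Type*} [AddCommGroup Q] (N : AddSubmonoid Q)
    (hfg : N.FG)
    (hgen : AddSubgroup.closure (N : Set Q) = ⊤)
    (htf : ∀ (x : Q) (n : ℕ), 0 < n → n • x = 0 → x = 0)
    (hsat : ∀ (x : Q) (n : ℕ), 0 < n → n • x ∈ N → x ∈ N)
    (hsharp : ∀ x ∈ N, ∀ y ∈ N, x + y = 0 → x = 0)
    (hunit : ∀ y ∈ N, y ≠ 0 → ∀ x ∈ N, ∃ x' ∈ N, ∃ n : ℕ, x + x' = n • y)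
    (hne : ∃ y ∈ N, y ≠ 0) :
    ∃ e : Q ≃+ ℤ, ⇑e '' (N : Set Q) = {n : ℤ | 0 ≤ n} := by
  classical
  -- generators with 0 removed
  obtain ⟨s₀, hs₀⟩ := hfg
  set s : Finset Q := s₀.erase 0 with hsdef
  have hclos : AddSubmonoid.closure (s : Set Q) = N := by
    apply le_antisymm
    · rw [← hs₀]
      exact AddSubmonoid.closure_mono (Finset.coe_subset.mpr (Finset.erase_subset _ _))
    · rw [← hs₀]
      refine AddSubmonoid.closure_le.mpr ?_
      intro x hx
      by_cases hx0 : x = 0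
      · rw [hx0]; exact AddSubmonoid.zero_mem _
      · exact AddSubmonoid.subset_closure
          (Finset.mem_coe.mpr (Finset.mem_erase.mpr ⟨hx0, hx⟩))
  set ι := {x : Q // x ∈ s}
  set gen : ι → Q := fun i => i.1 with hgendef
  have hgN : ∀ i : ι, gen i ∈ N := by
    intro i
    rw [← hclos]
    exact AddSubmonoid.subset_closure (Finset.mem_coe.mpr i.2)
  have hg0 : ∀ i : ι, gen i ≠ 0 := fun i => Finset.ne_of_mem_erase i.2
  have hcombo : ∀ x ∈ N, ∃ c : ι → ℕ, x = ∑ i, c i • gen i := by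
    intro x hx
    rw [← hclos] at hx
    refine AddSubmonoid.closure_induction ?_ ?_ ?_ hx
    · intro y hy
      refine ⟨fun i => if i = ⟨y, hy⟩ then 1 else 0, ?_⟩
      have hterm : ∀ i : ι, (if i = (⟨y, hy⟩ : ι) then (1:ℕ) else 0) • gen i
          = if i = (⟨y, hy⟩ : ι) then y else 0 := by
        intro i
        by_cases h : i = ⟨y, hy⟩
        · subst h; simp [hgendef]
        · simp [h]
      rw [Finset.sum_congr rfl fun i _ => hterm i, Finset.sum_ite_eq' Finset.univ]
      simp
    · exact ⟨0, by simp⟩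
    · rintro a b _ _ ⟨ca, hca⟩ ⟨cb, hcb⟩
      refine ⟨ca + cb, ?_⟩
      rw [hca, hcb, ← Finset.sum_add_distrib]
      exact Finset.sum_congr rfl fun i _ => by rw [Pi.add_apply, add_nsmul]
  obtain ⟨y₁, hy₁N, hy₁0⟩ := hne
  haveI : Nonempty ι := by
    by_contra hni
    rw [not_nonempty_iff] at hni
    obtain ⟨c, hc⟩ := hcombo y₁ hy₁N
    rw [Finset.univ_eq_empty, Finset.sum_empty] at hc
    exact hy₁0 hc
  haveI : Nontrivial Q := nontrivial_of_ne y₁ 0 hy₁0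
  -- module instances
  haveI hMF : Module.Finite ℤ Q := by
    rw [Module.Finite.iff_addGroup_fg]
    rw [AddGroup.fg_iff]
    refine ⟨↑s₀, ?_, s₀.finite_toSet⟩
    apply top_unique
    rw [← hgen]
    refine (AddSubgroup.closure_le _).mpr ?_
    intro x hx
    have hx' : x ∈ AddSubmonoid.closure (↑s₀ : Set Q) := by rw [hs₀]; exact hx
    have hle : AddSubmonoid.closure (↑s₀ : Set Q) ≤
        (AddSubgroup.closure (↑s₀ : Set Q)).toAddSubmonoid :=
      AddSubmonoid.closure_le.mpr fun z hz => AddSubgroup.subset_closure hz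
    exact hle hx'
  haveI hNZ : NoZeroSMulDivisors ℤ Q := by
    refine ⟨fun {c x} h => ?_⟩
    by_cases hc : c = 0
    · exact Or.inl hc
    · right
      rcases lt_or_gt_of_ne hc with h1 | h1
      · refine htf x (-c).toNat (by omega) ?_
        rw [← natCast_zsmul, Int.toNat_of_nonneg (by omega), neg_smul, h, neg_zero]
      · refine htf x c.toNat (by omega) ?_
        rw [← natCast_zsmul, Int.toNat_of_nonneg (by omega), h]
  haveI hfree : Module.Free ℤ Q := Module.free_of_finite_type_torsion_free'
  set r := Module.finrank ℤ Q with hrdef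
  set B : Module.Basis (Fin r) ℤ Q := Module.finBasis ℤ Q with hBdef
  -- the coordinate map
  set vv : Q →+ (Fin r → ℝ) :=
    { toFun := fun x => fun j => ((B.repr x) j : ℝ)
      map_zero' := by funext j; simp
      map_add' := by intro a b; funext j; simp } with hvvdef
  have hpt : (0 : Fin r → ℝ) ∉ convexHull ℝ (Set.range fun i : ι => vv (gen i)) :=
    st4_pointed N htf hsharp B gen hgN hg0
  have hvnsmul : ∀ (n : ℕ) (x : Q), vv (n • x) = (n:ℝ) • vv x := by
    intro n x
    rw [AddMonoidHom.map_nsmul, Nat.cast_smul_eq_nsmul]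
  have hord : ∀ i j : ι, ∃ (c : ι → ℝ) (n : ℕ), (∀ l, 0 ≤ c l) ∧ 0 < n ∧
      (n : ℝ) • vv (gen i) = vv (gen j) + ∑ l, c l • vv (gen l) := by
    intro i j
    obtain ⟨x', hx'N, n, hsum⟩ := hunit (gen i) (hgN i) (hg0 i) (gen j) (hgN j)
    have hnpos : 0 < n := by
      rcases Nat.eq_zero_or_pos n with h0 | h
      · rw [h0, zero_smul] at hsum
        exact absurd (hsharp _ (hgN j) _ hx'N hsum) (hg0 j)
      · exact h
    obtain ⟨c, hcval⟩ := hcombo x' hx'N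
    refine ⟨fun l => (c l : ℝ), n, fun l => by positivity, hnpos, ?_⟩
    have h1 : vv (gen j) + vv x' = (n:ℝ) • vv (gen i) := by
      rw [← map_add, hsum, hvnsmul]
    have h2 : vv x' = ∑ l, (c l : ℝ) • vv (gen l) := by
      rw [hcval, map_sum]
      exact Finset.sum_congr rfl fun l _ => hvnsmul _ _
    rw [← h2]
    exact h1.symm
  obtain ⟨w, hwprop⟩ := st4_geom (fun i : ι => vv (gen i)) hpt hord
  -- span argument : r = 1
  have hWv : ∀ i : ι, vv (gen i) ∈ Submodule.span ℝ ({w} : Set (Fin r → ℝ)) := by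
    intro i
    obtain ⟨t, _, hvi⟩ := hwprop i
    rw [hvi]
    exact Submodule.smul_mem _ t (Submodule.mem_span_singleton_self w)
  have hWall : ∀ x : Q, vv x ∈ Submodule.span ℝ ({w} : Set (Fin r → ℝ)) := by
    intro x
    have hx : x ∈ AddSubgroup.closure (N : Set Q) := by rw [hgen]; trivial
    refine AddSubgroup.closure_induction ?_ ?_ ?_ ?_ hx
    · intro y hyN
      obtain ⟨c, hcval⟩ := hcombo y hyN
      rw [hcval, map_sum]
      refine Submodule.sum_mem _ fun l _ => ?_
      rw [hvnsmul]
      exact Submodule.smul_mem _ _ (hWv l)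
    · rw [map_zero]; exact Submodule.zero_mem _
    · intro a b _ _ hia hib
      rw [map_add]; exact Submodule.add_mem _ hia hib
    · intro a _ hia
      rw [map_neg]; exact Submodule.neg_mem _ hia
  have hr1 : r ≤ 1 := by
    have htop : (⊤ : Submodule ℝ (Fin r → ℝ)) ≤ Submodule.span ℝ ({w} : Set (Fin r → ℝ)) := by
      rw [← (Pi.basisFun ℝ (Fin r)).span_eq, Submodule.span_le]
      rintro _ ⟨jj, rfl⟩
      have hbasis : (Pi.basisFun ℝ (Fin r)) jj = vv (B jj) := by
        funext j'
        rw [Pi.basisFun_apply]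
        simp only [hvvdef, AddMonoidHom.coe_mk, ZeroHom.coe_mk]
        rw [B.repr_self]
        by_cases h : j' = jj
        · subst h; simp
        · simp [Pi.single_apply, Finsupp.single_apply, h, Ne.symm h]
      rw [hbasis]
      exact hWall (B jj)
    have hspan : Submodule.span ℝ ({w} : Set (Fin r → ℝ)) = ⊤ := top_unique htop
    have hfr : Module.finrank ℝ (Fin r → ℝ) ≤ 1 := by
      rw [← finrank_top, ← hspan]
      refine (finrank_span_le_card _).trans ?_
      simp
    rwa [Module.finrank_fintype_fun_eq_card, Fintype.card_fin] at hfr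
  have hrpos : 0 < r := Module.finrank_pos
  have hreq : r = 1 := le_antisymm hr1 hrpos
  -- the isomorphism
  obtain ⟨φ⟩ : Nonempty (Q ≃+ ℤ) :=
    ⟨((B.reindex (finCongr hreq)).equivFun.trans
      (LinearEquiv.funUnique (Fin 1) ℤ ℤ)).toAddEquiv⟩
  -- transfer lemma
  have himage : ∀ (ψ : Q ≃+ ℤ), (∀ x ∈ N, 0 ≤ ψ x) → (⇑ψ '' (N : Set Q) = {n : ℤ | 0 ≤ n}) := by
    intro ψ hpos
    refine st4_int_nonneg _ ⟨0, N.zero_mem, map_zero ψ⟩ ?_ ?_ ?_ ?_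
    · rintro a ⟨xa, hxa, rfl⟩ b ⟨xb, hxb, rfl⟩
      exact ⟨xa + xb, N.add_mem hxa hxb, map_add ψ xa xb⟩
    · have hmc : AddSubgroup.closure (⇑ψ '' (N : Set Q)) =
          AddSubgroup.map ψ.toAddMonoidHom (AddSubgroup.closure (N : Set Q)) :=
        (AddMonoidHom.map_closure ψ.toAddMonoidHom (N : Set Q)).symm
      rw [hmc, hgen]
      exact AddSubgroup.map_top_of_surjective _ ψ.surjective
    · intro z n hn hznP
      obtain ⟨yz, hyzN, hyz⟩ := hznP
      have heq : yz = n • ψ.symm z := by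
        apply ψ.injective
        rw [hyz, map_nsmul, AddEquiv.apply_symm_apply, nsmul_eq_mul]
      rw [heq] at hyzN
      exact ⟨ψ.symm z, hsat _ n hn hyzN, ψ.apply_symm_apply z⟩
    · rintro x ⟨xx, hxx, rfl⟩
      exact hpos xx hxx
  by_cases hall : ∀ x ∈ N, 0 ≤ φ x
  · exact ⟨φ, himage φ hall⟩
  · push_neg at hall
    obtain ⟨x₀, hx₀N, hx₀neg⟩ := hall
    have hneg : ∀ x ∈ N, φ x ≤ 0 := by
      intro x hxN
      by_contra hpos
      push_neg at hpos
      set a : Q := (φ x₀).natAbs • x + (φ x).natAbs • x₀ with hadef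
      have ha1 : (φ x₀).natAbs • x ∈ N := AddSubmonoid.nsmul_mem N hxN _
      have ha2 : (φ x).natAbs • x₀ ∈ N := AddSubmonoid.nsmul_mem N hx₀N _
      have hφa : φ a = 0 := by
        rw [hadef, map_add, map_nsmul, map_nsmul, nsmul_eq_mul, nsmul_eq_mul]
        have e1 : (((φ x₀).natAbs : ℕ) : ℤ) = -(φ x₀) := by omega
        have e2 : (((φ x).natAbs : ℕ) : ℤ) = φ x := by omega
        rw [e1, e2]
        ring
      have ha0 : a = 0 := by
        apply φ.injective
        rw [hφa, map_zero]
      have h1 : (φ x₀).natAbs • x = 0 := hsharp _ ha1 _ ha2 ha0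
      have hx0 : x = 0 := htf x _ (by omega : 0 < (φ x₀).natAbs) h1
      rw [hx0, map_zero] at hpos
      exact lt_irrefl _ hpos
    refine ⟨φ.trans (AddEquiv.neg ℤ), himage _ fun x hx => ?_⟩
    have := hneg x hx
    simp only [AddEquiv.trans_apply, AddEquiv.neg_apply]
    omega

/-- Let `M` be a toric monoid, `p ⊂ M` a prime ideal of height `1` and
`F = M ∖ p` the corresponding facet.  Then there is a group isomorphism
`M^gp / F^gp ≅ ℤ` carrying the image of `M` onto `ℕ ⊆ ℤ`.  (Here `Λ = M^gp` and
`F^gp` is the subgroup of `Λ` generated by `F`.) -/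
theorem statement4 (M : AddSubmonoid Λ) (hM : IsToric M)
    (p : Set Λ) (hp : IsPrimeMonIdeal M p) (hht : primeHeight M p = 1) :
    ∃ e : (Λ ⧸ AddSubgroup.closure ((M : Set Λ) \ p)) ≃+ ℤ,
      (fun x : Λ => e (QuotientAddGroup.mk x)) '' (M : Set Λ) = {n : ℤ | 0 ≤ n} := by
  classical
  obtain ⟨hMfg, hMgen, hMtf, hMsat⟩ := hM
  obtain ⟨⟨hpM, hpIdeal⟩, hpneq, hpPrime⟩ := hp
  set F : Set Λ := (M : Set Λ) \ p with hF
  have hp0 : (0:Λ) ∉ p := by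
    intro h0
    apply hpneq
    apply Set.Subset.antisymm hpM
    intro m hm
    have := hpIdeal 0 h0 m hm
    rwa [zero_add] at this
  have h0F : (0:Λ) ∈ F := ⟨M.zero_mem, hp0⟩
  have hFM : F ⊆ (M : Set Λ) := Set.diff_subset
  have hFadd : ∀ a ∈ F, ∀ b ∈ F, a + b ∈ F := by
    rintro a ⟨haM, hap⟩ b ⟨hbM, hbp⟩
    refine ⟨M.add_mem haM hbM, fun habp => ?_⟩
    rcases hpPrime a haM b hbM habp with h | h
    · exact hap h
    · exact hbp h
  have hFnsmul : ∀ (n : ℕ), ∀ a ∈ F, n • a ∈ F := by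
    intro n
    induction n with
    | zero => intro a _; simpa using h0F
    | succ k ih =>
      intro a ha
      rw [succ_nsmul]
      exact hFadd _ (ih a ha) _ ha
  have hFface : ∀ x ∈ M, ∀ y ∈ M, x + y ∈ F → x ∈ F ∧ y ∈ F := by
    rintro x hx y hy ⟨hxyM, hxyp⟩
    exact ⟨⟨hx, fun hxp => hxyp (hpIdeal x hxp y hy)⟩,
      ⟨hy, fun hyp => hxyp (by rw [add_comm]; exact hpIdeal y hyp x hx)⟩⟩
  -- p is nonempty since height is 1 not 0
  have hpnonempty : p.Nonempty := by
    rcases Set.eq_empty_or_nonempty p with hpe | h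
    · exfalso
      have hle : primeHeight M p ≤ 0 := by
        apply sSup_le
        rintro n ⟨m, rfl, c, _, hcmono, hclast⟩
        rcases Nat.eq_zero_or_pos m with hm | hm
        · subst hm; norm_num
        · exfalso
          have hlt : c 0 < c (Fin.last m) := hcmono (by
            rw [Fin.lt_iff_val_lt_val]
            simpa [Fin.last] using hm)
          rw [hclast, hpe] at hlt
          exact lt_irrefl _ (lt_of_lt_of_le hlt (Set.empty_subset _))
      rw [hht] at hle
      norm_num at hle
    · exact h
  -- complement of a proper face is a prime ideal
  have hcomplprime : ∀ G : Set Λ, G ⊆ (M:Set Λ) → (0:Λ) ∈ G →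
      (∀ a ∈ G, ∀ b ∈ G, a + b ∈ G) →
      (∀ x ∈ M, ∀ y ∈ M, x + y ∈ G → x ∈ G ∧ y ∈ G) → G ≠ (M:Set Λ) →
      IsPrimeMonIdeal M ((M : Set Λ) \ G) := by
    intro G hGM hG0 hGadd hGface hGne
    refine ⟨⟨Set.diff_subset, ?_⟩, ?_, ?_⟩
    · rintro i ⟨hiM, hiG⟩ m hm
      exact ⟨M.add_mem hiM hm, fun hG => hiG (hGface i hiM m hm hG).1⟩
    · intro heq
      have h0 : (0:Λ) ∈ (M : Set Λ) \ G := by rw [heq]; exact M.zero_mem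
      exact h0.2 hG0
    · intro x hx y hy hxy
      by_contra hcon
      push_neg at hcon
      obtain ⟨hxn, hyn⟩ := hcon
      have hxG : x ∈ G := by
        by_contra h
        exact hxn ⟨hx, h⟩
      have hyG : y ∈ G := by
        by_contra h
        exact hyn ⟨hy, h⟩
      exact hxy.2 (hGadd x hxG y hyG)
  -- maximality of F
  have hmax : ∀ G : Set Λ, G ⊆ (M:Set Λ) → (0:Λ) ∈ G → (∀ a ∈ G, ∀ b ∈ G, a + b ∈ G) →
      (∀ x ∈ M, ∀ y ∈ M, x + y ∈ G → x ∈ G ∧ y ∈ G) → F ⊆ G → (∃ y0 ∈ p, y0 ∈ G) →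
      G = (M : Set Λ) := by
    rintro G hGM hG0 hGadd hGface hFG ⟨y0, hy0p, hy0G⟩
    by_contra hGne
    have hprime1 : IsPrimeMonIdeal M ((M:Set Λ) \ G) :=
      hcomplprime G hGM hG0 hGadd hGface hGne
    have hprime0 : IsPrimeMonIdeal M (∅ : Set Λ) := by
      refine ⟨⟨Set.empty_subset _, by simp⟩, ?_, by simp⟩
      intro h
      have : (0:Λ) ∈ (∅ : Set Λ) := h ▸ M.zero_mem
      exact this
    have hc1 : (∅ : Set Λ) ⊂ (M:Set Λ) \ G := by
      rw [Set.empty_ssubset]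
      obtain ⟨x, hxM, hxG⟩ : ∃ x ∈ (M : Set Λ), x ∉ G := by
        by_contra hcon
        push_neg at hcon
        exact hGne (Set.Subset.antisymm hGM hcon)
      exact ⟨x, hxM, hxG⟩
    have hc2 : (M:Set Λ) \ G ⊂ p := by
      constructor
      · rintro x ⟨hxM, hxG⟩
        by_contra hxp
        exact hxG (hFG ⟨hxM, hxp⟩)
      · intro hsub
        exact (hsub hy0p).2 hy0G
    set c : Fin 3 → Set Λ := ![∅, (M:Set Λ) \ G, p] with hcdef
    have hmem : ((2:ℕ) : ℕ∞) ∈ {n : ℕ∞ | ∃ m : ℕ, n = (m : ℕ∞) ∧ ∃ c : Fin (m + 1) → Set Λ,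
        (∀ i, IsPrimeMonIdeal M (c i)) ∧ StrictMono c ∧ c (Fin.last m) = p} := by
      refine ⟨2, rfl, c, ?_, ?_, ?_⟩
      · intro i
        fin_cases i
        · exact hprime0
        · exact hprime1
        · exact ⟨⟨hpM, hpIdeal⟩, hpneq, hpPrime⟩
      · intro i j hij
        fin_cases i <;> fin_cases j <;>
          first
            | exact absurd hij (by decide)
            | simpa [hcdef] using hc1
            | simpa [hcdef] using hc2
            | simpa [hcdef] using hc1.trans hc2
      · rfl
    have hge : ((2:ℕ):ℕ∞) ≤ primeHeight M p := le_sSup hmem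
    rw [hht] at hge
    norm_num at hge
  -- the quotient
  set H := AddSubgroup.closure ((M : Set Λ) \ p) with hHdef
  have hHdiff : ∀ x ∈ H, ∃ a ∈ F, ∃ b ∈ F, x = a - b := fun x hx =>
    st4_mem_closure_diff h0F hFadd hx
  have hFH : ∀ a ∈ F, a ∈ H := fun a ha => AddSubgroup.subset_closure ha
  have hpH : ∀ y ∈ p, y ∉ H := by
    intro y hy hyH
    obtain ⟨a, haF, b, hbF, hab⟩ := hHdiff y hyH
    have heq : y + b = a := by rw [hab]; abel
    have hyb : y + b ∈ p := hpIdeal y hy b (hFM hbF)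
    rw [heq] at hyb
    exact haF.2 hyb
  set π := QuotientAddGroup.mk' H with hπdef
  set N := AddSubmonoid.map π M with hNdef
  have hπsurj : Function.Surjective π := QuotientAddGroup.mk'_surjective H
  have hker : ∀ x : Λ, π x = 0 ↔ x ∈ H := fun x => QuotientAddGroup.eq_zero_iff x
  have hmemN : ∀ q, q ∈ N ↔ ∃ x ∈ M, π x = q := by
    intro q
    rw [hNdef]
    exact AddSubmonoid.mem_map
  -- core hypotheses
  have hfgN : N.FG := hMfg.map π
  have hgenN : AddSubgroup.closure (N : Set (Λ ⧸ H)) = ⊤ := by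
    have hNs : (N : Set (Λ ⧸ H)) = ⇑π '' (M : Set Λ) := AddSubmonoid.coe_map π M
    rw [hNs, ← AddMonoidHom.map_closure, hMgen]
    exact AddSubgroup.map_top_of_surjective _ hπsurj
  have htfQ : ∀ (q : Λ ⧸ H) (n : ℕ), 0 < n → n • q = 0 → q = 0 := by
    intro q n hn hq
    obtain ⟨x, rfl⟩ := hπsurj q
    obtain ⟨k, rfl⟩ := Nat.exists_eq_succ_of_ne_zero hn.ne'
    have hxH : (k+1) • x ∈ H := by
      rw [← hker, map_nsmul]
      exact hq
    obtain ⟨a, haF, b, hbF, hab⟩ := hHdiff _ hxH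
    have hM1 : (k+1) • (x + b) = a + k • b := by
      rw [smul_add, hab, succ_nsmul b k]
      abel
    have hxbM : x + b ∈ M := by
      refine hMsat (x + b) (k+1) (Nat.succ_pos k) ?_
      rw [hM1]
      exact M.add_mem (hFM haF) (AddSubmonoid.nsmul_mem M (hFM hbF) k)
    have hxbF : x + b ∈ F := by
      have hin : (k+1) • (x + b) ∈ F := by
        rw [hM1]
        exact hFadd _ haF _ (hFnsmul k b hbF)
      have hx' : (k+1) • (x+b) = (x+b) + k • (x+b) := by
        rw [succ_nsmul (x+b) k]; abel
      rw [hx'] at hin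
      exact (hFface _ hxbM _ (AddSubmonoid.nsmul_mem M hxbM k) hin).1
    rw [hker]
    have : x = (x + b) - b := by abel
    rw [this]
    exact AddSubgroup.sub_mem _ (hFH _ hxbF) (hFH _ hbF)
  have hsatQ : ∀ (q : Λ ⧸ H) (n : ℕ), 0 < n → n • q ∈ N → q ∈ N := by
    intro q n hn hq
    obtain ⟨x, rfl⟩ := hπsurj q
    obtain ⟨k, rfl⟩ := Nat.exists_eq_succ_of_ne_zero hn.ne'
    obtain ⟨m, hmM, hm⟩ := (hmemN _).mp hq
    have hdiff : (k+1) • x - m ∈ H := by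
      rw [← hker] at *
      rw [map_sub, map_nsmul, hm]
      simp
    obtain ⟨a, haF, b, hbF, hab⟩ := hHdiff _ hdiff
    have hM1 : (k+1) • x + b = m + a := by
      have h2 : (k+1) • x = m + ((k+1) • x - m) := by abel
      rw [h2, hab]; abel
    have hM2 : (k+1) • (x + b) = ((k+1) • x + b) + k • b := by
      rw [smul_add, succ_nsmul b k]
      abel
    have hxbM : x + b ∈ M := by
      refine hMsat (x + b) (k+1) (Nat.succ_pos k) ?_
      rw [hM2, hM1]
      exact M.add_mem (M.add_mem hmM (hFM haF)) (AddSubmonoid.nsmul_mem M (hFM hbF) k)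
    rw [hmemN]
    refine ⟨x + b, hxbM, ?_⟩
    rw [map_add, (hker b).mpr (hFH b hbF), add_zero]
  have hsharpQ : ∀ q ∈ N, ∀ q' ∈ N, q + q' = 0 → q = 0 := by
    intro q hq q' hq' hsum
    obtain ⟨m, hmM, rfl⟩ := (hmemN _).mp hq
    obtain ⟨m', hm'M, rfl⟩ := (hmemN _).mp hq'
    have hmm' : m + m' ∈ H := by
      rw [← hker, map_add]
      exact hsum
    obtain ⟨a, haF, b, hbF, hab⟩ := hHdiff _ hmm'
    have heq : m + (m' + b) = a := by
      rw [show m + (m' + b) = (m + m') + b by abel, hab]; abel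
    have hmF : m ∈ F := by
      refine (hFface m hmM (m' + b) (M.add_mem hm'M (hFM hbF)) ?_).1
      rw [heq]
      exact haF
    exact (hker m).mpr (hFH m hmF)
  have hneQ : ∃ q ∈ N, q ≠ 0 := by
    obtain ⟨y, hy⟩ := hpnonempty
    refine ⟨π y, (hmemN _).mpr ⟨y, hpM hy, rfl⟩, ?_⟩
    rw [Ne, hker]
    exact hpH y hy
  have hunitQ : ∀ q ∈ N, q ≠ 0 → ∀ q' ∈ N, ∃ q'' ∈ N, ∃ n : ℕ, q' + q'' = n • q := by
    intro q hq hq0 q' hq'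
    obtain ⟨y, hyM, rfl⟩ := (hmemN _).mp hq
    have hyp : y ∈ p := by
      by_contra hyp
      exact hq0 ((hker y).mpr (hFH y ⟨hyM, hyp⟩))
    -- the face generated by F and y
    set G : Set Λ := {m | m ∈ M ∧ ∃ m' ∈ M, ∃ f ∈ F, ∃ n : ℕ, m + m' = f + n • y} with hGdef
    have hGM : G ⊆ (M : Set Λ) := fun g hg => hg.1
    have hG0 : (0:Λ) ∈ G := ⟨M.zero_mem, 0, M.zero_mem, 0, h0F, 0, by simp⟩
    have hGadd : ∀ a ∈ G, ∀ b ∈ G, a + b ∈ G := by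
      rintro a ⟨haM, a', ha', f₁, hf₁, n₁, e₁⟩ b ⟨hbM, b', hb', f₂, hf₂, n₂, e₂⟩
      refine ⟨M.add_mem haM hbM, a' + b', M.add_mem ha' hb', f₁ + f₂,
        hFadd _ hf₁ _ hf₂, n₁ + n₂, ?_⟩
      calc a + b + (a' + b') = (a + a') + (b + b') := by abel
        _ = (f₁ + n₁ • y) + (f₂ + n₂ • y) := by rw [e₁, e₂]
        _ = f₁ + f₂ + (n₁ + n₂) • y := by rw [add_nsmul]; abel
    have hGface : ∀ x ∈ M, ∀ z ∈ M, x + z ∈ G → x ∈ G ∧ z ∈ G := by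
      rintro x hx z hz ⟨_, m', hm', f, hf, n, heq⟩
      constructor
      · refine ⟨hx, z + m', M.add_mem hz hm', f, hf, n, ?_⟩
        rw [← heq]; abel
      · refine ⟨hz, x + m', M.add_mem hx hm', f, hf, n, ?_⟩
        rw [← heq]; abel
    have hFG : F ⊆ G := fun f hf => ⟨hFM hf, 0, M.zero_mem, f, hf, 0, by simp⟩
    have hyG : y ∈ G := ⟨hyM, 0, M.zero_mem, 0, h0F, 1, by simp⟩
    have hGeq : G = (M : Set Λ) := hmax G hGM hG0 hGadd hGface hFG ⟨y, hyp, hyG⟩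
    obtain ⟨x, hxM, rfl⟩ := (hmemN _).mp hq'
    have hxG : x ∈ G := by rw [hGeq]; exact hxM
    obtain ⟨_, x', hx'M, f, hfF, n, heq⟩ := hxG
    refine ⟨π x', (hmemN _).mpr ⟨x', hx'M, rfl⟩, n, ?_⟩
    rw [← map_add, heq, map_add, map_nsmul, (hker f).mpr (hFH f hfF), zero_add]
  obtain ⟨e, he⟩ := st4_core N hfgN hgenN htfQ hsatQ hsharpQ hunitQ hneQ
  refine ⟨e, ?_⟩
  have himg : (fun x : Λ => e (QuotientAddGroup.mk x)) '' (M : Set Λ)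
      = ⇑e '' (N : Set (Λ ⧸ H)) := by
    rw [hNdef, AddSubmonoid.coe_map, ← Set.image_image]
    rfl
  rw [himg, he]
end

section
/- Let M be a sharp toric monoid and F a proper face of M (i.e. F ≠ M). Then F is the intersection of all facets of M containing F. -/
open scoped TensorProduct Pointwise

variable {Λ : Type*} [AddCommGroup Λ]

section St7Aux

open TensorProduct Submodule

variable (Λ) in
/-- The canonical `ℤ`-linear map `Λ → ℚ ⊗[ℤ] Λ`. -/
noncomputable def St7.iot : Λ →ₗ[ℤ] ℚ ⊗[ℤ] Λ := (TensorProduct.mk ℤ ℚ Λ) 1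

namespace St7

variable {M : AddSubmonoid Λ} {F : Set Λ}

lemma iot_nsmul (n : ℕ) (a : Λ) : iot Λ (n • a) = (n : ℚ) • iot Λ a := by
  rw [map_nsmul, Nat.cast_smul_eq_nsmul]

lemma iot_zsmul (n : ℤ) (a : Λ) : iot Λ (n • a) = (n : ℚ) • iot Λ a := by
  rw [map_zsmul, Int.cast_smul_eq_zsmul]

lemma span_image_closure (S : Set Λ) :
    span ℚ (iot Λ '' ((AddSubgroup.closure S : AddSubgroup Λ) : Set Λ)) =
      span ℚ (iot Λ '' S) := by
  refine le_antisymm (span_le.2 ?_) (span_mono (Set.image_mono AddSubgroup.subset_closure))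
  rintro _ ⟨x, hx, rfl⟩
  refine AddSubgroup.closure_induction (fun y hy => subset_span ⟨y, hy, rfl⟩) ?_ ?_ ?_ hx
  · simp
  · intro a b _ _ ha hb
    rw [map_add]; exact add_mem ha hb
  · intro a _ ha
    rw [map_neg]; exact neg_mem ha

/-- The inclusion of an `AddSubgroup` as a `ℤ`-linear map. -/
noncomputable def inclMap (A : AddSubgroup Λ) : A →ₗ[ℤ] Λ where
  toFun := Subtype.val
  map_add' _ _ := rfl
  map_smul' _ _ := rfl

noncomputable instance : Module.Flat ℤ ℚ := IsLocalization.flat ℚ (nonZeroDivisors ℤ)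

lemma setRank_eq (S : Set Λ) :
    setRank S = Module.finrank ℚ (span ℚ (iot Λ '' S)) := by
  rw [← span_image_closure]
  set A := AddSubgroup.closure S with hA
  have hinj : Function.Injective (inclMap A) := Subtype.val_injective
  have hθ : Function.Injective ((inclMap A).baseChange ℚ) := by
    rw [LinearMap.baseChange_eq_ltensor]
    exact Module.Flat.lTensor_preserves_injective_linearMap (M := ℚ) _ hinj
  have hrange : LinearMap.range ((inclMap A).baseChange ℚ) =
      span ℚ (iot Λ '' (A : Set Λ)) := by
    apply le_antisymm
    · rintro _ ⟨z, rfl⟩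
      induction z using TensorProduct.induction_on with
      | zero => simp
      | tmul q a =>
        have h1 : (inclMap A).baseChange ℚ (q ⊗ₜ a) = q • iot Λ (a : Λ) := by
          rw [LinearMap.baseChange_tmul]
          show q ⊗ₜ[ℤ] (a : Λ) = q • ((TensorProduct.mk ℤ ℚ Λ) 1 (a : Λ))
          rw [TensorProduct.mk_apply, TensorProduct.smul_tmul', smul_eq_mul, mul_one]
        rw [h1]
        exact smul_mem _ _ (subset_span ⟨(a : Λ), a.2, rfl⟩)
      | add u v hu hv => rw [map_add]; exact add_mem hu hv
    · rw [span_le]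
      rintro _ ⟨x, hx, rfl⟩
      refine ⟨(1 : ℚ) ⊗ₜ (⟨x, hx⟩ : A), ?_⟩
      rw [LinearMap.baseChange_tmul]
      rfl
  have e : (ℚ ⊗[ℤ] A) ≃ₗ[ℚ] span ℚ (iot Λ '' (A : Set Λ)) :=
    (LinearEquiv.ofInjective _ hθ).trans (LinearEquiv.ofEq _ _ hrange)
  exact e.finrank_eq

lemma span_range_iot : span ℚ (Set.range (iot Λ)) = ⊤ := by
  have h1 : { t : ℚ ⊗[ℤ] Λ | ∃ m n, m ⊗ₜ n = t } ⊆
      (span ℚ (Set.range (iot Λ)) : Set (ℚ ⊗[ℤ] Λ)) := by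
    rintro _ ⟨q, x, rfl⟩
    have : q ⊗ₜ[ℤ] x = q • iot Λ x := by
      show q ⊗ₜ[ℤ] x = q • ((TensorProduct.mk ℤ ℚ Λ) 1 x)
      rw [TensorProduct.mk_apply, TensorProduct.smul_tmul', smul_eq_mul, mul_one]
    rw [this]
    exact smul_mem _ _ (subset_span ⟨x, rfl⟩)
  have h2 := (Submodule.span_le
    (p := (span ℚ (Set.range (iot Λ))).restrictScalars ℤ)).2 h1
  rw [eq_top_iff]
  intro z _
  exact h2 (by convert Submodule.mem_top (x := z); exact TensorProduct.span_tmul_eq_top ℤ ℚ Λ)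

lemma nsmul_mem_face (h0 : (0 : Λ) ∈ F) (hadd : ∀ x ∈ F, ∀ y ∈ F, x + y ∈ F)
    {a : Λ} (ha : a ∈ F) (n : ℕ) : n • a ∈ F := by
  induction n with
  | zero => simpa using h0
  | succ m ih => rw [succ_nsmul]; exact hadd _ ih _ ha

lemma face_of_nsmul (hF : IsFace M F) {z : Λ} (hz : z ∈ M) {N : ℕ} (hN : 0 < N)
    (h : N • z ∈ F) : z ∈ F := by
  induction N with
  | zero => omega
  | succ n ih =>
    rcases Nat.eq_zero_or_pos n with rfl | hn
    · simpa using h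
    · have h2 : n • z + z ∈ F := by rwa [← succ_nsmul]
      exact (hF.2.2.2 _ (nsmul_mem hz n) _ hz h2).2

lemma span_denom (h0 : (0 : Λ) ∈ F) (hadd : ∀ x ∈ F, ∀ y ∈ F, x + y ∈ F)
    {v : ℚ ⊗[ℤ] Λ} (hv : v ∈ span ℚ (iot Λ '' F)) :
    ∃ N : ℕ, 0 < N ∧ ∃ a ∈ F, ∃ b ∈ F, (N : ℚ) • v = iot Λ a - iot Λ b := by
  induction hv using span_induction with
  | mem x hx =>
    obtain ⟨a, ha, rfl⟩ := hx
    exact ⟨1, one_pos, a, ha, 0, h0, by simp⟩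
  | zero => exact ⟨1, one_pos, 0, h0, 0, h0, by simp⟩
  | add x y hx hy ihx ihy =>
    obtain ⟨N1, hN1, a1, ha1, b1, hb1, e1⟩ := ihx
    obtain ⟨N2, hN2, a2, ha2, b2, hb2, e2⟩ := ihy
    refine ⟨N1 * N2, Nat.mul_pos hN1 hN2, N2 • a1 + N1 • a2,
      hadd _ (nsmul_mem_face h0 hadd ha1 N2) _ (nsmul_mem_face h0 hadd ha2 N1),
      N2 • b1 + N1 • b2,
      hadd _ (nsmul_mem_face h0 hadd hb1 N2) _ (nsmul_mem_face h0 hadd hb2 N1), ?_⟩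
    have h1 : ((N1 * N2 : ℕ) : ℚ) • (x + y)
        = (N2 : ℚ) • ((N1 : ℚ) • x) + (N1 : ℚ) • ((N2 : ℚ) • y) := by
      push_cast
      module
    rw [h1, e1, e2, map_add, map_add, iot_nsmul, iot_nsmul, iot_nsmul, iot_nsmul]
    module
  | smul q x hx ih =>
    obtain ⟨N, hN, a, ha, b, hb, e⟩ := ih
    have key : ((q.den * N : ℕ) : ℚ) • (q • x) = (q.num : ℚ) • (iot Λ a - iot Λ b) := by
      rw [← e, smul_smul, smul_smul]
      congr 1
      push_cast
      rw [mul_comm ((q.den : ℚ)) ((N : ℚ)), mul_assoc, Rat.den_mul_eq_num, mul_comm]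
    rcases le_or_gt 0 q.num with hq | hq
    · refine ⟨q.den * N, Nat.mul_pos q.pos hN, q.num.toNat • a,
        nsmul_mem_face h0 hadd ha _, q.num.toNat • b, nsmul_mem_face h0 hadd hb _, ?_⟩
      rw [key, iot_nsmul, iot_nsmul, ← smul_sub]
      congr 1
      rw [← Int.cast_natCast (R := ℚ), Int.toNat_of_nonneg hq]
    · refine ⟨q.den * N, Nat.mul_pos q.pos hN, (-q.num).toNat • b,
        nsmul_mem_face h0 hadd hb _, (-q.num).toNat • a, nsmul_mem_face h0 hadd ha _, ?_⟩
      rw [key, iot_nsmul, iot_nsmul, ← smul_sub]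
      have h3 : ((-q.num).toNat : ℚ) = -(q.num : ℚ) := by
        rw [← Int.cast_natCast (R := ℚ), Int.toNat_of_nonneg (by omega : (0:ℤ) ≤ -q.num),
          Int.cast_neg]
      rw [h3]
      module

lemma mem_face_of_iot_mem_span (hF : IsFace M F) (hι : Function.Injective (iot Λ))
    {z : Λ} (hz : z ∈ M) (h : iot Λ z ∈ span ℚ (iot Λ '' F)) : z ∈ F := by
  obtain ⟨N, hN, a, ha, b, hb, e⟩ := span_denom hF.2.1 hF.2.2.1 h
  have h1 : iot Λ (N • z + b) = iot Λ a := by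
    rw [map_add, iot_nsmul, e]; abel
  have h2 : N • z + b = a := hι h1
  have h3 : N • z ∈ F := (hF.2.2.2 _ (nsmul_mem hz N) b (hF.1 hb) (h2 ▸ ha)).1
  exact face_of_nsmul hF hz hN h3

lemma subgrp_top (hM : IsToric M) {T : Finset Λ} (hT : AddSubmonoid.closure (↑T : Set Λ) = M) :
    AddSubgroup.closure (↑T : Set Λ) = ⊤ := by
  rw [eq_top_iff, ← hM.2.1]
  refine (AddSubgroup.closure_le _).2 ?_
  intro m hm
  have h1 : M ≤ (AddSubgroup.closure (↑T : Set Λ)).toAddSubmonoid := by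
    rw [← hT]
    exact AddSubmonoid.closure_le.2 AddSubgroup.subset_closure
  exact h1 hm

lemma toric_finite (hM : IsToric M) : Module.Finite ℤ Λ := by
  rw [Module.Finite.iff_addGroup_fg]
  obtain ⟨T, hT⟩ := hM.1
  exact ⟨⟨T, subgrp_top hM hT⟩⟩

lemma toric_nzsmul (hM : IsToric M) : NoZeroSMulDivisors ℤ Λ := by
  constructor
  intro c x h
  by_cases hc : c = 0
  · exact Or.inl hc
  · refine Or.inr (hM.2.2.1 x c.natAbs (Int.natAbs_pos.2 hc) ?_)
    have h1 : (c.natAbs : ℤ) • x = 0 := by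
      rcases Int.natAbs_eq c with h2 | h2
      · rw [← h2]; exact h
      · rw [h2, neg_smul] at h
        exact neg_eq_zero.1 h
    rwa [natCast_zsmul] at h1

lemma span_M_top (hM : IsToric M) : span ℚ (iot Λ '' (M : Set Λ)) = ⊤ := by
  rw [← span_image_closure, hM.2.1, AddSubgroup.coe_top, Set.image_univ, span_range_iot]

lemma span_T_top (hM : IsToric M) {T : Finset Λ}
    (hT : AddSubmonoid.closure (↑T : Set Λ) = M) :
    span ℚ (iot Λ '' (↑T : Set Λ)) = ⊤ := by
  rw [← span_image_closure, subgrp_top hM hT, AddSubgroup.coe_top, Set.image_univ,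
    span_range_iot]

lemma iot_injective (hM : IsToric M) : Function.Injective (iot Λ) := by
  have h1 := toric_finite hM
  have h2 := toric_nzsmul hM
  have h3 : Module.Free ℤ Λ := Module.free_of_finite_type_torsion_free'
  let g : ℤ →ₗ[ℤ] ℚ := Algebra.linearMap ℤ ℚ
  have hg : Function.Injective g := by
    intro a b hab
    have : ((a : ℚ)) = (b : ℚ) := by simpa [g, Algebra.linearMap_apply] using hab
    exact_mod_cast this
  have hr : Function.Injective (LinearMap.rTensor Λ g) :=
    Module.Flat.rTensor_preserves_injective_linearMap g hg
  intro x y hxy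
  have h4 : ∀ z : Λ, LinearMap.rTensor Λ g ((TensorProduct.lid ℤ Λ).symm z) = iot Λ z := by
    intro z
    rw [TensorProduct.lid_symm_apply, LinearMap.rTensor_tmul]
    show _ = (TensorProduct.mk ℤ ℚ Λ) 1 z
    rw [TensorProduct.mk_apply]
    norm_num [g, Algebra.linearMap_apply]
  have h5 : (TensorProduct.lid ℤ Λ).symm x = (TensorProduct.lid ℤ Λ).symm y :=
    hr (by rw [h4, h4, hxy])
  exact (TensorProduct.lid ℤ Λ).symm.injective h5

/-- The image of `Λ` in the quotient of `ℚ ⊗ Λ` by `W`, as an additive monoid hom. -/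
noncomputable def umH (W : Submodule ℚ (ℚ ⊗[ℤ] Λ)) : Λ →+ (ℚ ⊗[ℤ] Λ) ⧸ W :=
  (W.mkQ.toAddMonoidHom).comp (iot Λ).toAddMonoidHom

lemma umH_apply (W : Submodule ℚ (ℚ ⊗[ℤ] Λ)) (t : Λ) : umH W t = W.mkQ (iot Λ t) := rfl

lemma umH_eq_zero_iff (W : Submodule ℚ (ℚ ⊗[ℤ] Λ)) (t : Λ) :
    umH W t = 0 ↔ iot Λ t ∈ W := by
  rw [umH_apply, Submodule.mkQ_apply, Submodule.Quotient.mk_eq_zero]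

lemma umH_nsmul (W : Submodule ℚ (ℚ ⊗[ℤ] Λ)) (n : ℕ) (t : Λ) :
    umH W (n • t) = (n : ℚ) • umH W t := by
  rw [umH_apply, iot_nsmul, map_smul, umH_apply]

/-- The rational cone generated by the images of a finite set `T'` in the quotient. -/
def cone (W : Submodule ℚ (ℚ ⊗[ℤ] Λ)) (T' : Finset Λ) : Set ((ℚ ⊗[ℤ] Λ) ⧸ W) :=
  {v | ∃ c : Λ → ℚ, (∀ t ∈ T', 0 ≤ c t) ∧ v = ∑ t ∈ T', c t • umH W t}

variable {W : Submodule ℚ (ℚ ⊗[ℤ] Λ)} {T' T : Finset Λ}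

lemma cone_mono (h : T' ⊆ T) : cone W T' ⊆ cone W T := by
  classical
  rintro v ⟨c, hc, rfl⟩
  refine ⟨fun t => if t ∈ T' then c t else 0, fun t _ => ?_, ?_⟩
  · dsimp only
    split
    · exact hc t ‹_›
    · exact le_refl 0
  · rw [← Finset.sum_subset h (fun t _ ht' => by dsimp only; rw [if_neg ht', zero_smul])]
    exact Finset.sum_congr rfl (fun t ht => by dsimp only; rw [if_pos ht])

lemma cone_add {v w : (ℚ ⊗[ℤ] Λ) ⧸ W} (hv : v ∈ cone W T') (hw : w ∈ cone W T') :
    v + w ∈ cone W T' := by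
  obtain ⟨c, hc, rfl⟩ := hv
  obtain ⟨d, hd, rfl⟩ := hw
  refine ⟨fun t => c t + d t, fun t ht => add_nonneg (hc t ht) (hd t ht), ?_⟩
  rw [← Finset.sum_add_distrib]
  exact Finset.sum_congr rfl (fun t _ => by rw [add_smul])

lemma cone_smul {q : ℚ} (hq : 0 ≤ q) {v : (ℚ ⊗[ℤ] Λ) ⧸ W} (hv : v ∈ cone W T') :
    q • v ∈ cone W T' := by
  obtain ⟨c, hc, rfl⟩ := hv
  refine ⟨fun t => q * c t, fun t ht => mul_nonneg hq (hc t ht), ?_⟩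
  rw [Finset.smul_sum]
  exact Finset.sum_congr rfl (fun t _ => by rw [smul_smul])

lemma zero_mem_cone : (0 : (ℚ ⊗[ℤ] Λ) ⧸ W) ∈ cone W T' :=
  ⟨fun _ => 0, fun _ _ => le_refl 0, by simp⟩

lemma umH_mem_cone {t : Λ} (ht : t ∈ T') : umH W t ∈ cone W T' := by
  classical
  refine ⟨fun s => if s = t then 1 else 0, fun s _ => by dsimp only; split <;> norm_num, ?_⟩
  have h1 : ∀ s ∈ T', (fun s => if s = t then (1 : ℚ) else 0) s • umH W s
      = if s = t then umH W s else 0 := by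
    intro s _
    dsimp only
    split <;> simp
  rw [Finset.sum_congr rfl h1, Finset.sum_ite_eq' T' t (fun s => umH W s), if_pos ht]

lemma cone_subset_span : cone W T' ⊆ (span ℚ (umH W '' (↑T' : Set Λ)) : Set _) := by
  rintro v ⟨c, _, rfl⟩
  exact Submodule.sum_mem _ (fun t ht => smul_mem _ _ (subset_span ⟨t, ht, rfl⟩))

lemma mem_cone_of_mem (hT : AddSubmonoid.closure (↑T : Set Λ) = M) {z : Λ} (hz : z ∈ M) :
    umH W z ∈ cone W T := by
  rw [← hT] at hz
  refine AddSubmonoid.closure_induction (fun y hy => umH_mem_cone hy) ?_ ?_ hz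
  · rw [map_zero]; exact zero_mem_cone
  · intro a b _ _ ha hb
    rw [map_add]; exact cone_add ha hb

lemma cone_denom (hT : AddSubmonoid.closure (↑T : Set Λ) = M) (hT'T : T' ⊆ T)
    {v : (ℚ ⊗[ℤ] Λ) ⧸ W} (hv : v ∈ cone W T') :
    ∃ k : ℕ, 0 < k ∧ ∃ m ∈ M, (k : ℚ) • v = umH W m := by
  classical
  obtain ⟨c, hc, rfl⟩ := hv
  set k := ∏ t ∈ T', (c t).den with hk
  have hkpos : 0 < k := Finset.prod_pos (fun t _ => (c t).pos)
  have key : ∀ t ∈ T', ∃ n : ℕ, ((n : ℚ)) = (k : ℚ) * c t := by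
    intro t ht
    obtain ⟨e, he⟩ := Finset.dvd_prod_of_mem (fun t => (c t).den) ht
    have hnum : 0 ≤ (c t).num := Rat.num_nonneg.2 (hc t ht)
    refine ⟨e * (c t).num.toNat, ?_⟩
    have h2 : (k : ℚ) = ((c t).den : ℚ) * e := by rw [hk, he]; push_cast; ring
    have h1 : ((c t).num.toNat : ℚ) = ((c t).num : ℚ) := by
      rw [← Int.cast_natCast (R := ℚ), Int.toNat_of_nonneg hnum]
    push_cast
    rw [h1, h2, mul_comm (((c t).den : ℚ)) ((e : ℚ)), mul_assoc, Rat.den_mul_eq_num]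
  choose! n hn using key
  refine ⟨k, hkpos, ∑ t ∈ T', n t • t, ?_, ?_⟩
  · refine sum_mem (fun t ht => nsmul_mem ?_ _)
    rw [← hT]
    exact AddSubmonoid.subset_closure (hT'T ht)
  · rw [map_sum, Finset.smul_sum]
    refine Finset.sum_congr rfl (fun t ht => ?_)
    rw [umH_nsmul, hn t ht, smul_smul]

lemma cone_pointed (hM : IsToric M) (hF : IsFace M F)
    (hT : AddSubmonoid.closure (↑T : Set Λ) = M)
    {W : Submodule ℚ (ℚ ⊗[ℤ] Λ)} (hW : W = span ℚ (iot Λ '' F))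
    {v : (ℚ ⊗[ℤ] Λ) ⧸ W}
    (h1 : v ∈ cone W T) (h2 : -v ∈ cone W T) :
    v = 0 := by
  obtain ⟨k, hk, m, hm, e1⟩ := cone_denom hT (le_refl T) h1
  obtain ⟨k', hk', m', hm', e2⟩ := cone_denom hT (le_refl T) h2
  have h3 : umH W (k' • m + k • m') = 0 := by
    rw [map_add, umH_nsmul, umH_nsmul, ← e1, ← e2]
    module
  have h4 : k' • m + k • m' ∈ F := by
    refine mem_face_of_iot_mem_span hF (iot_injective hM) ?_ ?_
    · exact add_mem (nsmul_mem hm k') (nsmul_mem hm' k)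
    · rw [← hW, ← umH_eq_zero_iff]; exact h3
  have h5 : k' • m ∈ F :=
    (hF.2.2.2 _ (nsmul_mem hm k') _ (nsmul_mem hm' k) h4).1
  have h6 : umH W (k' • m) = 0 := by
    rw [umH_eq_zero_iff, hW]
    exact subset_span ⟨_, h5, rfl⟩
  have h7 : ((k' : ℚ) * k) • v = 0 := by
    rw [← smul_smul, e1, ← umH_nsmul]
    exact h6
  have h8 : ((k' : ℚ) * k) ≠ 0 := by positivity
  exact (smul_eq_zero.1 h7).resolve_left h8

lemma full_rank_eq (hM : IsToric M) (hF : IsFace M F)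
    (h : monRank M ≤ setRank F) : F = (M : Set Λ) := by
  have h1 := toric_finite hM
  have h2 := toric_nzsmul hM
  have h3 : Module.Free ℤ Λ := Module.free_of_finite_type_torsion_free'
  have hfd : Module.Finite ℚ (ℚ ⊗[ℤ] Λ) := Module.Finite.base_change ℤ ℚ Λ
  have h4 : Module.finrank ℚ (span ℚ (iot Λ '' F)) = Module.finrank ℚ (ℚ ⊗[ℤ] Λ) := by
    refine le_antisymm (Submodule.finrank_le _) ?_
    have h5 : monRank M = Module.finrank ℚ (ℚ ⊗[ℤ] Λ) := by
      rw [monRank, setRank_eq, span_M_top hM, finrank_top]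
    rw [← h5]
    rw [setRank_eq] at h
    exact h
  have h6 : span ℚ (iot Λ '' F) = ⊤ := Submodule.eq_top_of_finrank_eq h4
  refine Set.Subset.antisymm hF.1 (fun m hm => ?_)
  exact mem_face_of_iot_mem_span hF (iot_injective hM) hm (by rw [h6]; trivial)

theorem step (hM : IsToric M) (hF : IsFace M F)
    {x : Λ} (hxM : x ∈ M) (hxF : x ∉ F) (hrk : setRank F + 2 ≤ monRank M) :
    ∃ F' : Set Λ, IsFace M F' ∧ F ⊆ F' ∧ x ∉ F' ∧ setRank F < setRank F' := by
  classical
  have hfin := toric_finite hM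
  have hnz := toric_nzsmul hM
  have hfree : Module.Free ℤ Λ := Module.free_of_finite_type_torsion_free'
  have hfd : Module.Finite ℚ (ℚ ⊗[ℤ] Λ) := Module.Finite.base_change ℤ ℚ Λ
  have hι : Function.Injective (iot Λ) := iot_injective hM
  obtain ⟨T, hT⟩ := hM.1
  set W : Submodule ℚ (ℚ ⊗[ℤ] Λ) := span ℚ (iot Λ '' F) with hW
  -- the image of x is nonzero
  have hx0 : umH W x ≠ 0 := by
    intro h
    rw [umH_eq_zero_iff] at h
    exact hxF (mem_face_of_iot_mem_span hF hι hxM h)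
  -- the quotient has dimension at least 2
  have hdim : 2 ≤ Module.finrank ℚ ((ℚ ⊗[ℤ] Λ) ⧸ W) := by
    have h1 := Submodule.finrank_quotient_add_finrank W
    have h2 : setRank F = Module.finrank ℚ W := by rw [setRank_eq]
    have h3 : monRank M = Module.finrank ℚ (ℚ ⊗[ℤ] Λ) := by
      rw [monRank, setRank_eq, span_M_top hM, finrank_top]
    omega
  -- images of T span the quotient
  have hspT : span ℚ (umH W '' (↑T : Set Λ)) = ⊤ := by
    have h1 : (umH W) '' (↑T : Set Λ) = W.mkQ '' (iot Λ '' (↑T : Set Λ)) := by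
      rw [Set.image_image]; rfl
    rw [h1, Submodule.span_image, span_T_top hM hT, Submodule.map_top, Submodule.range_mkQ]
  -- a minimal generating subset
  set 𝒮 : Finset (Finset Λ) := T.powerset.filter (fun T' => cone W T' = cone W T) with h𝒮
  have hTS : T ∈ 𝒮 := by
    rw [h𝒮, Finset.mem_filter, Finset.mem_powerset]
    exact ⟨le_refl T, rfl⟩
  obtain ⟨T₀, hT₀S, hmin⟩ := Finset.exists_min_image 𝒮 Finset.card ⟨T, hTS⟩
  have hT₀T : T₀ ⊆ T := Finset.mem_powerset.1 (Finset.mem_filter.1 hT₀S).1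
  have hT₀c : cone W T₀ = cone W T := (Finset.mem_filter.1 hT₀S).2
  -- span over T₀ is also everything
  have hspT₀ : span ℚ (umH W '' (↑T₀ : Set Λ)) = ⊤ := by
    rw [eq_top_iff, ← hspT]
    refine span_le.2 ?_
    rintro _ ⟨t, ht, rfl⟩
    have h1 : umH W t ∈ cone W T₀ := by rw [hT₀c]; exact umH_mem_cone ht
    exact cone_subset_span h1
  -- choose an extremal generator whose ray misses the image of x
  obtain ⟨t₀, ht₀, hv0, hxray⟩ :
      ∃ t₀ ∈ T₀, umH W t₀ ≠ 0 ∧ ¬ ∃ q : ℚ, 0 ≤ q ∧ umH W x = q • umH W t₀ := by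
    by_contra hcon
    push_neg at hcon
    have hsub : umH W '' (↑T₀ : Set Λ) ⊆ (span ℚ {umH W x} : Set _) := by
      rintro _ ⟨t, ht, rfl⟩
      by_cases h : umH W t = 0
      · rw [h]; exact zero_mem _
      · obtain ⟨q, hq0, hq⟩ := hcon t ht h
        have hqne : q ≠ 0 := by
          rintro rfl
          rw [zero_smul] at hq
          exact hx0 hq
        have h1 : umH W t = q⁻¹ • umH W x := by
          rw [hq, smul_smul, inv_mul_cancel₀ hqne, one_smul]
        rw [h1]
        exact smul_mem _ _ (mem_span_singleton_self _)
    have h1 : (⊤ : Submodule ℚ ((ℚ ⊗[ℤ] Λ) ⧸ W)) ≤ span ℚ {umH W x} := by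
      rw [← hspT₀]; exact span_le.2 hsub
    have h2 : Module.finrank ℚ (span ℚ {umH W x} : Submodule ℚ ((ℚ ⊗[ℤ] Λ) ⧸ W)) = 1 :=
      finrank_span_singleton hx0
    rw [top_le_iff.1 h1, finrank_top] at h2
    omega
  set v := umH W t₀ with hv
  have hpt : ∀ w, w ∈ cone W T → -w ∈ cone W T → w = 0 := fun w h1 h2 =>
    cone_pointed hM hF hT hW h1 h2
  -- extremality of the ray of t₀
  have hext : ∀ a b : (ℚ ⊗[ℤ] Λ) ⧸ W, a ∈ cone W T → b ∈ cone W T →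
      (∃ q : ℚ, 0 ≤ q ∧ a + b = q • v) → ∃ q : ℚ, 0 ≤ q ∧ a = q • v := by
    rintro a b ha hb ⟨q, hq0, hab⟩
    rcases eq_or_lt_of_le hq0 with hq | hqpos
    · -- q = 0
      have hab' : a + b = 0 := by rw [hab, ← hq, zero_smul]
      have hba : -a = b := neg_eq_of_add_eq_zero_right hab'
      have ha0 : a = 0 := hpt a ha (by rw [hba]; exact hb)
      exact ⟨0, le_refl 0, by rw [ha0, zero_smul]⟩
    · have ha1 : q⁻¹ • a ∈ cone W T₀ := by
        rw [hT₀c]; exact cone_smul (inv_nonneg.2 hq0) ha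
      have hb1 : q⁻¹ • b ∈ cone W T₀ := by
        rw [hT₀c]; exact cone_smul (inv_nonneg.2 hq0) hb
      obtain ⟨c, hc, hceq⟩ := ha1
      obtain ⟨d, hd, hdeq⟩ := hb1
      set a' := ∑ t ∈ T₀.erase t₀, c t • umH W t with ha'
      set b' := ∑ t ∈ T₀.erase t₀, d t • umH W t with hb'
      have hsplit_a : q⁻¹ • a = c t₀ • v + a' := by
        rw [hceq, ha', ← Finset.add_sum_erase _ _ ht₀]
      have hsplit_b : q⁻¹ • b = d t₀ • v + b' := by
        rw [hdeq, hb', ← Finset.add_sum_erase _ _ ht₀]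
      have ha'c : a' ∈ cone W (T₀.erase t₀) :=
        ⟨c, fun t ht => hc t (Finset.mem_of_mem_erase ht), rfl⟩
      have hb'c : b' ∈ cone W (T₀.erase t₀) :=
        ⟨d, fun t ht => hd t (Finset.mem_of_mem_erase ht), rfl⟩
      have hqv : q⁻¹ • a + q⁻¹ • b = v := by
        rw [← smul_add, hab, smul_smul, inv_mul_cancel₀ (ne_of_gt hqpos), one_smul]
      have ha2 : a' = q⁻¹ • a - c t₀ • v := by
        rw [eq_sub_iff_add_eq, add_comm]
        exact hsplit_a.symm
      have hb2 : b' = q⁻¹ • b - d t₀ • v := by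
        rw [eq_sub_iff_add_eq, add_comm]
        exact hsplit_b.symm
      have hkey : a' + b' = (1 - (c t₀ + d t₀)) • v := by
        rw [ha2, hb2, ← hqv]
        module
      rcases lt_or_ge (c t₀ + d t₀) 1 with hlt | hge
      · -- contradiction with minimality
        exfalso
        have hpos : (0 : ℚ) < 1 - (c t₀ + d t₀) := by linarith
        have hvmem : v = (1 - (c t₀ + d t₀))⁻¹ • (a' + b') := by
          rw [hkey, smul_smul, inv_mul_cancel₀ (ne_of_gt hpos), one_smul]
        have hvc : v ∈ cone W (T₀.erase t₀) := by
          rw [hvmem]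
          exact cone_smul (le_of_lt (inv_pos.2 hpos)) (cone_add ha'c hb'c)
        have hsub : cone W T₀ ⊆ cone W (T₀.erase t₀) := by
          rintro w ⟨e, he, rfl⟩
          have h6 : ∑ t ∈ T₀, e t • umH W t = e t₀ • v + ∑ t ∈ T₀.erase t₀, e t • umH W t :=
            (Finset.add_sum_erase _ _ ht₀).symm
          rw [h6]
          exact cone_add (cone_smul (he t₀ ht₀) hvc)
            ⟨e, fun t ht => he t (Finset.mem_of_mem_erase ht), rfl⟩
        have heq : cone W (T₀.erase t₀) = cone W T := by
          refine Set.Subset.antisymm ?_ ?_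
          · exact subset_trans (cone_mono (Finset.erase_subset _ _)) (le_of_eq hT₀c)
          · rw [← hT₀c]; exact hsub
        have hmem : T₀.erase t₀ ∈ 𝒮 := by
          rw [h𝒮, Finset.mem_filter, Finset.mem_powerset]
          exact ⟨subset_trans (Finset.erase_subset _ _) hT₀T, heq⟩
        have h7 := hmin _ hmem
        rw [Finset.card_erase_of_mem ht₀] at h7
        have h8 : 0 < T₀.card := Finset.card_pos.2 ⟨t₀, ht₀⟩
        omega
      · -- pointedness gives a' = 0
        have h6 : -(a' + b') = ((c t₀ + d t₀) - 1) • v := by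
          rw [hkey, ← neg_smul]
          congr 1
          ring
        have hvT₀ : v ∈ cone W T₀ := umH_mem_cone ht₀
        have hab'T : a' + b' ∈ cone W T := by
          rw [← hT₀c]
          exact cone_mono (Finset.erase_subset _ _) (cone_add ha'c hb'c)
        have hnegT : -(a' + b') ∈ cone W T := by
          rw [h6, ← hT₀c]
          exact cone_smul (by linarith) hvT₀
        have h7 : a' + b' = 0 := hpt _ hab'T hnegT
        have h8 : a' = 0 := by
          refine hpt a' ?_ ?_
          · rw [← hT₀c]
            exact cone_mono (Finset.erase_subset _ _) ha'c
          · have h9 : -a' = b' := neg_eq_of_add_eq_zero_right h7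
            rw [h9, ← hT₀c]
            exact cone_mono (Finset.erase_subset _ _) hb'c
        have h10 : q⁻¹ • a = c t₀ • v := by rw [hsplit_a, h8, add_zero]
        refine ⟨q * c t₀, mul_nonneg (le_of_lt hqpos) (hc t₀ ht₀), ?_⟩
        calc a = q • (q⁻¹ • a) := by
              rw [smul_smul, mul_inv_cancel₀ (ne_of_gt hqpos), one_smul]
          _ = q • (c t₀ • v) := by rw [h10]
          _ = (q * c t₀) • v := by rw [smul_smul]
  -- the new face
  refine ⟨{z : Λ | z ∈ M ∧ ∃ q : ℚ, 0 ≤ q ∧ umH W z = q • v}, ?_, ?_, ?_, ?_⟩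
  · refine ⟨fun z hz => hz.1, ⟨M.zero_mem, 0, le_refl 0, by rw [map_zero, zero_smul]⟩, ?_, ?_⟩
    · rintro z ⟨hz, p, hp, hzp⟩ z' ⟨hz', p', hp', hzp'⟩
      exact ⟨M.add_mem hz hz', p + p', add_nonneg hp hp',
        by rw [map_add, hzp, hzp', add_smul]⟩
    · rintro z hz z' hz' ⟨hzz', p, hp, hpe⟩
      have hcz : umH W z ∈ cone W T := mem_cone_of_mem hT hz
      have hcz' : umH W z' ∈ cone W T := mem_cone_of_mem hT hz'
      have h1 : ∃ q : ℚ, 0 ≤ q ∧ umH W z = q • v :=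
        hext _ _ hcz hcz' ⟨p, hp, by rw [← map_add, hpe]⟩
      have h2 : ∃ q : ℚ, 0 ≤ q ∧ umH W z' = q • v :=
        hext _ _ hcz' hcz ⟨p, hp, by rw [← map_add, add_comm z' z, hpe]⟩
      exact ⟨⟨hz, h1⟩, ⟨hz', h2⟩⟩
  · intro f hf
    refine ⟨hF.1 hf, 0, le_refl 0, ?_⟩
    rw [zero_smul, umH_eq_zero_iff]
    exact subset_span ⟨f, hf, rfl⟩
  · rintro ⟨-, q, hq, hxq⟩
    exact hxray ⟨q, hq, hxq⟩
  · have ht₀M : t₀ ∈ M := by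
      rw [← hT]
      exact AddSubmonoid.subset_closure (hT₀T ht₀)
    have ht₀F' : t₀ ∈ {z : Λ | z ∈ M ∧ ∃ q : ℚ, 0 ≤ q ∧ umH W z = q • v} :=
      ⟨ht₀M, 1, zero_le_one, (one_smul _ _).symm⟩
    rw [setRank_eq, setRank_eq]
    refine Submodule.finrank_lt_finrank_of_lt ?_
    rw [SetLike.lt_iff_le_and_exists]
    refine ⟨span_mono (Set.image_mono (fun f hf => ⟨hF.1 hf, 0, le_refl 0, by
      rw [zero_smul, umH_eq_zero_iff]; exact subset_span ⟨f, hf, rfl⟩⟩)), iot Λ t₀,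
      subset_span ⟨t₀, ht₀F', rfl⟩, ?_⟩
    intro hmem
    exact hv0 ((umH_eq_zero_iff W t₀).2 hmem)

theorem exists_facet (hM : IsToric M) (k : ℕ) (F : Set Λ) (hF : IsFace M F)
    {x : Λ} (hx : x ∈ M) (hxF : x ∉ F) (hrk : monRank M ≤ setRank F + k) :
    ∃ G, IsFacet M G ∧ F ⊆ G ∧ x ∉ G := by
  induction k generalizing F with
  | zero =>
    exfalso
    have hne : F ≠ (M : Set Λ) := fun h => hxF (h ▸ hx)
    have hlt : setRank F < monRank M := by
      by_contra h
      push_neg at h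
      exact hne (full_rank_eq hM hF h)
    omega
  | succ k ih =>
    have hne : F ≠ (M : Set Λ) := fun h => hxF (h ▸ hx)
    have hlt : setRank F < monRank M := by
      by_contra h
      push_neg at h
      exact hne (full_rank_eq hM hF h)
    by_cases hfac : monRank M = setRank F + 1
    · refine ⟨F, ⟨hF, ?_⟩, subset_rfl, hxF⟩
      rw [hfac]
      push_cast
      ring
    · have hrk2 : setRank F + 2 ≤ monRank M := by omega
      obtain ⟨F', hF', hFF', hxF', hrkF'⟩ := step hM hF hx hxF hrk2
      obtain ⟨G, hG, hFG, hxG⟩ := ih F' hF' hxF' (by omega)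
      exact ⟨G, hG, subset_trans hFF' hFG, hxG⟩

end St7

end St7Aux


/-- Let `M` be a sharp toric monoid and `F` a proper face of `M`.
Then `F` is the intersection of all facets of `M` containing `F`. -/
theorem statement7 (M : AddSubmonoid Λ) (hM : IsToric M) (hsharp : IsSharp M)
    (F : Set Λ) (hF : IsFace M F) (hproper : F ≠ (M : Set Λ)) :
    F = ⋂₀ {G : Set Λ | IsFacet M G ∧ F ⊆ G} := by
  refine Set.Subset.antisymm ?_ ?_
  · intro y hy
    exact Set.mem_sInter.2 (fun G hG => hG.2 hy)
  · intro y hy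
    have hss : F ⊂ (M : Set Λ) :=
      ⟨hF.1, fun h => hproper (Set.Subset.antisymm hF.1 h)⟩
    obtain ⟨x₀, hx₀M, hx₀F⟩ := Set.exists_of_ssubset hss
    obtain ⟨G₀, hG₀, hFG₀, -⟩ :=
      St7.exists_facet hM (monRank M) F hF hx₀M hx₀F (by omega)
    have hyM : y ∈ M := hG₀.1.1 (Set.mem_sInter.1 hy G₀ ⟨hG₀, hFG₀⟩)
    by_contra hyF
    obtain ⟨G, hG, hFG, hyG⟩ :=
      St7.exists_facet hM (monRank M) F hF hyM hyF (by omega)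
    exact hyG (Set.mem_sInter.1 hy G ⟨hG, hFG⟩)
end

section
/- Let M be a toric monoid, L a finitely generated free abelian group, and φ : M → L a monoid homomorphism with induced group homomorphism φ^gp : M^gp → L. Then the following are equivalent: (a) there exists v ∈ M with φ(v) = 0 such that v lies in every nonempty prime ideal of M (i.e. v is inner); (b) the image φ(M) (a submonoid of L) is equal to the image subgroup φ^gp(M^gp), as subsets of L. -/
open scoped TensorProduct Pointwise

variable {Λ : Type*} [AddCommGroup Λ]

/-- Lemma `gradinglem`(i). Let `M` be a toric monoid, `L` a finitely
generated free abelian group (a lattice) and `φ : M → L` a monoid homomorphism with induced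
group homomorphism `φ^gp : M^gp → L`.  Since `Λ = M^gp`, the pair `(φ, φ^gp)` is faithfully
encoded by a group homomorphism `ψ : Λ →+ L` restricted to `M`.  Then: there exists an inner
`v ∈ M` (i.e. lying in every nonempty prime ideal) with `φ(v) = 0` if and only if
`φ(M) = φ^gp(M^gp)` as subsets of `L`. -/
theorem statement9 {L : Type*} [AddCommGroup L] [Module.Free ℤ L] [Module.Finite ℤ L]
    (M : AddSubmonoid Λ) (hM : IsToric M) (ψ : Λ →+ L) :
    (∃ v ∈ M, ψ v = 0 ∧ ∀ p : Set Λ, IsPrimeMonIdeal M p → p.Nonempty → v ∈ p) ↔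
    ψ '' (M : Set Λ) = Set.range ψ := by
  classical
  obtain ⟨hFG, hGen, -, -⟩ := hM
  constructor
  · rintro ⟨v, hvM, hψv, hinner⟩
    -- key: every m ∈ M divides a multiple of v
    have key : ∀ m ∈ M, ∃ n : ℕ, ∃ m' ∈ M, m + m' = n • v := by
      by_contra hcon
      push_neg at hcon
      obtain ⟨m, hm, hmf⟩ := hcon
      set p : Set Λ := {x | x ∈ M ∧ ∀ n : ℕ, ∀ m' ∈ M, x + m' ≠ n • v} with hp
      have hprime : IsPrimeMonIdeal M p := by
        refine ⟨⟨fun x hx => hx.1, ?_⟩, ?_, ?_⟩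
        · rintro i ⟨hiM, hi⟩ m'' hm''
          refine ⟨M.add_mem hiM hm'', fun n m' hm' heq => ?_⟩
          exact hi n (m'' + m') (M.add_mem hm'' hm') (by rw [← heq]; abel)
        · intro heq
          have h0 : (0 : Λ) ∈ p := heq ▸ M.zero_mem
          exact h0.2 0 0 M.zero_mem (by simp)
        · intro x hx y hy hxy
          by_contra hne
          push_neg at hne
          obtain ⟨hnx, hny⟩ := hne
          have hx' : ∃ n : ℕ, ∃ m' ∈ M, x + m' = n • v := by
            by_contra h; push_neg at h; exact hnx ⟨hx, h⟩
          have hy' : ∃ n : ℕ, ∃ m' ∈ M, y + m' = n • v := by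
            by_contra h; push_neg at h; exact hny ⟨hy, h⟩
          obtain ⟨n1, a, ha, hae⟩ := hx'
          obtain ⟨n2, b, hb, hbe⟩ := hy'
          exact hxy.2 (n1 + n2) (a + b) (M.add_mem ha hb)
            (by rw [add_smul, ← hae, ← hbe]; abel)
      have hne : p.Nonempty := ⟨m, hm, fun n m' hm' => hmf n m' hm'⟩
      have hvp : v ∈ p := hinner p hprime hne
      exact hvp.2 1 0 M.zero_mem (by simp)
    ext l
    constructor
    · rintro ⟨x, -, rfl⟩; exact ⟨x, rfl⟩
    · rintro ⟨x, rfl⟩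
      have hx : x ∈ AddSubgroup.closure (M : Set Λ) := hGen ▸ AddSubgroup.mem_top x
      induction hx using AddSubgroup.closure_induction with
      | mem y hy => exact ⟨y, hy, rfl⟩
      | zero => exact ⟨0, M.zero_mem, by simp⟩
      | add y z _ _ ihy ihz =>
        obtain ⟨a, ha, hae⟩ := ihy
        obtain ⟨b, hb, hbe⟩ := ihz
        exact ⟨a + b, M.add_mem ha hb, by simp [hae, hbe]⟩
      | neg y _ ihy =>
        obtain ⟨a, ha, hae⟩ := ihy
        obtain ⟨n, m', hm', heq⟩ := key a ha
        refine ⟨m', hm', ?_⟩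
        have := congrArg ψ heq
        simp only [map_add, map_nsmul, hψv, smul_zero] at this
        simp [← hae]
        linear_combination (norm := abel) this
  · intro h
    obtain ⟨S, hS⟩ := hFG
    set w : Λ := ∑ s ∈ S, s with hw
    have hSM : ∀ s ∈ S, s ∈ M := fun s hs =>
      hS ▸ AddSubmonoid.subset_closure hs
    have hwM : w ∈ M := M.sum_mem fun s hs => hSM s hs
    have hw_inner : ∀ p : Set Λ, IsPrimeMonIdeal M p → p.Nonempty → w ∈ p := by
      rintro p ⟨⟨hpsub, hpideal⟩, hpne, hpprime⟩ ⟨i, hi⟩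
      have h0 : (0 : Λ) ∉ p := by
        intro h0
        apply hpne
        refine Set.Subset.antisymm hpsub fun m hm => ?_
        simpa using hpideal 0 h0 m hm
      have hiM : i ∈ AddSubmonoid.closure (S : Set Λ) := hS ▸ hpsub hi
      have hex : ∃ s ∈ S, s ∈ p := by
        revert hi
        induction hiM using AddSubmonoid.closure_induction with
        | mem y hy => exact fun hyp => ⟨y, hy, hyp⟩
        | zero => exact fun h' => absurd h' h0
        | add y z hy hz ihy ihz =>
          intro hyz
          rcases hpprime y (hS ▸ hy) z (hS ▸ hz) hyz with h' | h'
          · exact ihy h'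
          · exact ihz h'
      obtain ⟨s, hsS, hsp⟩ := hex
      have : w = s + ∑ t ∈ S.erase s, t := (Finset.add_sum_erase S id hsS).symm
      rw [this]
      exact hpideal s hsp _ (M.sum_mem fun t ht => hSM t (Finset.mem_of_mem_erase ht))
    have hrange : ψ (-w) ∈ ψ '' (M : Set Λ) := h ▸ ⟨-w, rfl⟩
    obtain ⟨u, huM, hue⟩ := hrange
    refine ⟨w + u, M.add_mem hwM huM, ?_, ?_⟩
    · rw [map_add, hue, map_neg]; abel
    · rintro p hp hpne
      obtain ⟨-, hpideal⟩ := hp.1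
      exact hpideal w (hw_inner p hp hpne) u huM
end

section
/- Let M be a toric monoid, L a finitely generated free abelian group, and φ : M → L a monoid homomorphism with induced group homomorphism φ^gp : M^gp → L. Let M₀ = {m ∈ M : φ(m) = 0}, a submonoid of M, and let M₀^gp denote the subgroup of M^gp it generates. Then M₀^gp = Ker(φ^gp) if and only if rk(M₀) + rk(φ^gp(M^gp)) = rk(M), where rk(M₀) = dim_ℚ(M₀^gp ⊗_ℤ ℚ), rk(M) = dim_ℚ(M^gp ⊗_ℤ ℚ), and rk(φ^gp(M^gp)) = dim_ℚ(φ^gp(M^gp) ⊗_ℤ ℚ). -/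
open scoped TensorProduct Pointwise

variable {Λ : Type*} [AddCommGroup Λ]

instance : Module.Flat ℤ ℚ := IsLocalization.flat ℚ (nonZeroDivisors ℤ)

section Aux

variable {N : Type*} [AddCommGroup N]

lemma span_oneTmul_top :
    Submodule.span ℚ (Set.range fun x : N => (1 : ℚ) ⊗ₜ[ℤ] x) = ⊤ := by
  rw [eq_top_iff]
  rintro v -
  induction v using TensorProduct.induction_on with
  | zero => exact zero_mem _
  | tmul q x =>
      have h : q ⊗ₜ[ℤ] x = q • ((1 : ℚ) ⊗ₜ[ℤ] x) := by
        rw [TensorProduct.smul_tmul', smul_eq_mul, mul_one]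
      rw [h]
      exact Submodule.smul_mem _ _ (Submodule.subset_span ⟨x, rfl⟩)
  | add u v hu hv => exact add_mem hu hv

lemma zsmul_oneTmul (k : ℤ) (z : N) :
    (k : ℚ) • ((1 : ℚ) ⊗ₜ[ℤ] z) = (1 : ℚ) ⊗ₜ[ℤ] (k • z) := by
  rw [Int.cast_smul_eq_zsmul, TensorProduct.tmul_smul]

lemma oneTmul_injective [Module.Free ℤ N] :
    Function.Injective (fun x : N => (1 : ℚ) ⊗ₜ[ℤ] x) := by
  have hj : Function.Injective (Algebra.linearMap ℤ ℚ) := fun a b h => by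
    simpa using h
  have h2 : Function.Injective ((Algebra.linearMap ℤ ℚ).rTensor N) :=
    Module.Flat.rTensor_preserves_injective_linearMap _ hj
  have h3 : (fun x : N => (1 : ℚ) ⊗ₜ[ℤ] x) =
      ((Algebra.linearMap ℤ ℚ).rTensor N) ∘ (TensorProduct.lid ℤ N).symm := by
    funext x
    simp [TensorProduct.lid_symm_apply]
  rw [h3]
  exact h2.comp (TensorProduct.lid ℤ N).symm.injective

lemma exists_nsmul_eq_oneTmul (S : Set N) {v : ℚ ⊗[ℤ] N}
    (hv : v ∈ Submodule.span ℚ ((fun x : N => (1 : ℚ) ⊗ₜ[ℤ] x) '' S)) :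
    ∃ n : ℕ, 0 < n ∧ ∃ z ∈ AddSubgroup.closure S, (n : ℚ) • v = (1 : ℚ) ⊗ₜ[ℤ] z := by
  induction hv using Submodule.span_induction with
  | mem x hx =>
      obtain ⟨a, ha, rfl⟩ := hx
      exact ⟨1, one_pos, a, AddSubgroup.subset_closure ha, by simp⟩
  | zero => exact ⟨1, one_pos, 0, zero_mem _, by simp⟩
  | add x y hx hy ihx ihy =>
      obtain ⟨n, hn, z, hz, he⟩ := ihx
      obtain ⟨m, hm, w, hw, he'⟩ := ihy
      refine ⟨n * m, Nat.mul_pos hn hm, (m : ℤ) • z + (n : ℤ) • w,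
        add_mem (AddSubgroup.zsmul_mem _ hz _) (AddSubgroup.zsmul_mem _ hw _), ?_⟩
      have h : ((n * m : ℕ) : ℚ) • (x + y) =
          ((m : ℤ) : ℚ) • ((n : ℚ) • x) + ((n : ℤ) : ℚ) • ((m : ℚ) • y) := by
        push_cast
        rw [smul_add, smul_smul, smul_smul]
        ring_nf
      rw [h, he, he', zsmul_oneTmul, zsmul_oneTmul, ← TensorProduct.tmul_add]
  | smul q x hx ih =>
      obtain ⟨n, hn, z, hz, he⟩ := ih
      refine ⟨q.den * n, Nat.mul_pos q.pos hn, q.num • z,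
        AddSubgroup.zsmul_mem _ hz _, ?_⟩
      have hq : ((q.den : ℚ)) * q = (q.num : ℚ) := by
        rw [mul_comm, Rat.mul_den_eq_num]
      have h : ((q.den * n : ℕ) : ℚ) • (q • x) = ((q.num : ℤ) : ℚ) • ((n : ℚ) • x) := by
        push_cast
        rw [smul_smul, smul_smul, mul_right_comm, hq]
      rw [h, he, zsmul_oneTmul]

lemma grpRank_eq_finrank_span (A : AddSubgroup N) :
    grpRank A = Module.finrank ℚ
      (Submodule.span ℚ ((fun x : N => (1 : ℚ) ⊗ₜ[ℤ] x) '' (A : Set N))) := by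
  set j : A →ₗ[ℤ] N := A.toIntSubmodule.subtype with hj
  set ι := j.baseChange ℚ with hι
  have hinj : Function.Injective ι := by
    show Function.Injective (j.baseChange ℚ : ℚ ⊗[ℤ] A → ℚ ⊗[ℤ] N)
    rw [LinearMap.baseChange_eq_ltensor]
    exact Module.Flat.lTensor_preserves_injective_linearMap j Subtype.val_injective
  have hrange : LinearMap.range ι =
      Submodule.span ℚ ((fun x : N => (1 : ℚ) ⊗ₜ[ℤ] x) '' (A : Set N)) := by
    rw [← Submodule.map_top, ← span_oneTmul_top, Submodule.map_span]
    congr 1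
    ext y
    constructor
    · rintro ⟨_, ⟨a, rfl⟩, rfl⟩
      exact ⟨a, a.2, by simp [hι, hj, Submodule.subtype_apply]; rfl⟩
    · rintro ⟨x, hx, rfl⟩
      exact ⟨(1 : ℚ) ⊗ₜ[ℤ] (⟨x, hx⟩ : A), ⟨⟨x, hx⟩, rfl⟩,
        by simp [hι, hj, Submodule.subtype_apply]; rfl⟩
  calc grpRank A = Module.finrank ℚ (LinearMap.range ι) :=
        (LinearEquiv.ofInjective ι hinj).finrank_eq
    _ = _ := by rw [hrange]

end Aux

/-- Lemma `gradinglem`(ii). Let `M` be a toric monoid, `L` a finitely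
generated free abelian group and `φ : M → L` a monoid homomorphism with induced group
homomorphism `φ^gp : M^gp → L`; since `Λ = M^gp`, this is encoded by a group homomorphism
`ψ : Λ →+ L`.  Let `M₀ = {m ∈ M : ψ m = 0}`.  Then `M₀^gp = Ker(ψ)` if and only if
`rk(M₀) + rk(Im ψ) = rk(M)`. -/
theorem statement10 {L : Type*} [AddCommGroup L] [Module.Free ℤ L] [Module.Finite ℤ L]
    (M : AddSubmonoid Λ) (hM : IsToric M) (ψ : Λ →+ L) :
    (AddSubgroup.closure {x : Λ | x ∈ M ∧ ψ x = 0} = ψ.ker) ↔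
    setRank {x : Λ | x ∈ M ∧ ψ x = 0} + grpRank ψ.range = monRank M := by
  obtain ⟨hFG, htopΛ, htf, hsat⟩ := hM
  set S₀ : Set Λ := {x : Λ | x ∈ M ∧ ψ x = 0} with hS₀def
  -- instances on Λ
  haveI : AddGroup.FG Λ := by
    obtain ⟨T, hT⟩ := hFG
    refine ⟨⟨T, ?_⟩⟩
    rw [eq_top_iff, ← htopΛ]
    refine (AddSubgroup.closure_le _).mpr ?_
    intro m hm
    have hm' : m ∈ AddSubmonoid.closure (T : Set Λ) := by rw [hT]; exact hm
    exact AddSubmonoid.closure_le.mpr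
      (fun t ht => AddSubgroup.subset_closure ht) hm'
  haveI : Module.Finite ℤ Λ := Module.Finite.iff_addGroup_fg.mpr ‹_›
  haveI : NoZeroSMulDivisors ℤ Λ := by
    refine ⟨fun {c x} h => ?_⟩
    rcases eq_or_ne c 0 with rfl | hc
    · exact Or.inl rfl
    · refine Or.inr (htf x c.natAbs (Int.natAbs_pos.mpr hc) ?_)
      have h0 : (c.natAbs : ℤ) • x = 0 := by
        rcases Int.natAbs_eq c with h' | h'
        · rw [← h']; exact h
        · have : (c.natAbs : ℤ) = -c := by omega
          rw [this, neg_smul, h, neg_zero]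
      rw [← natCast_zsmul]; exact h0
  haveI : Module.Free ℤ Λ := Module.free_of_finite_type_torsion_free'
  set ψQ := (AddMonoidHom.toIntLinearMap ψ).baseChange ℚ with hψQ
  have hψQ_tmul : ∀ x : Λ, ψQ ((1 : ℚ) ⊗ₜ[ℤ] x) = (1 : ℚ) ⊗ₜ[ℤ] ψ x := fun x => by
    simp [hψQ]
  have htop : monRank M = Module.finrank ℚ (ℚ ⊗[ℤ] Λ) := by
    show grpRank (AddSubgroup.closure (M : Set Λ)) = _
    rw [grpRank_eq_finrank_span, htopΛ, AddSubgroup.coe_top, Set.image_univ,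
      span_oneTmul_top, finrank_top]
  have hker : LinearMap.ker ψQ =
      Submodule.span ℚ ((fun x : Λ => (1 : ℚ) ⊗ₜ[ℤ] x) '' (ψ.ker : Set Λ)) := by
    apply le_antisymm
    · intro v hv
      have hv0 : ψQ v = 0 := hv
      have hv' : v ∈ Submodule.span ℚ ((fun x : Λ => (1 : ℚ) ⊗ₜ[ℤ] x) '' Set.univ) := by
        rw [Set.image_univ, span_oneTmul_top]; trivial
      obtain ⟨n, hn, z, hz, he⟩ := exists_nsmul_eq_oneTmul Set.univ hv'
      have hz0 : ψ z = 0 := by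
        have h1 : (1 : ℚ) ⊗ₜ[ℤ] ψ z = (1 : ℚ) ⊗ₜ[ℤ] (0 : L) := by
          rw [TensorProduct.tmul_zero, ← hψQ_tmul, ← he, map_smul, hv0, smul_zero]
        exact oneTmul_injective (N := L) h1
      have hnq : (n : ℚ) ≠ 0 := Nat.cast_ne_zero.mpr hn.ne'
      have hveq : v = (n : ℚ)⁻¹ • ((1 : ℚ) ⊗ₜ[ℤ] z) := by
        rw [← he, smul_smul, inv_mul_cancel₀ hnq, one_smul]
      rw [hveq]
      exact Submodule.smul_mem _ _ (Submodule.subset_span ⟨z, hz0, rfl⟩)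
    · rw [Submodule.span_le]
      rintro _ ⟨x, hx, rfl⟩
      have hx0 : ψ x = 0 := hx
      simp only [SetLike.mem_coe, LinearMap.mem_ker]
      rw [hψQ_tmul, hx0, TensorProduct.tmul_zero]
  have hrange : LinearMap.range ψQ =
      Submodule.span ℚ ((fun y : L => (1 : ℚ) ⊗ₜ[ℤ] y) '' (ψ.range : Set L)) := by
    rw [← Submodule.map_top, ← span_oneTmul_top (N := Λ), Submodule.map_span]
    congr 1
    ext y
    constructor
    · rintro ⟨_, ⟨x, rfl⟩, rfl⟩
      exact ⟨ψ x, ⟨x, rfl⟩, (hψQ_tmul x).symm⟩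
    · rintro ⟨_, ⟨x, rfl⟩, rfl⟩
      exact ⟨(1 : ℚ) ⊗ₜ[ℤ] x, ⟨x, rfl⟩, hψQ_tmul x⟩
  have hF1 : grpRank ψ.ker + grpRank ψ.range = monRank M := by
    rw [grpRank_eq_finrank_span ψ.ker, grpRank_eq_finrank_span ψ.range, ← hker, ← hrange,
      htop, add_comm]
    exact LinearMap.finrank_range_add_finrank_ker ψQ
  have hS₀ker : AddSubgroup.closure S₀ ≤ ψ.ker :=
    (AddSubgroup.closure_le _).mpr (fun x hx => hx.2)
  constructor
  · intro h
    have h1 : setRank S₀ = grpRank ψ.ker := by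
      show grpRank (AddSubgroup.closure S₀) = _
      rw [h]
    rw [h1]
    exact hF1
  · intro h
    have h2 : setRank S₀ = grpRank ψ.ker := Nat.add_right_cancel (h.trans hF1.symm)
    have hP : Submodule.span ℚ
          ((fun x : Λ => (1 : ℚ) ⊗ₜ[ℤ] x) '' ((AddSubgroup.closure S₀ : AddSubgroup Λ) : Set Λ))
        = Submodule.span ℚ ((fun x : Λ => (1 : ℚ) ⊗ₜ[ℤ] x) '' (ψ.ker : Set Λ)) := by
      apply Submodule.eq_of_le_of_finrank_le
        (Submodule.span_mono (Set.image_mono hS₀ker))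
      rw [← grpRank_eq_finrank_span, ← grpRank_eq_finrank_span]
      exact le_of_eq h2.symm
    apply le_antisymm hS₀ker
    intro x hx
    have hfx : (1 : ℚ) ⊗ₜ[ℤ] x ∈ Submodule.span ℚ
        ((fun x : Λ => (1 : ℚ) ⊗ₜ[ℤ] x) ''
          ((AddSubgroup.closure S₀ : AddSubgroup Λ) : Set Λ)) := by
      rw [hP]; exact Submodule.subset_span ⟨x, hx, rfl⟩
    obtain ⟨n, hn, z, hz, he⟩ := exists_nsmul_eq_oneTmul _ hfx
    rw [AddSubgroup.closure_eq] at hz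
    have hzx : (n : ℤ) • x = z := by
      apply oneTmul_injective (N := Λ)
      show (1 : ℚ) ⊗ₜ[ℤ] ((n : ℤ) • x) = (1 : ℚ) ⊗ₜ[ℤ] z
      rw [← zsmul_oneTmul, ← he]
      norm_num
    have haddS₀ : ∀ a ∈ S₀, ∀ b ∈ S₀, a + b ∈ S₀ := by
      intro a ha b hb
      exact ⟨M.add_mem ha.1 hb.1, by rw [map_add, ha.2, hb.2, add_zero]⟩
    have hdecomp : ∀ y ∈ AddSubgroup.closure S₀, ∃ a ∈ S₀, ∃ b ∈ S₀, y = a - b := by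
      intro y hy
      induction hy using AddSubgroup.closure_induction with
      | mem w hw => exact ⟨w, hw, 0, ⟨M.zero_mem, map_zero ψ⟩, (sub_zero w).symm⟩
      | zero => exact ⟨0, ⟨M.zero_mem, map_zero ψ⟩, 0, ⟨M.zero_mem, map_zero ψ⟩, by simp⟩
      | add a b ha hb iha ihb =>
          obtain ⟨p, hp, q, hq, rfl⟩ := iha
          obtain ⟨p', hp', q', hq', rfl⟩ := ihb
          exact ⟨p + p', haddS₀ p hp p' hp', q + q', haddS₀ q hq q' hq', by abel⟩
      | neg a ha iha =>
          obtain ⟨p, hp, q, hq, rfl⟩ := iha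
          exact ⟨q, hq, p, hp, by abel⟩
    obtain ⟨a, ha, b, hb, hzdec⟩ := hdecomp z hz
    obtain ⟨k, rfl⟩ : ∃ k, n = k + 1 := ⟨n - 1, (Nat.succ_pred_eq_of_pos hn).symm⟩
    have hxψ : ψ x = 0 := hx
    have hnx : (k + 1) • x = a - b := by
      rw [← natCast_zsmul, hzx, hzdec]
    have hxb : x + b ∈ M := by
      apply hsat (x + b) (k + 1) (Nat.succ_pos k)
      have hcalc : (k + 1) • (x + b) = a + k • b := by
        rw [smul_add, hnx, succ_nsmul]
        abel
      rw [hcalc]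
      exact M.add_mem ha.1 (nsmul_mem hb.1 k)
    have hxb0 : ψ (x + b) = 0 := by rw [map_add, hxψ, hb.2, add_zero]
    have h1 : x + b ∈ AddSubgroup.closure S₀ := AddSubgroup.subset_closure ⟨hxb, hxb0⟩
    have h2' : b ∈ AddSubgroup.closure S₀ := AddSubgroup.subset_closure hb
    have h3 := sub_mem h1 h2'
    simpa using h3
end

section
/- Let L be an abelian group and let A and B be commutative rings each graded by L (i.e. A = ⊕_{l∈L} A_l and B = ⊕_{l∈L} B_l as additive groups, with A_k·A_l ⊆ A_{k+l} and B_k·B_l ⊆ B_{k+l}, and 1 in degree 0). Let f : A → B be a ring homomorphism with f(A_l) ⊆ B_l for all l, so that B₀ is an A₀-algebra and B an A-algebra via f. Assume that the natural map A ⊗_{A₀} B₀ → B (sending a ⊗ b to f(a)·b) is bijective. Then for every l ∈ L, the ideal of B generated by B_l equals the ideal of B generated by f(A_l). -/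
open scoped TensorProduct

/-- Let `L` be an abelian group and `A`, `B` commutative rings graded by
`L` (encoded by `GradedRing` structures on families of additive subgroups).  Let
`f : A →+* B` be a graded ring homomorphism (`f(A_l) ⊆ B_l`).  If the natural map
`A ⊗_{A₀} B₀ → B`, `a ⊗ b ↦ f(a)·b`, is bijective, then for every `l ∈ L` the ideal of `B`
generated by `B_l` equals the ideal of `B` generated by `f(A_l)`. -/
theorem statement14 {L A B : Type*} [AddCommGroup L] [DecidableEq L]
    [CommRing A] [CommRing B]
    (𝒜 : L → AddSubgroup A) (ℬ : L → AddSubgroup B) [GradedRing 𝒜] [GradedRing ℬ]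
    (f : A →+* B) (hf : ∀ l : L, ∀ a ∈ 𝒜 l, f a ∈ ℬ l) :
    letI : Algebra (SetLike.GradeZero.subring 𝒜) A :=
      ((SetLike.GradeZero.subring 𝒜).subtype).toAlgebra
    letI : Algebra (SetLike.GradeZero.subring 𝒜) B :=
      (f.comp (SetLike.GradeZero.subring 𝒜).subtype).toAlgebra
    letI : Algebra (SetLike.GradeZero.subring 𝒜) (SetLike.GradeZero.subring ℬ) :=
      ((f.comp (SetLike.GradeZero.subring 𝒜).subtype).codRestrict
        (SetLike.GradeZero.subring ℬ) (fun a => hf 0 a a.2)).toAlgebra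
    ∀ _hbij : Function.Bijective
      (Algebra.TensorProduct.productMap
        (⟨f, fun _ => rfl⟩ : A →ₐ[SetLike.GradeZero.subring 𝒜] B)
        (⟨(SetLike.GradeZero.subring ℬ).subtype, fun _ => rfl⟩ :
          (SetLike.GradeZero.subring ℬ) →ₐ[SetLike.GradeZero.subring 𝒜] B)),
    ∀ l : L, Ideal.span ((ℬ l : Set B)) = Ideal.span (f '' (𝒜 l : Set A)) := by
  letI : Algebra (SetLike.GradeZero.subring 𝒜) A :=
    ((SetLike.GradeZero.subring 𝒜).subtype).toAlgebra
  letI : Algebra (SetLike.GradeZero.subring 𝒜) B :=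
    (f.comp (SetLike.GradeZero.subring 𝒜).subtype).toAlgebra
  letI : Algebra (SetLike.GradeZero.subring 𝒜) (SetLike.GradeZero.subring ℬ) :=
    ((f.comp (SetLike.GradeZero.subring 𝒜).subtype).codRestrict
      (SetLike.GradeZero.subring ℬ) (fun a => hf 0 a a.2)).toAlgebra
  classical
  intro hbij l
  apply le_antisymm
  · rw [Ideal.span_le]
    intro b hb
    -- b ∈ ℬ l; write b as image of a tensor
    obtain ⟨x, hx⟩ := hbij.2 b
    have key : ∀ x : A ⊗[SetLike.GradeZero.subring 𝒜] (SetLike.GradeZero.subring ℬ),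
        ((DirectSum.decompose ℬ
          ((Algebra.TensorProduct.productMap
            (⟨f, fun _ => rfl⟩ : A →ₐ[SetLike.GradeZero.subring 𝒜] B)
            (⟨(SetLike.GradeZero.subring ℬ).subtype, fun _ => rfl⟩ :
              (SetLike.GradeZero.subring ℬ) →ₐ[SetLike.GradeZero.subring 𝒜] B)) x)
          l : ℬ l) : B) ∈ Ideal.span (f '' (𝒜 l : Set A)) := by
      intro x
      induction x using TensorProduct.induction_on with
      | zero => simp
      | tmul a b₀ =>
        have hab : (Algebra.TensorProduct.productMap
            (⟨f, fun _ => rfl⟩ : A →ₐ[SetLike.GradeZero.subring 𝒜] B)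
            (⟨(SetLike.GradeZero.subring ℬ).subtype, fun _ => rfl⟩ :
              (SetLike.GradeZero.subring ℬ) →ₐ[SetLike.GradeZero.subring 𝒜] B))
            (a ⊗ₜ b₀) = f a * (b₀ : B) := by
          simp [Algebra.TensorProduct.productMap_apply_tmul]
          rfl
        rw [hab]
        have ha : f a = ∑ k ∈ DFinsupp.support (DirectSum.decompose 𝒜 a),
            f ((DirectSum.decompose 𝒜 a k : 𝒜 k) : A) := by
          conv_lhs => rw [← DirectSum.sum_support_decompose 𝒜 a]
          rw [map_sum]
        rw [ha, Finset.sum_mul, DirectSum.decompose_sum, DFinsupp.finset_sum_apply,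
          AddSubmonoidClass.coe_finset_sum]
        apply Ideal.sum_mem
        intro k hk
        by_cases hkl : k = l
        · subst hkl
          have hmem : f ((DirectSum.decompose 𝒜 a k : 𝒜 k) : A) * (b₀ : B) ∈ ℬ k := by
            have := SetLike.mul_mem_graded (hf k _ (DirectSum.decompose 𝒜 a k).2) b₀.2
            rwa [add_zero] at this
          rw [DirectSum.decompose_of_mem_same ℬ hmem]
          exact Ideal.mul_mem_right _ _ (Ideal.subset_span
            ⟨_, (DirectSum.decompose 𝒜 a k).2, rfl⟩)
        · have hmem : f ((DirectSum.decompose 𝒜 a k : 𝒜 k) : A) * (b₀ : B) ∈ ℬ k := by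
            have := SetLike.mul_mem_graded (hf k _ (DirectSum.decompose 𝒜 a k).2) b₀.2
            rwa [add_zero] at this
          rw [DirectSum.decompose_of_mem_ne ℬ hmem hkl]
          simp
      | add x y ihx ihy =>
        rw [map_add, DirectSum.decompose_add, DirectSum.add_apply, AddSubgroup.coe_add]
        exact Ideal.add_mem _ ihx ihy
    have := key x
    rw [hx, DirectSum.decompose_of_mem_same ℬ hb] at this
    exact this
  · rw [Ideal.span_le]
    rintro _ ⟨a, ha, rfl⟩
    exact Ideal.subset_span (hf l a ha)
end
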